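/- arXiv:math/0310042 — 3 statements merged into one kernel-verified Lean document; each statement's English description precedes it below -/
import Mathlib

section
/- Let a, a* be nonzero scalars in 𝕂 and define 𝕂-linear maps A, A* : V → V by either A = a·y_1^−, A* = a*·y_0^−, or A = a·y_0^+, A* = a*·y_1^+. Assume V has type (1,1), i.e. ε_0 = ε_1 = 1 in its weight space decomposition, and assume there is no subspace W of V with AW ⊆ W, A*W ⊆ W, W ≠ 0, W ≠ V. Then the pair A, A* is a tridiagonal pair on V; its diameter equals the length d of the weight space decomposition of V; the sequence a q^{2i−d} (0 ≤ i ≤ d) is a standard ordering of the eigenvalues of A; and the sequence a* q^{d−2i} (0 ≤ i ≤ d) is a standard ordering of the eigenvalues of A*. -/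
noncomputable section

open Submodule

variable {K : Type*} [Field K]

/-- `[n]_q = (q^n − q^{−n})/(q − q^{−1})`. -/
def qInt (q : K) (n : ℤ) : K := (q ^ n - q ^ (-n)) / (q - q⁻¹)

/-- Elements `y₀⁺, y₁⁺, y₀⁻, y₁⁻, k₀, k₀⁻¹, k₁, k₁⁻¹` of a unital associative `K`-algebra
satisfy the alternate relations. -/
structure AlternateRelations (q : K) {A : Type*} [Ring A] [Algebra K A]
    (yp ym k kinv : Fin 2 → A) : Prop where
  k_kinv : ∀ i, k i * kinv i = 1
  kinv_k : ∀ i, kinv i * k i = 1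
  central_yp : ∀ i, k 0 * k 1 * yp i = yp i * (k 0 * k 1)
  central_ym : ∀ i, k 0 * k 1 * ym i = ym i * (k 0 * k 1)
  central_k : ∀ i, k 0 * k 1 * k i = k i * (k 0 * k 1)
  central_kinv : ∀ i, k 0 * k 1 * kinv i = kinv i * (k 0 * k 1)
  rel_yp_k : ∀ i, (q - q⁻¹)⁻¹ • (q • (yp i * k i) - q⁻¹ • (k i * yp i)) = 1
  rel_k_ym : ∀ i, (q - q⁻¹)⁻¹ • (q • (k i * ym i) - q⁻¹ • (ym i * k i)) = 1
  rel_ym_yp : ∀ i, (q - q⁻¹)⁻¹ • (q • (ym i * yp i) - q⁻¹ • (yp i * ym i)) = 1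
  rel_yp_ym : ∀ i j, i ≠ j →
    (q - q⁻¹)⁻¹ • (q • (yp i * ym j) - q⁻¹ • (ym j * yp i)) = kinv 0 * kinv 1
  serre_p : ∀ i j, i ≠ j →
    yp i ^ 3 * yp j - qInt q 3 • (yp i ^ 2 * yp j * yp i)
      + qInt q 3 • (yp i * yp j * yp i ^ 2) - yp j * yp i ^ 3 = 0
  serre_m : ∀ i j, i ≠ j →
    ym i ^ 3 * ym j - qInt q 3 • (ym i ^ 2 * ym j * ym i)
      + qInt q 3 • (ym i * ym j * ym i ^ 2) - ym j * ym i ^ 3 = 0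

/-- Elements `e₀⁺, e₁⁺, e₀⁻, e₁⁻, K₀, K₀⁻¹, K₁, K₁⁻¹` of a unital associative `K`-algebra
satisfy the Chevalley relations of `U_q(sl₂ hat)`. -/
structure ChevalleyRelations (q : K) {A : Type*} [Ring A] [Algebra K A]
    (ep em Kg Kginv : Fin 2 → A) : Prop where
  K_Kinv : ∀ i, Kg i * Kginv i = 1
  Kinv_K : ∀ i, Kginv i * Kg i = 1
  K_comm : Kg 0 * Kg 1 = Kg 1 * Kg 0
  KepK_same : ∀ i, Kg i * ep i * Kginv i = (q ^ (2 : ℤ)) • ep i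
  KemK_same : ∀ i, Kg i * em i * Kginv i = (q ^ (-2 : ℤ)) • em i
  KepK_diff : ∀ i j, i ≠ j → Kg i * ep j * Kginv i = (q ^ (-2 : ℤ)) • ep j
  KemK_diff : ∀ i j, i ≠ j → Kg i * em j * Kginv i = (q ^ (2 : ℤ)) • em j
  e_comm_same : ∀ i, ep i * em i - em i * ep i = (q - q⁻¹)⁻¹ • (Kg i - Kginv i)
  e_comm_diff : ∀ i j, i ≠ j → ep i * em j = em j * ep i
  serre_p : ∀ i j, i ≠ j →
    ep i ^ 3 * ep j - qInt q 3 • (ep i ^ 2 * ep j * ep i)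
      + qInt q 3 • (ep i * ep j * ep i ^ 2) - ep j * ep i ^ 3 = 0
  serre_m : ∀ i j, i ≠ j →
    em i ^ 3 * em j - qInt q 3 • (em i ^ 2 * em j * em i)
      + qInt q 3 • (em i * em j * em i ^ 2) - em j * em i ^ 3 = 0

variable {V : Type*} [AddCommGroup V] [Module K V]

/-- A decomposition of `V` of length `d`: nonzero subspaces `U 0, …, U d`
(indexed by `ℤ`, with `U i = ⊥` outside `[0, d]`) whose direct sum is `V`. -/
structure IsDecomposition (d : ℕ) (U : ℤ → Submodule K V) : Prop where
  bot_of_lt : ∀ i : ℤ, i < 0 → U i = ⊥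
  bot_of_gt : ∀ i : ℤ, (d : ℤ) < i → U i = ⊥
  ne_bot : ∀ i : ℤ, 0 ≤ i → i ≤ (d : ℤ) → U i ≠ ⊥
  indep : iSupIndep U
  sup_eq_top : ⨆ i, U i = ⊤

/-- `A, A*` is a tridiagonal pair on `V` with standard orderings `Vs 0, …, Vs d` and
`Vs' 0, …, Vs' d` of the eigenspaces of `A` resp. `A*`, with corresponding eigenvalues
`θ i` resp. `θ' i`. -/
structure IsTridiagonalPair (A A' : Module.End K V) (d : ℕ)
    (Vs Vs' : ℤ → Submodule K V) (θ θ' : ℤ → K) : Prop where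
  decompV : IsDecomposition d Vs
  decompV' : IsDecomposition d Vs'
  eig : ∀ i : ℤ, ∀ v ∈ Vs i, A v = θ i • v
  eig' : ∀ i : ℤ, ∀ v ∈ Vs' i, A' v = θ' i • v
  theta_inj : ∀ i j : ℤ, 0 ≤ i → i ≤ (d : ℤ) → 0 ≤ j → j ≤ (d : ℤ) → θ i = θ j → i = j
  theta'_inj : ∀ i j : ℤ, 0 ≤ i → i ≤ (d : ℤ) → 0 ≤ j → j ≤ (d : ℤ) → θ' i = θ' j → i = j
  trid : ∀ i : ℤ, (Vs i).map A' ≤ Vs (i - 1) ⊔ Vs i ⊔ Vs (i + 1)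
  trid' : ∀ i : ℤ, (Vs' i).map A ≤ Vs' (i - 1) ⊔ Vs' i ⊔ Vs' (i + 1)
  irred : ∀ W : Submodule K V, W.map A ≤ W → W.map A' ≤ W → W = ⊥ ∨ W = ⊤

/-- The sum `U m + U (m+1) + ⋯ + U n`. -/
def sumIcc (U : ℤ → Submodule K V) (m n : ℤ) : Submodule K V :=
  ⨆ j ∈ Set.Icc m n, U j

/-- Decomposition `[0D]`: the `i`-th subspace is `V_i`. -/
def dec0D (Vs : ℤ → Submodule K V) : ℤ → Submodule K V := Vs

/-- Decomposition `[0*D*]`: the `i`-th subspace is `V*_i`. -/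
def dec0sDs (Vs' : ℤ → Submodule K V) : ℤ → Submodule K V := Vs'

/-- Decomposition `[0*D]`: the `i`-th subspace is `(V*_0+⋯+V*_i) ∩ (V_i+⋯+V_d)`. -/
def dec0sD (d : ℕ) (Vs Vs' : ℤ → Submodule K V) (i : ℤ) : Submodule K V :=
  sumIcc Vs' 0 i ⊓ sumIcc Vs i (d : ℤ)

/-- Decomposition `[0*0]`: the `i`-th subspace is `(V*_0+⋯+V*_i) ∩ (V_0+⋯+V_{d−i})`. -/
def dec0s0 (d : ℕ) (Vs Vs' : ℤ → Submodule K V) (i : ℤ) : Submodule K V :=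
  sumIcc Vs' 0 i ⊓ sumIcc Vs 0 ((d : ℤ) - i)

/-- Decomposition `[D*0]`: the `i`-th subspace is `(V*_{d−i}+⋯+V*_d) ∩ (V_0+⋯+V_{d−i})`. -/
def decDs0 (d : ℕ) (Vs Vs' : ℤ → Submodule K V) (i : ℤ) : Submodule K V :=
  sumIcc Vs' ((d : ℤ) - i) (d : ℤ) ⊓ sumIcc Vs 0 ((d : ℤ) - i)

/-- Decomposition `[D*D]`: the `i`-th subspace is `(V*_{d−i}+⋯+V*_d) ∩ (V_i+⋯+V_d)`. -/
def decDsD (d : ℕ) (Vs Vs' : ℤ → Submodule K V) (i : ℤ) : Submodule K V :=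
  sumIcc Vs' ((d : ℤ) - i) (d : ℤ) ⊓ sumIcc Vs i (d : ℤ)

/-!
On the weight space `U i` the generators `k₀, k₁` act as `q^{2i-d}, q^{d-2i}`. If `k v = γ⁻¹ v`
and `q k y - q⁻¹ y k = q - q⁻¹`, then `y v - γ v` is an eigenvector of `k` for `(q²γ)⁻¹`. Hence
`A - a q^{2i-d}` maps `U i` into `U (i ± 1)` and `A* - a* q^{d-2i}` maps it into `U (i ∓ 1)`.
An operator `M` with `(M - μ i) U i ⊆ U (i + 1)` and distinct `μ i` is killed by `∏ᵢ (M - μ i)`,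
so it is diagonalizable; and `∏_{j ≠ i} (M - μ j)` acts on `U i` as the nonzero scalar
`∏_{j ≠ i} (μ i - μ j)` modulo `U (i+1) + ⋯ + U d`, so each `μ i` is an eigenvalue. For `A v = θ v`
the `q`-Serre relation says that `(A - q⁻²θ)(A - θ)(A - q²θ)` kills `A* v`: this is tridiagonality.
-/

open Polynomial Module.End

theorem ker_aeval_prod_X_sub_C {ι : Type*} (M : Module.End K V) (s : Finset ι) {c : ι → K}
    (hc : Set.InjOn c s) :
    LinearMap.ker (aeval M (∏ i ∈ s, (X - C (c i)))) = ⨆ i ∈ s, eigenspace M (c i) := by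
  classical
  induction s using Finset.induction_on with
  | empty => simp [Module.End.one_eq_id]
  | insert j s hj ih =>
    have hcop : IsCoprime (X - C (c j)) (∏ i ∈ s, (X - C (c i))) :=
      IsCoprime.prod_right fun i hi => isCoprime_X_sub_C_of_isUnit_sub <|
        (sub_ne_zero.2 fun h => hj <|
          (hc (Finset.mem_insert_self j s) (Finset.mem_insert_of_mem hi) h) ▸ hi).isUnit
    rw [Finset.prod_insert hj, ← sup_ker_aeval_eq_ker_aeval_mul_of_coprime _ hcop,
      ih (hc.mono (by simp)), Finset.iSup_insert, eigenspace_def]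
    simp [Algebra.algebraMap_eq_smul_one]

section Triangular

variable {d : ℕ} {M : Module.End K V} {W : ℤ → Submodule K V} {μ : ℤ → K}

theorem map_sub_smul_iSup_Ici_le (hM : ∀ i, ∀ v ∈ W i, M v - μ i • v ∈ W (i + 1)) (r : ℤ) :
    (⨆ m ∈ Set.Ici r, W m).map (M - μ r • 1) ≤ ⨆ m ∈ Set.Ici (r + 1), W m := by
  simp only [Submodule.map_iSup]
  refine iSup₂_le fun m (hm : r ≤ m) => ?_
  rintro _ ⟨v, hv, rfl⟩
  have hsplit : (M - μ r • 1) v = (M v - μ m • v) + (μ m - μ r) • v := by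
    simp only [LinearMap.sub_apply, LinearMap.smul_apply, Module.End.one_apply, sub_smul]
    abel
  rw [hsplit]
  refine add_mem (le_biSup W (by simpa using hm : m + 1 ∈ Set.Ici (r + 1)) (hM m v hv)) ?_
  rcases hm.eq_or_lt with rfl | hlt
  · simp
  · exact Submodule.smul_mem _ _ (le_biSup W (by simpa using hlt : m ∈ Set.Ici (r + 1)) hv)

theorem iSup_Ici_le_comap (hM : ∀ i, ∀ v ∈ W i, M v - μ i • v ∈ W (i + 1)) (r : ℤ) :
    ⨆ m ∈ Set.Ici r, W m ≤ (⨆ m ∈ Set.Ici r, W m).comap M := by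
  intro v hv
  have hstep := map_sub_smul_iSup_Ici_le hM r (Submodule.mem_map_of_mem hv)
  have hmono : ⨆ m ∈ Set.Ici (r + 1), W m ≤ ⨆ m ∈ Set.Ici r, W m :=
    biSup_mono fun m (hm : r + 1 ≤ m) => (by simp; omega : m ∈ Set.Ici r)
  have hMv : M v = (M - μ r • 1) v + μ r • v := by simp
  rw [Submodule.mem_comap, hMv]
  exact add_mem (hmono hstep) (Submodule.smul_mem _ _ hv)

theorem aeval_apply_sub_eval_smul_mem (hM : ∀ i, ∀ v ∈ W i, M v - μ i • v ∈ W (i + 1))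
    (p : K[X]) {i : ℤ} {v : V} (hv : v ∈ W i) :
    aeval M p v - p.eval (μ i) • v ∈ ⨆ m ∈ Set.Ici (i + 1), W m := by
  obtain ⟨r, hr⟩ := X_sub_C_dvd_sub_C_eval (a := μ i) (p := p)
  have hfactor : aeval M p v - p.eval (μ i) • v = aeval M r (M v - μ i • v) := by
    have := congrArg (fun f : K[X] => aeval M f v) (hr.trans (mul_comm _ _))
    simpa [Algebra.algebraMap_eq_smul_one] using this
  rw [hfactor]
  exact aeval_apply_smul_mem_of_le_comap (le_biSup W Set.self_mem_Ici (hM i v hv)) r M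
    (iSup_Ici_le_comap hM _)

theorem range_aeval_prod_le (hW : IsDecomposition d W)
    (hM : ∀ i, ∀ v ∈ W i, M v - μ i • v ∈ W (i + 1)) (n : ℕ) :
    LinearMap.range (aeval M (∏ j ∈ Finset.range n, (X - C (μ j)))) ≤
      ⨆ m ∈ Set.Ici (n : ℤ), W m := by
  induction n with
  | zero =>
    refine le_top.trans (hW.sup_eq_top ▸ iSup_le fun m => ?_)
    rcases lt_or_ge m 0 with hm | hm
    · simp [hW.bot_of_lt m hm]
    · exact le_biSup W (by simpa using hm)
  | succ n ih =>
    rintro _ ⟨v, rfl⟩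
    have hstep := map_sub_smul_iSup_Ici_le hM n (Submodule.mem_map_of_mem (ih ⟨v, rfl⟩))
    rw [Finset.prod_range_succ, mul_comm, map_mul, Module.End.mul_apply]
    simpa [Algebra.algebraMap_eq_smul_one] using hstep

theorem aeval_prod_eq_zero (hW : IsDecomposition d W)
    (hM : ∀ i, ∀ v ∈ W i, M v - μ i • v ∈ W (i + 1)) :
    aeval M (∏ j ∈ Finset.range (d + 1), (X - C (μ j))) = 0 := by
  have h := range_aeval_prod_le hW hM (d + 1)
  rwa [show ⨆ m ∈ Set.Ici ((d + 1 : ℕ) : ℤ), W m = ⊥ from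
      iSup₂_eq_bot.2 fun m hm => hW.bot_of_gt m (by simp at hm; omega),
    le_bot_iff, LinearMap.range_eq_bot] at h

theorem eigenspace_ne_bot (hW : IsDecomposition d W)
    (hM : ∀ i, ∀ v ∈ W i, M v - μ i • v ∈ W (i + 1)) (hμ : Function.Injective μ)
    {i : ℤ} (h0 : 0 ≤ i) (hd : i ≤ d) : eigenspace M (μ i) ≠ ⊥ := by
  lift i to ℕ using h0
  obtain ⟨v, hv, hv0⟩ := (Submodule.ne_bot_iff _).1 (hW.ne_bot i (by omega) hd)
  have hi : i ∈ Finset.range (d + 1) := Finset.mem_range.2 (by omega)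
  set p := ∏ j ∈ (Finset.range (d + 1)).erase i, (X - C (μ j))
  have hp : p.eval (μ i) ≠ 0 := by
    simp only [p, eval_prod, eval_sub, eval_X, eval_C, Finset.prod_ne_zero_iff, sub_ne_zero]
    exact fun j hj h => Finset.ne_of_mem_erase hj (by exact_mod_cast (hμ h).symm)
  have heig : aeval M p v ∈ eigenspace M (μ i) := by
    rw [eigenspace_def, LinearMap.mem_ker]
    have := congrArg (fun f : K[X] => aeval M f v)
      (Finset.mul_prod_erase _ (fun j : ℕ => X - C (μ j)) hi)
    simpa [aeval_prod_eq_zero hW hM, Algebra.algebraMap_eq_smul_one] using this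
  refine (Submodule.ne_bot_iff _).2 ⟨_, heig, fun h0 => hv0 ?_⟩
  have hmem := aeval_apply_sub_eval_smul_mem hM p hv
  rw [h0, zero_sub, neg_mem_iff] at hmem
  have hdisj := hW.indep.disjoint_biSup (y := Set.Ici ((i : ℤ) + 1)) (x := i) (by simp)
  have hzero := Submodule.disjoint_def.1 hdisj _ (Submodule.smul_mem _ _ hv) hmem
  exact (smul_eq_zero.1 hzero).resolve_left hp

theorem isDecomposition_eigenspace_of_raising (hW : IsDecomposition d W)
    (hM : ∀ i, ∀ v ∈ W i, M v - μ i • v ∈ W (i + 1)) (hμ : Function.Injective μ) :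
    IsDecomposition d fun i => eigenspace M (μ i) := by
  have hindep : iSupIndep fun i => eigenspace M (μ i) := (eigenspaces_iSupIndep M).comp hμ
  have htop : ⨆ j ∈ Finset.range (d + 1), eigenspace M (μ j) = ⊤ := by
    rw [← ker_aeval_prod_X_sub_C M _ (c := fun j : ℕ => μ j) (hμ.comp Nat.cast_injective).injOn,
      aeval_prod_eq_zero hW hM, LinearMap.ker_zero]
  have hout : ∀ i : ℤ, (i < 0 ∨ (d : ℤ) < i) → eigenspace M (μ i) = ⊥ := fun i hi =>
    (hindep.disjoint_biSup (y := Nat.cast '' Finset.range (d + 1)) (by simp; omega)).eq_bot_of_le <|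
      le_top.trans <| htop.symm.trans_le <| iSup₂_le fun j hj =>
        le_biSup (fun i => eigenspace M (μ i)) (Set.mem_image_of_mem _ hj)
  refine ⟨fun i hi => hout i (.inl hi), fun i hi => hout i (.inr hi),
    fun i h0 hd => eigenspace_ne_bot hW hM hμ h0 hd, hindep, eq_top_iff.2 ?_⟩
  exact htop.symm.trans_le (iSup₂_le fun j _ => le_iSup (fun i => eigenspace M (μ i)) (j : ℤ))

theorem IsDecomposition.reverse (hW : IsDecomposition d W) :
    IsDecomposition d fun i => W (d - i) where
  bot_of_lt i hi := hW.bot_of_gt _ (by omega)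
  bot_of_gt i hi := hW.bot_of_lt _ (by omega)
  ne_bot i h0 hd := hW.ne_bot _ (by omega) (by omega)
  indep := hW.indep.comp fun i j h => by simpa using h
  sup_eq_top := by
    rw [← hW.sup_eq_top]
    exact (Equiv.subLeft (d : ℤ)).iSup_congr fun _ => rfl

theorem isDecomposition_eigenspace_of_lowering (hW : IsDecomposition d W)
    (hM : ∀ i, ∀ v ∈ W i, M v - μ i • v ∈ W (i - 1)) (hμ : Function.Injective μ) :
    IsDecomposition d fun i => eigenspace M (μ i) := by
  have h := (isDecomposition_eigenspace_of_raising hW.reverse (μ := fun i => μ (d - i))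
    (fun i v hv => by simpa [sub_add_eq_sub_sub] using hM _ v hv)
    (hμ.comp fun i j h => by simpa using h)).reverse
  simpa using h

theorem IsDecomposition.eq_eigenspace (hW : IsDecomposition d W) (hμ : Function.Injective μ)
    (hM : ∀ i, (W i).map (M - μ i • 1) = ⊥) (i : ℤ) : W i = eigenspace M (μ i) :=
  congrFun (((eigenspaces_iSupIndep M).comp hμ).le_iff_eq_of_iSup_eq_top hW.sup_eq_top |>.1
    fun j => by rw [Function.comp_apply, eigenspace_def]; exact LinearMap.le_ker_iff_map.2 (hM j)) i

theorem IsDecomposition.eigenvalue_inj (hW : IsDecomposition d fun i => eigenspace M (μ i)) :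
    ∀ i j : ℤ, 0 ≤ i → i ≤ d → 0 ≤ j → j ≤ d → μ i = μ j → i = j :=
  fun i j hi0 hid hj0 hjd h =>
    hW.indep.injOn (hW.ne_bot i hi0 hid) (hW.ne_bot j hj0 hjd) (congrArg _ h)

end Triangular

def SerreRelation {A : Type*} [Ring A] [Algebra K A] (c : K) (x y : A) : Prop :=
  x ^ 3 * y - c • (x ^ 2 * y * x) + c • (x * y * x ^ 2) - y * x ^ 3 = 0

theorem SerreRelation.smul {A : Type*} [Ring A] [Algebra K A] {c : K} {x y : A}
    (h : SerreRelation c x y) (a b : K) : SerreRelation c (a • x) (b • y) := by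
  unfold SerreRelation at h ⊢
  linear_combination (norm := skip) (a ^ 3 * b) • h
  simp only [_root_.smul_pow, smul_mul_assoc, mul_smul_comm, smul_smul, smul_sub, smul_add]
  match_scalars <;> ring

section Serre

variable {M M' : Module.End K V}

theorem map_eigenspace_le_of_serre {r θ : K} (hr0 : r ≠ 0) (hr : r ^ 2 ≠ 1) (hθ : θ ≠ 0)
    (hser : SerreRelation (r + 1 + r⁻¹) M M') :
    (eigenspace M θ).map M' ≤
      eigenspace M (r⁻¹ * θ) ⊔ eigenspace M θ ⊔ eigenspace M (r * θ) := by
  classical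
  have hr1 : r ≠ 1 := fun h => hr (by simp [h])
  have h1 : r⁻¹ * θ ≠ θ := fun h => hr1 (by field_simp at h; exact h.symm)
  have h2 : θ ≠ r * θ := fun h => hr1 (by field_simp at h; exact h.symm)
  have h3 : r⁻¹ * θ ≠ r * θ := fun h => hr (by field_simp at h; exact h.symm)
  have hroots : ∏ x ∈ {r⁻¹ * θ, θ, r * θ}, (X - C x) =
      X ^ 3 - C ((r + 1 + r⁻¹) * θ) * X ^ 2 + C ((r + 1 + r⁻¹) * θ ^ 2) * X - C (θ ^ 3) := by
    have hrr : C r * C r⁻¹ = (1 : K[X]) := by rw [← C_mul, mul_inv_cancel₀ hr0, C_1]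
    rw [Finset.prod_insert (by simp [h1, h3]), Finset.prod_insert (by simp [h2]),
      Finset.prod_singleton]
    simp only [C_mul, C_add, C_pow, C_1]
    linear_combination (C θ ^ 2 * X - C θ ^ 3) * hrr
  rintro _ ⟨v, hv, rfl⟩
  replace hv := mem_eigenspace_iff.1 hv
  have hker : M' v ∈ LinearMap.ker (aeval M (∏ x ∈ {r⁻¹ * θ, θ, r * θ}, (X - C x))) := by
    have hserv := LinearMap.congr_fun hser v
    simp only [LinearMap.sub_apply, LinearMap.add_apply, LinearMap.smul_apply,
      Module.End.mul_apply, pow_succ, pow_zero, one_mul, map_smul, hv,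
      LinearMap.zero_apply] at hserv
    rw [LinearMap.mem_ker, hroots]
    simp only [map_sub, map_add, map_mul, aeval_X, aeval_C, LinearMap.sub_apply,
      LinearMap.add_apply, Module.End.mul_apply, pow_succ, pow_zero, one_mul,
      Module.algebraMap_end_apply]
    linear_combination (norm := module) hserv
  rw [ker_aeval_prod_X_sub_C M _ (c := fun x => x) Function.injective_id.injOn] at hker
  rwa [Finset.iSup_insert, Finset.iSup_insert, Finset.iSup_singleton, ← sup_assoc] at hker

theorem map_eigenspace_le_adjacent_of_serre {μ : ℤ → K} {c r : K} (hr0 : r ≠ 0)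
    (hr : r ^ 2 ≠ 1) (hc : c = r + 1 + r⁻¹) (hμ0 : ∀ i, μ i ≠ 0)
    (hμ : ∀ i, μ (i + 1) = r * μ i) (hser : SerreRelation c M M') (i : ℤ) :
    (eigenspace M (μ i)).map M' ≤
      eigenspace M (μ (i - 1)) ⊔ eigenspace M (μ i) ⊔ eigenspace M (μ (i + 1)) := by
  have hprev : μ (i - 1) = r⁻¹ * μ i := by
    rw [← sub_add_cancel i 1, hμ (i - 1), inv_mul_cancel_left₀ hr0, sub_add_cancel]
  rw [hprev, hμ]
  exact map_eigenspace_le_of_serre hr0 hr (hμ0 i) (hc ▸ hser)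

theorem isTridiagonalPair_of_serre {d : ℕ} {θ θ' : ℤ → K} {c r : K}
    (hr0 : r ≠ 0) (hr : r ^ 2 ≠ 1) (hc : c = r + 1 + r⁻¹)
    (hV : IsDecomposition d fun i => eigenspace M (θ i))
    (hV' : IsDecomposition d fun i => eigenspace M' (θ' i))
    (hθ0 : ∀ i, θ i ≠ 0) (hθ'0 : ∀ i, θ' i ≠ 0)
    (hstep : ∀ i, θ (i + 1) = r * θ i) (hstep' : ∀ i, θ' (i + 1) = r⁻¹ * θ' i)
    (hser : SerreRelation c M M') (hser' : SerreRelation c M' M)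
    (hirr : ∀ W : Submodule K V, W.map M ≤ W → W.map M' ≤ W → W = ⊥ ∨ W = ⊤) :
    IsTridiagonalPair M M' d (fun i => eigenspace M (θ i)) (fun i => eigenspace M' (θ' i))
      θ θ' where
  decompV := hV
  decompV' := hV'
  eig i v hv := mem_eigenspace_iff.1 hv
  eig' i v hv := mem_eigenspace_iff.1 hv
  theta_inj := hV.eigenvalue_inj
  theta'_inj := hV'.eigenvalue_inj
  trid := map_eigenspace_le_adjacent_of_serre hr0 hr hc hθ0 hstep hser
  trid' := map_eigenspace_le_adjacent_of_serre (inv_ne_zero hr0) (by rwa [inv_pow, inv_ne_one])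
    (by rw [hc, inv_inv]; ring) hθ'0 hstep' hser'
  irred := hirr

end Serre

section Shift

variable {d : ℕ} {k y : Module.End K V} {p : K} {W : ℤ → Submodule K V} {x : ℤ → K}

theorem sub_smul_mem_eigenspace_inv (hp : p ≠ 0)
    (hrel : p • (k * y) - p⁻¹ • (y * k) = (p - p⁻¹) • 1) {γ : K} (hγ : γ ≠ 0) {v : V}
    (hv : v ∈ eigenspace k γ⁻¹) : y v - γ • v ∈ eigenspace k (p ^ 2 * γ)⁻¹ := by
  rw [mem_eigenspace_iff] at hv ⊢
  have hrelv := LinearMap.congr_fun hrel v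
  simp only [LinearMap.sub_apply, LinearMap.smul_apply, Module.End.mul_apply, hv, map_smul,
    Module.End.one_apply] at hrelv
  rw [map_sub, map_smul, hv]
  linear_combination (norm := skip) p⁻¹ • hrelv
  match_scalars <;> field_simp <;> ring

theorem isDecomposition_eigenspace_smul_of_raising (hp : p ≠ 0)
    (hrel : p • (k * y) - p⁻¹ • (y * k) = (p - p⁻¹) • 1) (hW : IsDecomposition d W)
    (hWx : ∀ i, W i = eigenspace k (x i)⁻¹) (hx : Function.Injective x)
    (hstep : ∀ i, x (i + 1) = p ^ 2 * x i) {a : K} (ha : a ≠ 0) :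
    IsDecomposition d fun i => eigenspace (a • y) (a * x i) := by
  refine isDecomposition_eigenspace_of_raising hW (fun i v hv => ?_)
    ((mul_right_injective₀ ha).comp hx)
  have hx0 : x i ≠ 0 := fun h0 => by
    have := hx ((hstep i).trans (by rw [h0, mul_zero])); omega
  rw [hWx] at hv
  rw [hWx, hstep]
  rw [LinearMap.smul_apply, mul_smul, ← smul_sub]
  exact Submodule.smul_mem _ _ (sub_smul_mem_eigenspace_inv hp hrel hx0 hv)

theorem isDecomposition_eigenspace_smul_of_lowering (hp : p ≠ 0)
    (hrel : p • (k * y) - p⁻¹ • (y * k) = (p - p⁻¹) • 1) (hW : IsDecomposition d W)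
    (hWx : ∀ i, W i = eigenspace k (x i)⁻¹) (hx : Function.Injective x)
    (hstep : ∀ i, x (i + 1) = p⁻¹ ^ 2 * x i) {a : K} (ha : a ≠ 0) :
    IsDecomposition d fun i => eigenspace (a • y) (a * x i) := by
  refine isDecomposition_eigenspace_of_lowering hW (fun i v hv => ?_)
    ((mul_right_injective₀ ha).comp hx)
  have hx0 : x i ≠ 0 := fun h0 => by
    have := hx ((hstep i).trans (by rw [h0, mul_zero])); omega
  have hprev : x (i - 1) = p ^ 2 * x i := by
    have h := hstep (i - 1)
    rw [sub_add_cancel] at h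
    rw [h, ← mul_assoc, ← mul_pow, mul_inv_cancel₀ hp, one_pow, one_mul]
  rw [hWx] at hv
  rw [hWx, hprev]
  rw [LinearMap.smul_apply, mul_smul, ← smul_sub]
  exact Submodule.smul_mem _ _ (sub_smul_mem_eigenspace_inv hp hrel hx0 hv)

end Shift

section Weights

variable {q : K}

theorem zpow_injective_of_pow_ne_one (hq0 : q ≠ 0) (hq : ∀ n : ℕ, 0 < n → q ^ n ≠ 1) :
    Function.Injective fun n : ℤ => q ^ n := by
  intro m n h
  have h1 : q ^ (m - n) = 1 := by
    simp only at h
    rw [zpow_sub₀ hq0, h, div_self (zpow_ne_zero _ hq0)]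
  by_contra hmn
  obtain ⟨k, hk | hk⟩ := Int.eq_nat_or_neg (m - n) <;>
    exact hq k (by omega) (by simpa [hk] using h1)

theorem zpow_two_mul_sub_injective (hq0 : q ≠ 0) (hq : ∀ n : ℕ, 0 < n → q ^ n ≠ 1) (n : ℤ) :
    Function.Injective fun i : ℤ => q ^ (2 * i - n) :=
  (zpow_injective_of_pow_ne_one hq0 hq).comp fun i j h => by omega

theorem zpow_sub_two_mul_injective (hq0 : q ≠ 0) (hq : ∀ n : ℕ, 0 < n → q ^ n ≠ 1) (n : ℤ) :
    Function.Injective fun i : ℤ => q ^ (n - 2 * i) :=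
  (zpow_injective_of_pow_ne_one hq0 hq).comp fun i j h => by omega

theorem zpow_two_mul_add_one_sub (hq0 : q ≠ 0) (n i : ℤ) :
    q ^ (2 * (i + 1) - n) = q ^ 2 * q ^ (2 * i - n) := by
  rw [← zpow_natCast, ← zpow_add₀ hq0]
  ring_nf

theorem zpow_sub_two_mul_add_one (hq0 : q ≠ 0) (n i : ℤ) :
    q ^ (n - 2 * (i + 1)) = q⁻¹ ^ 2 * q ^ (n - 2 * i) := by
  rw [inv_pow, ← zpow_natCast, ← zpow_neg, ← zpow_add₀ hq0]
  ring_nf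

theorem sub_inv_ne_zero_of_pow_ne_one (hq0 : q ≠ 0) (hq : ∀ n : ℕ, 0 < n → q ^ n ≠ 1) :
    q - q⁻¹ ≠ 0 := fun h => hq 2 two_pos (by field_simp at h; linear_combination h)

theorem qInt_three (hq : q - q⁻¹ ≠ 0) : qInt q 3 = q ^ 2 + 1 + (q ^ 2)⁻¹ := by
  have hq0 : q ≠ 0 := by rintro rfl; simp at hq
  rw [qInt, div_eq_iff hq]
  field_simp
  ring

end Weights

namespace AlternateRelations

section Algebra

variable {q : K} {A : Type*} [Ring A] [Algebra K A] {yp ym k kinv : Fin 2 → A}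

theorem k_ym (h : AlternateRelations q yp ym k kinv) (hq : q - q⁻¹ ≠ 0) (i : Fin 2) :
    q • (k i * ym i) - q⁻¹ • (ym i * k i) = (q - q⁻¹) • 1 :=
  (inv_smul_eq_iff₀ hq).1 (h.rel_k_ym i)

theorem k_yp (h : AlternateRelations q yp ym k kinv) (hq : q - q⁻¹ ≠ 0) (i : Fin 2) :
    q⁻¹ • (k i * yp i) - q⁻¹⁻¹ • (yp i * k i) = (q⁻¹ - q⁻¹⁻¹) • 1 := by
  rw [inv_inv]
  linear_combination (norm := module) -(inv_smul_eq_iff₀ hq).1 (h.rel_yp_k i)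

theorem serreRelation_yp (h : AlternateRelations q yp ym k kinv) {i j : Fin 2} (hij : i ≠ j) :
    SerreRelation (qInt q 3) (yp i) (yp j) :=
  h.serre_p i j hij

theorem serreRelation_ym (h : AlternateRelations q yp ym k kinv) {i j : Fin 2} (hij : i ≠ j) :
    SerreRelation (qInt q 3) (ym i) (ym j) :=
  h.serre_m i j hij

end Algebra

variable {q : K} {yp ym kk kkinv : Fin 2 → Module.End K V} {d : ℕ} {U : ℤ → Submodule K V}
  {a a' : K}

theorem isDecomposition_eigenspace_ym (h : AlternateRelations q yp ym kk kkinv) (hq0 : q ≠ 0)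
    (hq : ∀ n : ℕ, 0 < n → q ^ n ≠ 1) (hU : IsDecomposition d U)
    (hk0 : ∀ i : ℤ, (U i).map (kk 0 - q ^ (2 * i - (d : ℤ)) • 1) = ⊥)
    (hk1 : ∀ i : ℤ, (U i).map (kk 1 - q ^ ((d : ℤ) - 2 * i) • 1) = ⊥) (ha : a ≠ 0)
    (ha' : a' ≠ 0) :
    (IsDecomposition d fun i => eigenspace (a • ym 1) (a * q ^ (2 * i - (d : ℤ)))) ∧
      IsDecomposition d fun i => eigenspace (a' • ym 0) (a' * q ^ ((d : ℤ) - 2 * i)) := by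
  have hq1 := sub_inv_ne_zero_of_pow_ne_one hq0 hq
  have hw := zpow_two_mul_sub_injective hq0 hq d
  have hw' := zpow_sub_two_mul_injective hq0 hq d
  exact ⟨isDecomposition_eigenspace_smul_of_raising hq0 (h.k_ym hq1 1) hU
      (fun i => by rw [hU.eq_eigenspace hw' hk1, ← zpow_neg]; ring_nf) hw
      (zpow_two_mul_add_one_sub hq0 d) ha,
    isDecomposition_eigenspace_smul_of_lowering hq0 (h.k_ym hq1 0) hU
      (fun i => by rw [hU.eq_eigenspace hw hk0, ← zpow_neg]; ring_nf) hw'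
      (zpow_sub_two_mul_add_one hq0 d) ha'⟩

theorem isDecomposition_eigenspace_yp (h : AlternateRelations q yp ym kk kkinv) (hq0 : q ≠ 0)
    (hq : ∀ n : ℕ, 0 < n → q ^ n ≠ 1) (hU : IsDecomposition d U)
    (hk0 : ∀ i : ℤ, (U i).map (kk 0 - q ^ (2 * i - (d : ℤ)) • 1) = ⊥)
    (hk1 : ∀ i : ℤ, (U i).map (kk 1 - q ^ ((d : ℤ) - 2 * i) • 1) = ⊥) (ha : a ≠ 0)
    (ha' : a' ≠ 0) :
    (IsDecomposition d fun i => eigenspace (a • yp 0) (a * q ^ (2 * i - (d : ℤ)))) ∧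
      IsDecomposition d fun i => eigenspace (a' • yp 1) (a' * q ^ ((d : ℤ) - 2 * i)) := by
  have hq1 := sub_inv_ne_zero_of_pow_ne_one hq0 hq
  have hw := zpow_two_mul_sub_injective hq0 hq d
  have hw' := zpow_sub_two_mul_injective hq0 hq d
  exact ⟨isDecomposition_eigenspace_smul_of_lowering (inv_ne_zero hq0) (h.k_yp hq1 0) hU.reverse
      (fun i => by rw [hU.eq_eigenspace hw hk0, ← zpow_neg]; ring_nf) hw
      (by simpa using zpow_two_mul_add_one_sub hq0 d) ha,
    isDecomposition_eigenspace_smul_of_raising (inv_ne_zero hq0) (h.k_yp hq1 1) hU.reverse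
      (fun i => by rw [hU.eq_eigenspace hw' hk1, ← zpow_neg]; ring_nf) hw'
      (zpow_sub_two_mul_add_one hq0 d) ha'⟩

end AlternateRelations

theorem stmt16_general {K : Type*} [Field K]
    {V : Type*} [AddCommGroup V] [Module K V]
    (q : K) (hq0 : q ≠ 0) (hq : ∀ n : ℕ, 0 < n → q ^ n ≠ 1)
    (yp ym kk kkinv : Fin 2 → Module.End K V)
    (h : AlternateRelations q yp ym kk kkinv)
    (d : ℕ) (U : ℤ → Submodule K V) (hU : IsDecomposition d U)
    (hk0 : ∀ i : ℤ, Submodule.map (kk 0 - q ^ (2 * i - (d : ℤ)) • 1) (U i) = ⊥)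
    (hk1 : ∀ i : ℤ, Submodule.map (kk 1 - q ^ ((d : ℤ) - 2 * i) • 1) (U i) = ⊥)
    (a a' : K) (ha : a ≠ 0) (ha' : a' ≠ 0)
    (A A' : Module.End K V)
    (hAA' : (A = a • ym 1 ∧ A' = a' • ym 0) ∨ (A = a • yp 0 ∧ A' = a' • yp 1))
    (hirrAA' : ∀ W : Submodule K V, Submodule.map A W ≤ W → Submodule.map A' W ≤ W →
      W = ⊥ ∨ W = ⊤) :
    ∃ Vs Vs' : ℤ → Submodule K V,
      IsTridiagonalPair A A' d Vs Vs'
        (fun i => a * q ^ (2 * i - (d : ℤ))) (fun i => a' * q ^ ((d : ℤ) - 2 * i)) := by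
  obtain ⟨⟨hV, hV'⟩, hser, hser'⟩ :
      ((IsDecomposition d fun i => eigenspace A (a * q ^ (2 * i - (d : ℤ)))) ∧
        IsDecomposition d fun i => eigenspace A' (a' * q ^ ((d : ℤ) - 2 * i))) ∧
      SerreRelation (qInt q 3) A A' ∧ SerreRelation (qInt q 3) A' A := by
    rcases hAA' with ⟨rfl, rfl⟩ | ⟨rfl, rfl⟩
    · exact ⟨h.isDecomposition_eigenspace_ym hq0 hq hU hk0 hk1 ha ha',
        (h.serreRelation_ym (by decide)).smul a a', (h.serreRelation_ym (by decide)).smul a' a⟩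
    · exact ⟨h.isDecomposition_eigenspace_yp hq0 hq hU hk0 hk1 ha ha',
        (h.serreRelation_yp (by decide)).smul a a', (h.serreRelation_yp (by decide)).smul a' a⟩
  refine ⟨_, _, isTridiagonalPair_of_serre (pow_ne_zero 2 hq0)
    (by rw [← pow_mul]; exact hq 4 four_pos) (qInt_three (sub_inv_ne_zero_of_pow_ne_one hq0 hq))
    hV hV' (fun i => mul_ne_zero ha (zpow_ne_zero _ hq0))
    (fun i => mul_ne_zero ha' (zpow_ne_zero _ hq0)) (fun i => ?_) (fun i => ?_) hser hser' hirrAA'⟩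
  · rw [zpow_two_mul_add_one_sub hq0]; ring
  · rw [zpow_sub_two_mul_add_one hq0, inv_pow]; ring

/-- on a finite dimensional irreducible `U_q(sl₂ hat)`-module of type `(1,1)`,
the pair `A = a y₁⁻, A* = a* y₀⁻` (or `A = a y₀⁺, A* = a* y₁⁺`), if irreducible as a pair,
acts as a tridiagonal pair of diameter `d` with standard eigenvalue orderings
`a q^{2i−d}` and `a* q^{d−2i}`. -/
theorem stmt16 {K : Type*} [Field K] [IsAlgClosed K]
    {V : Type*} [AddCommGroup V] [Module K V] [FiniteDimensional K V] [Nontrivial V]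
    (q : K) (hq0 : q ≠ 0) (hq : ∀ n : ℕ, 0 < n → q ^ n ≠ 1)
    (yp ym kk kkinv : Fin 2 → Module.End K V)
    (h : AlternateRelations q yp ym kk kkinv)
    (hirr : ∀ W : Submodule K V,
      (∀ i, Submodule.map (yp i) W ≤ W) → (∀ i, Submodule.map (ym i) W ≤ W) →
      (∀ i, Submodule.map (kk i) W ≤ W) → (∀ i, Submodule.map (kkinv i) W ≤ W) →
      W = ⊥ ∨ W = ⊤)
    (d : ℕ) (U : ℤ → Submodule K V) (hU : IsDecomposition d U)
    (hk0 : ∀ i : ℤ, Submodule.map (kk 0 - q ^ (2 * i - (d : ℤ)) • 1) (U i) = ⊥)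
    (hk1 : ∀ i : ℤ, Submodule.map (kk 1 - q ^ ((d : ℤ) - 2 * i) • 1) (U i) = ⊥)
    (a a' : K) (ha : a ≠ 0) (ha' : a' ≠ 0)
    (A A' : Module.End K V)
    (hAA' : (A = a • ym 1 ∧ A' = a' • ym 0) ∨ (A = a • yp 0 ∧ A' = a' • yp 1))
    (hirrAA' : ∀ W : Submodule K V, Submodule.map A W ≤ W → Submodule.map A' W ≤ W →
      W = ⊥ ∨ W = ⊤) :
    ∃ Vs Vs' : ℤ → Submodule K V,
      IsTridiagonalPair A A' d Vs Vs'
        (fun i => a * q ^ (2 * i - (d : ℤ))) (fun i => a' * q ^ ((d : ℤ) - 2 * i)) :=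
  stmt16_general q hq0 hq yp ym kk kkinv h d U hU hk0 hk1 a a' ha ha' A A' hAA' hirrAA'
end
end

section
/- Suppose y_0^+, y_1^+, y_0^−, y_1^−, k_0, k_0^{−1}, k_1, k_1^{−1} are 𝕂-linear maps V → V satisfying the alternate relations in End(V), and suppose a·y_1^− = A and a*·y_0^− = A*. Then necessarily k_0 = K, k_1 = K^{−1}, k_0^{−1} = K^{−1}, k_1^{−1} = K, b·y_1^+ = B, and b*·y_0^+ = B*. (Hence there is a unique U_q(ŝl_2)-module structure on V in which a y_1^− acts as A and a* y_0^− acts as A*.) -/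
noncomputable section

open Submodule

variable {K : Type*} [Field K]

variable {V : Type*} [AddCommGroup V] [Module K V]

section Aux

open Polynomial

variable {K : Type*} [Field K] {V : Type*} [AddCommGroup V] [Module K V]

lemma sumIcc_le_of {U : ℤ → Submodule K V} {m n : ℤ} {T : Submodule K V}
    (h : ∀ i : ℤ, m ≤ i → i ≤ n → U i ≤ T) : sumIcc U m n ≤ T :=
  iSup₂_le fun i hi => h i (Set.mem_Icc.1 hi).1 (Set.mem_Icc.1 hi).2

lemma le_sumIcc (U : ℤ → Submodule K V) {m n i : ℤ} (h1 : m ≤ i) (h2 : i ≤ n) :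
    U i ≤ sumIcc U m n := le_biSup U (Set.mem_Icc.2 ⟨h1, h2⟩)

lemma map_sumIcc_le {U : ℤ → Submodule K V} {m n : ℤ} {T : Submodule K V}
    (f : Module.End K V) (h : ∀ i : ℤ, m ≤ i → i ≤ n → Submodule.map f (U i) ≤ T) :
    Submodule.map f (sumIcc U m n) ≤ T :=
  Submodule.map_le_iff_le_comap.2 <| sumIcc_le_of fun i h1 h2 =>
    Submodule.map_le_iff_le_comap.1 (h i h1 h2)

lemma sumIcc_eq_bot {U : ℤ → Submodule K V} {m n : ℤ} (h : n < m) : sumIcc U m n = ⊥ :=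
  le_bot_iff.1 <| sumIcc_le_of fun i h1 h2 => absurd (h1.trans h2) (not_le.2 h)

lemma sumIcc_mono {U : ℤ → Submodule K V} {m n m' n' : ℤ} (h1 : m' ≤ m) (h2 : n ≤ n') :
    sumIcc U m n ≤ sumIcc U m' n' :=
  sumIcc_le_of fun i hm hn => le_sumIcc U (h1.trans hm) (hn.trans h2)

namespace IsDecomposition

variable {d : ℕ} {U : ℤ → Submodule K V}

lemma piece_le (hU : IsDecomposition d U) {m n : ℤ} (i : ℤ)
    (h : 0 ≤ i → i ≤ (d : ℤ) → m ≤ i ∧ i ≤ n) : U i ≤ sumIcc U m n := by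
  by_cases h0 : 0 ≤ i
  · by_cases hd : i ≤ (d : ℤ)
    · exact le_sumIcc U (h h0 hd).1 (h h0 hd).2
    · rw [hU.bot_of_gt i (lt_of_not_ge hd)]; exact bot_le
  · rw [hU.bot_of_lt i (lt_of_not_ge h0)]; exact bot_le

lemma sumIcc_full (hU : IsDecomposition d U) : sumIcc U 0 (d : ℤ) = ⊤ := by
  rw [← hU.sup_eq_top]
  exact le_antisymm (sumIcc_le_of fun i _ _ => le_iSup U i)
    (iSup_le fun i => hU.piece_le i fun h1 h2 => ⟨h1, h2⟩)

lemma sumIcc_singleton (hU : IsDecomposition d U) (i : ℤ) : sumIcc U i i = U i :=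
  le_antisymm (sumIcc_le_of fun j hj hj' => by rw [le_antisymm hj' hj])
    (le_sumIcc U le_rfl le_rfl)

end IsDecomposition

lemma aeval_eig {f : Module.End K V} {μ : K} {x : V} (hx : f x = μ • x) (p : K[X]) :
    (Polynomial.aeval f p) x = p.eval μ • x := by
  induction p using Polynomial.induction_on' with
  | add p r hp hr => simp [map_add, LinearMap.add_apply, hp, hr, add_smul]
  | monomial n c =>
      have hpow : ∀ k : ℕ, (f ^ k) x = μ ^ k • x := by
        intro k; induction k with
        | zero => simp
        | succ k ih =>
            rw [pow_succ, pow_succ, Module.End.mul_apply, hx, map_smul, ih, smul_smul,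
              mul_comm]
      simp [aeval_monomial, Module.End.mul_apply, Module.algebraMap_end_apply, hpow,
        eval_monomial, smul_smul, mul_comm]

lemma map_aeval_le {U : ℤ → Submodule K V} {θ : ℤ → K} {f : Module.End K V}
    (heig : ∀ i : ℤ, ∀ v ∈ U i, f v = θ i • v) (p : K[X]) (i : ℤ) :
    Submodule.map (Polynomial.aeval f p) (U i) ≤ U i := by
  rintro _ ⟨v, hv, rfl⟩
  rw [aeval_eig (heig i v hv) p]
  exact Submodule.smul_mem _ _ hv

/-- The key eigenvector-membership lemma: if `f w = μ • w + x` with `x ∈ U j` and `j'` is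
the only possible index in `[0,d]` whose eigenvalue is `μ`, then `w ∈ U j' ⊔ U j`. -/
lemma eig_shift {d : ℕ} {U : ℤ → Submodule K V} {θ : ℤ → K} {f : Module.End K V}
    (hU : IsDecomposition d U)
    (heig : ∀ i : ℤ, ∀ v ∈ U i, f v = θ i • v)
    {w x : V} {μ : K} {j j' : ℤ}
    (hw : f w = μ • w + x) (hx : x ∈ U j)
    (hj' : ∀ m : ℤ, 0 ≤ m → m ≤ (d : ℤ) → θ m = μ → m = j') :
    w ∈ U j' ⊔ U j := by
  classical
  set s : Finset ℤ := ((Finset.Icc (0 : ℤ) (d : ℤ)).erase j').erase j with hs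
  set P : K[X] := ∏ m ∈ s, (X - C (θ m)) with hP
  have hceval : ∀ ν : K, P.eval ν = ∏ m ∈ s, (ν - θ m) := by
    intro ν; simp [hP, eval_prod]
  have hc : P.eval μ ≠ 0 := by
    rw [hceval]
    refine Finset.prod_ne_zero_iff.2 fun m hm => ?_
    have hm1 := Finset.mem_erase.1 hm
    have hm2 := Finset.mem_erase.1 hm1.2
    have hmI := Finset.mem_Icc.1 hm2.2
    intro h0
    exact hm2.1 (hj' m hmI.1 hmI.2 (sub_eq_zero.1 h0).symm)
  obtain ⟨R, hR⟩ := Polynomial.X_sub_C_dvd_sub_C_eval (a := μ) (p := P)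
  have h1 : P = C (P.eval μ) + R * (X - C μ) := by
    rw [mul_comm, ← hR]; ring
  have hx2 : f w - μ • w = x := by rw [hw]; abel
  have hPw : (Polynomial.aeval f P) w = P.eval μ • w + (Polynomial.aeval f R) x := by
    conv_lhs => rw [h1]
    simp only [map_add, map_mul, LinearMap.add_apply, Module.End.mul_apply, aeval_C,
      Module.algebraMap_end_apply, map_sub, aeval_X, LinearMap.sub_apply]
    rw [← map_sub, hx2]
  have hmem : (Polynomial.aeval f P) w ∈ U j' ⊔ U j := by
    have hw_top : w ∈ (⊤ : Submodule K V) := Submodule.mem_top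
    rw [← hU.sup_eq_top] at hw_top
    have hmap : Submodule.map (Polynomial.aeval f P) (⨆ i, U i) ≤ U j' ⊔ U j := by
      rw [Submodule.map_iSup]
      refine iSup_le fun i => ?_
      by_cases hij' : i = j'
      · exact hij' ▸ (map_aeval_le heig P i).trans (hij' ▸ le_sup_left)
      · by_cases hij : i = j
        · exact hij ▸ (map_aeval_le heig P i).trans (hij ▸ le_sup_right)
        · by_cases hiI : i ∈ Finset.Icc (0 : ℤ) (d : ℤ)
          · have his : i ∈ s := by
              rw [hs]; exact Finset.mem_erase.2 ⟨hij, Finset.mem_erase.2 ⟨hij', hiI⟩⟩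
            rintro _ ⟨v, hv, rfl⟩
            rw [aeval_eig (heig i v hv) P, hceval,
              Finset.prod_eq_zero his (by ring : θ i - θ i = 0), zero_smul]
            exact Submodule.zero_mem _
          · rw [Finset.mem_Icc, not_and_or, not_le, not_le] at hiI
            rcases hiI with hiI | hiI
            · rw [hU.bot_of_lt i hiI, Submodule.map_bot]; exact bot_le
            · rw [hU.bot_of_gt i hiI, Submodule.map_bot]; exact bot_le
    exact hmap ⟨w, hw_top, rfl⟩
  have haR : (Polynomial.aeval f R) x ∈ U j' ⊔ U j :=
    le_sup_right (α := Submodule K V) (map_aeval_le heig R j ⟨x, hx, rfl⟩)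
  have hsm : P.eval μ • w ∈ U j' ⊔ U j := by
    have := Submodule.sub_mem _ hmem haR
    rwa [hPw, add_sub_cancel_right] at this
  have := Submodule.smul_mem (U j' ⊔ U j) (P.eval μ)⁻¹ hsm
  rwa [smul_smul, inv_mul_cancel₀ hc, one_smul] at this

lemma eig_vanish {U : ℤ → Submodule K V} {θ : ℤ → K} {f : Module.End K V}
    (heig : ∀ i : ℤ, ∀ v ∈ U i, f v = θ i • v)
    {w : V} {μ : K} {m n : ℤ}
    (hw : f w = μ • w) (hmem : w ∈ sumIcc U m n)
    (hne : ∀ i : ℤ, m ≤ i → i ≤ n → θ i ≠ μ) : w = 0 := by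
  classical
  set P : K[X] := ∏ i ∈ Finset.Icc m n, (X - C (θ i)) with hP
  have hceval : ∀ ν : K, P.eval ν = ∏ i ∈ Finset.Icc m n, (ν - θ i) := by
    intro ν; simp [hP, eval_prod]
  have h1 : (Polynomial.aeval f P) w = P.eval μ • w := aeval_eig hw P
  have h2 : (Polynomial.aeval f P) w = 0 := by
    have hmap : Submodule.map (Polynomial.aeval f P) (sumIcc U m n) ≤ ⊥ := by
      refine map_sumIcc_le _ fun i hi1 hi2 => ?_
      rintro _ ⟨v, hv, rfl⟩
      rw [aeval_eig (heig i v hv) P, hceval,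
        Finset.prod_eq_zero (Finset.mem_Icc.2 ⟨hi1, hi2⟩) (by ring : θ i - θ i = 0),
        zero_smul]
      exact Submodule.zero_mem _
    simpa using hmap ⟨w, hmem, rfl⟩
  have hc : P.eval μ ≠ 0 := by
    rw [hceval]
    refine Finset.prod_ne_zero_iff.2 fun i hi => ?_
    have hiI := Finset.mem_Icc.1 hi
    exact fun h0 => hne i hiI.1 hiI.2 (sub_eq_zero.1 h0).symm
  rw [h1] at h2
  exact (smul_eq_zero.1 h2).resolve_left hc

lemma map_inf_le {f : Module.End K V} {p q : Submodule K V} :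
    Submodule.map f (p ⊓ q) ≤ Submodule.map f p ⊓ Submodule.map f q :=
  le_inf (Submodule.map_mono inf_le_left) (Submodule.map_mono inf_le_right)

lemma map_sub_smul_one_le {f : Module.End K V} {c : K} {p T : Submodule K V}
    (h1 : Submodule.map f p ≤ T) (h2 : p ≤ T) :
    Submodule.map (f - c • (1 : Module.End K V)) p ≤ T := by
  rintro _ ⟨v, hv, rfl⟩
  have he : (f - c • (1 : Module.End K V)) v = f v - c • v := by
    simp [LinearMap.sub_apply]
  rw [he]
  exact T.sub_mem (h1 ⟨v, hv, rfl⟩) (T.smul_mem _ (h2 hv))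

lemma map_iSup_le_iSup {C : ℤ → Submodule K V} {f : Module.End K V}
    (h : ∀ i : ℤ, ∃ c : K, ∃ j : ℤ,
      Submodule.map (f - c • (1 : Module.End K V)) (C i) ≤ C j) :
    Submodule.map f (⨆ i, C i) ≤ ⨆ i, C i := by
  rw [Submodule.map_iSup]
  refine iSup_le fun i => ?_
  obtain ⟨c, j, hj⟩ := h i
  rintro _ ⟨v, hv, rfl⟩
  have he : f v = (f - c • (1 : Module.End K V)) v + c • v := by
    simp [LinearMap.sub_apply]
  rw [he]
  exact Submodule.add_mem _ (le_iSup C j (hj ⟨v, hv, rfl⟩))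
    (le_iSup C i (Submodule.smul_mem _ _ hv))

lemma ext_of_iSup_eq_top {C : ℤ → Submodule K V} (hC : (⨆ i, C i) = ⊤)
    {X Y : Module.End K V} (h : ∀ i : ℤ, ∀ v ∈ C i, X v = Y v) : X = Y := by
  ext v
  have hv : v ∈ ⨆ i, C i := hC ▸ Submodule.mem_top
  have hle : (⨆ i, C i) ≤ LinearMap.eqLocus X Y :=
    iSup_le fun i w hw => LinearMap.mem_eqLocus.2 (h i w hw)
  exact hle hv

lemma map_pres_of_inv [FiniteDimensional K V] {f g : Module.End K V} (hfg : g * f = 1)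
    {p : Submodule K V} (h : Submodule.map f p ≤ p) : Submodule.map g p ≤ p := by
  have hgf : ∀ u : V, g (f u) = u := fun u => by
    have : (g * f) u = (1 : Module.End K V) u := by rw [hfg]
    simpa [Module.End.mul_apply] using this
  have hinj : Function.Injective f := fun u v huv => by
    rw [← hgf u, ← hgf v, huv]
  have heq : Submodule.map f p = p := by
    apply Submodule.eq_of_le_of_finrank_le h
    exact le_of_eq (LinearEquiv.finrank_eq (Submodule.equivMapOfInjective f hinj p))
  rintro _ ⟨v, hv, rfl⟩
  rw [← heq] at hv
  obtain ⟨u, hu, rfl⟩ := hv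
  rw [hgf u]
  exact hu

/-- Verification of a `q`-commutation relation `q•(X*f) − q⁻¹•(f*X) = s•1` for an operator `X`
acting by scalars `x i` on the pieces of a spanning family, against an operator `f` which is
"scalar `μ i` plus shift by `ε`" on the family. -/
lemma scalar_shift_rel₁ {C : ℤ → Submodule K V} (hC : (⨆ i, C i) = ⊤)
    {X f : Module.End K V} {x μ : ℤ → K} {q s : K} {ε : ℤ}
    (hX : ∀ i : ℤ, ∀ v ∈ C i, X v = x i • v)
    (hf : ∀ i : ℤ, ∀ v ∈ C i, f v - μ i • v ∈ C (i + ε))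
    (hcoef : ∀ i : ℤ, q * (x i * μ i) - q⁻¹ * (x i * μ i) = s)
    (hcoef2 : ∀ i : ℤ, q * x (i + ε) = q⁻¹ * x i) :
    q • (X * f) - q⁻¹ • (f * X) = s • (1 : Module.End K V) := by
  refine ext_of_iSup_eq_top hC fun i v hv => ?_
  have hwm := hf i v hv
  set w' : V := f v - μ i • v with hw'
  have hfv : f v = μ i • v + w' := by rw [hw']; abel
  have h1 : X (f v) = (x i * μ i) • v + x (i + ε) • w' := by
    rw [hfv, map_add, map_smul, hX i v hv, hX (i + ε) _ hwm, smul_smul, mul_comm (μ i)]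
  have h2 : f (X v) = (x i * μ i) • v + x i • w' := by
    rw [hX i v hv, map_smul, hfv, smul_add, smul_smul]
  have : (q • (X * f) - q⁻¹ • (f * X)) v
      = (q * (x i * μ i) - q⁻¹ * (x i * μ i)) • v
        + (q * x (i + ε) - q⁻¹ * x i) • w' := by
    simp only [LinearMap.sub_apply, LinearMap.smul_apply, Module.End.mul_apply, h1, h2]
    module
  rw [this, hcoef i, sub_eq_zero.2 (hcoef2 i), zero_smul, add_zero]
  simp

/-- Same, with the operator order swapped: `q•(f*X) − q⁻¹•(X*f) = s•1`. -/
lemma scalar_shift_rel₂ {C : ℤ → Submodule K V} (hC : (⨆ i, C i) = ⊤)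
    {X f : Module.End K V} {x μ : ℤ → K} {q s : K} {ε : ℤ}
    (hX : ∀ i : ℤ, ∀ v ∈ C i, X v = x i • v)
    (hf : ∀ i : ℤ, ∀ v ∈ C i, f v - μ i • v ∈ C (i + ε))
    (hcoef : ∀ i : ℤ, q * (x i * μ i) - q⁻¹ * (x i * μ i) = s)
    (hcoef2 : ∀ i : ℤ, q * x i = q⁻¹ * x (i + ε)) :
    q • (f * X) - q⁻¹ • (X * f) = s • (1 : Module.End K V) := by
  refine ext_of_iSup_eq_top hC fun i v hv => ?_
  have hwm := hf i v hv
  set w' : V := f v - μ i • v with hw'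
  have hfv : f v = μ i • v + w' := by rw [hw']; abel
  have h1 : X (f v) = (x i * μ i) • v + x (i + ε) • w' := by
    rw [hfv, map_add, map_smul, hX i v hv, hX (i + ε) _ hwm, smul_smul, mul_comm (μ i)]
  have h2 : f (X v) = (x i * μ i) • v + x i • w' := by
    rw [hX i v hv, map_smul, hfv, smul_add, smul_smul]
  have : (q • (f * X) - q⁻¹ • (X * f)) v
      = (q * (x i * μ i) - q⁻¹ * (x i * μ i)) • v
        + (q * x i - q⁻¹ * x (i + ε)) • w' := by
    simp only [LinearMap.sub_apply, LinearMap.smul_apply, Module.End.mul_apply, h1, h2]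
    module
  rw [this, hcoef i, sub_eq_zero.2 (hcoef2 i), zero_smul, add_zero]
  simp

lemma map_kill_le {d : ℕ} {U : ℤ → Submodule K V} {θf : ℤ → K} {f : Module.End K V}
    (hU : IsDecomposition d U) (heig : ∀ i : ℤ, ∀ v ∈ U i, f v = θf i • v)
    {m n : ℤ} (k : ℤ) {m' n' : ℤ}
    (hcond : ∀ i : ℤ, 0 ≤ i → i ≤ (d : ℤ) → m ≤ i → i ≤ n → i ≠ k → m' ≤ i ∧ i ≤ n') :
    Submodule.map (f - θf k • (1 : Module.End K V)) (sumIcc U m n) ≤ sumIcc U m' n' := by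
  refine map_sumIcc_le _ fun i h1 h2 => ?_
  rintro _ ⟨v, hv, rfl⟩
  have he : (f - θf k • (1 : Module.End K V)) v = (θf i - θf k) • v := by
    simp [LinearMap.sub_apply, heig i v hv, sub_smul]
  rw [he]
  by_cases hik : i = k
  · rw [hik, sub_self, zero_smul]; exact Submodule.zero_mem _
  · exact Submodule.smul_mem _ _ (hU.piece_le i (fun ha hb => hcond i ha hb h1 h2 hik) hv)

lemma map_trid_le {d : ℕ} {U : ℤ → Submodule K V} {f : Module.End K V}
    (hU : IsDecomposition d U)
    (htrid : ∀ i : ℤ, (U i).map f ≤ U (i - 1) ⊔ U i ⊔ U (i + 1))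
    {m n m' n' : ℤ}
    (hcond : ∀ i j : ℤ, 0 ≤ j → j ≤ (d : ℤ) → m ≤ i → i ≤ n → i - 1 ≤ j → j ≤ i + 1 →
      m' ≤ j ∧ j ≤ n') :
    Submodule.map f (sumIcc U m n) ≤ sumIcc U m' n' := by
  refine map_sumIcc_le _ fun i h1 h2 => (htrid i).trans ?_
  refine sup_le (sup_le ?_ ?_) ?_
  · exact hU.piece_le _ fun ha hb => hcond i _ ha hb h1 h2 (by omega) (by omega)
  · exact hU.piece_le _ fun ha hb => hcond i _ ha hb h1 h2 (by omega) (by omega)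
  · exact hU.piece_le _ fun ha hb => hcond i _ ha hb h1 h2 (by omega) (by omega)

/-- From a relation `q•(X*f) − q⁻¹•(f*X) = s•1`, the operator `X` moves the `m`-th
eigenspace of `f` into the sum of the `m+ε`-th and `m`-th ones. -/
lemma tri_of_rel {d : ℕ} {U : ℤ → Submodule K V} {θf : ℤ → K} {f X : Module.End K V}
    {q s : K} (hq0 : q ≠ 0)
    (hU : IsDecomposition d U) (heig : ∀ i : ℤ, ∀ v ∈ U i, f v = θf i • v)
    (hrel : q • (X * f) - q⁻¹ • (f * X) = s • (1 : Module.End K V))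
    {ε : ℤ} (hεmatch : ∀ m m0 : ℤ, 0 ≤ m → m ≤ (d : ℤ) → 0 ≤ m0 → m0 ≤ (d : ℤ) →
      θf m0 = q * (q * θf m) → m0 = m + ε) :
    ∀ m : ℤ, ∀ v ∈ U m, X v ∈ U (m + ε) ⊔ U m := by
  intro m v hv
  by_cases hr : 0 ≤ m ∧ m ≤ (d : ℤ)
  · have hEq : q • (X (f v)) - q⁻¹ • (f (X v)) = s • v := by
      have := congrArg (fun (Z : Module.End K V) => Z v) hrel
      simpa [LinearMap.sub_apply, LinearMap.smul_apply, Module.End.mul_apply,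
        Module.End.one_apply] using this
    rw [heig m v hv, map_smul] at hEq
    have h6 : q⁻¹ • (f (X v)) = (q * θf m) • X v - s • v := by
      rw [← hEq, smul_smul]; abel
    have h7 : f (X v) = (q * (q * θf m)) • X v + (-(q * s)) • v := by
      have h6' := congrArg (fun z : V => q • z) h6
      simp only [smul_smul, mul_inv_cancel₀ hq0, one_smul, smul_sub] at h6'
      rw [h6']; module
    exact eig_shift hU heig h7 (Submodule.smul_mem _ _ hv)
      (fun m0 h3 h4 h5 => hεmatch m m0 hr.1 hr.2 h3 h4 h5)
  · have hbot : U m = ⊥ := by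
      rcases not_and_or.1 hr with h' | h'
      · exact hU.bot_of_lt m (by omega)
      · exact hU.bot_of_gt m (by omega)
    have hv0 : v = 0 := by simpa [hbot] using hv
    rw [hv0, map_zero]; exact Submodule.zero_mem _

/-- From `q•(X*f) − q⁻¹•(f*X) = 0`, the operator `X` strictly shifts eigenspaces of `f`. -/
lemma strict_shift_of_rel {d : ℕ} {U : ℤ → Submodule K V} {θf : ℤ → K} {f X : Module.End K V}
    {q : K} (hq0 : q ≠ 0)
    (hU : IsDecomposition d U) (heig : ∀ i : ℤ, ∀ v ∈ U i, f v = θf i • v)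
    (hrel : q • (X * f) - q⁻¹ • (f * X) = 0)
    {ε : ℤ} (hεmatch : ∀ m m0 : ℤ, 0 ≤ m → m ≤ (d : ℤ) → 0 ≤ m0 → m0 ≤ (d : ℤ) →
      θf m0 = q * (q * θf m) → m0 = m + ε) :
    ∀ m : ℤ, ∀ v ∈ U m, X v ∈ U (m + ε) := by
  intro m v hv
  by_cases hr : 0 ≤ m ∧ m ≤ (d : ℤ)
  · have hEq : q • (X (f v)) - q⁻¹ • (f (X v)) = 0 := by
      have := congrArg (fun (Z : Module.End K V) => Z v) hrel
      simpa [LinearMap.sub_apply, LinearMap.smul_apply, Module.End.mul_apply] using this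
    rw [heig m v hv, map_smul] at hEq
    have h6 : q⁻¹ • (f (X v)) = (q * θf m) • X v := by
      rw [← sub_eq_zero.1 hEq, smul_smul]
    have h7 : f (X v) = (q * (q * θf m)) • X v + (0 : V) := by
      have h6' := congrArg (fun z : V => q • z) h6
      simp only [smul_smul, mul_inv_cancel₀ hq0, one_smul] at h6'
      rw [h6', add_zero]
    have := eig_shift hU heig h7 (Submodule.zero_mem (U (m + ε)))
      (fun m0 h3 h4 h5 => hεmatch m m0 hr.1 hr.2 h3 h4 h5)
    simpa [sup_idem] using this
  · have hbot : U m = ⊥ := by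
      rcases not_and_or.1 hr with h' | h'
      · exact hU.bot_of_lt m (by omega)
      · exact hU.bot_of_gt m (by omega)
    have hv0 : v = 0 := by simpa [hbot] using hv
    rw [hv0, map_zero]; exact Submodule.zero_mem _

/-- From `q•(f*X) − q⁻¹•(X*f) = 0`, the operator `X` strictly shifts eigenspaces of `f`
(the other direction). -/
lemma strict_shift_of_rel' {d : ℕ} {U : ℤ → Submodule K V} {θf : ℤ → K} {f X : Module.End K V}
    {q : K} (hq0 : q ≠ 0)
    (hU : IsDecomposition d U) (heig : ∀ i : ℤ, ∀ v ∈ U i, f v = θf i • v)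
    (hrel : q • (f * X) - q⁻¹ • (X * f) = 0)
    {ε : ℤ} (hεmatch : ∀ m m0 : ℤ, 0 ≤ m → m ≤ (d : ℤ) → 0 ≤ m0 → m0 ≤ (d : ℤ) →
      θf m0 = q⁻¹ * (q⁻¹ * θf m) → m0 = m + ε) :
    ∀ m : ℤ, ∀ v ∈ U m, X v ∈ U (m + ε) := by
  intro m v hv
  have hqi : q⁻¹ ≠ 0 := inv_ne_zero hq0
  by_cases hr : 0 ≤ m ∧ m ≤ (d : ℤ)
  · have hEq : q • (f (X v)) - q⁻¹ • (X (f v)) = 0 := by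
      have := congrArg (fun (Z : Module.End K V) => Z v) hrel
      simpa [LinearMap.sub_apply, LinearMap.smul_apply, Module.End.mul_apply] using this
    rw [heig m v hv, map_smul] at hEq
    have h6 : q • (f (X v)) = (q⁻¹ * θf m) • X v := by
      rw [sub_eq_zero.1 hEq, smul_smul]
    have h7 : f (X v) = (q⁻¹ * (q⁻¹ * θf m)) • X v + (0 : V) := by
      have h6' := congrArg (fun z : V => q⁻¹ • z) h6
      simp only [smul_smul, inv_mul_cancel₀ hq0, one_smul] at h6'
      rw [h6', add_zero]
    have := eig_shift hU heig h7 (Submodule.zero_mem (U (m + ε)))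
      (fun m0 h3 h4 h5 => hεmatch m m0 hr.1 hr.2 h3 h4 h5)
    simpa [sup_idem] using this
  · have hbot : U m = ⊥ := by
      rcases not_and_or.1 hr with h' | h'
      · exact hU.bot_of_lt m (by omega)
      · exact hU.bot_of_gt m (by omega)
    have hv0 : v = 0 := by simpa [hbot] using hv
    rw [hv0, map_zero]; exact Submodule.zero_mem _

end Aux

/-- uniqueness of the module structure in which `a y₁⁻` acts as `A`
and `a* y₀⁻` acts as `A*`: necessarily `k₀ = K, k₁ = K⁻¹, k₀⁻¹ = K⁻¹, k₁⁻¹ = K`,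
`b y₁⁺ = B` and `b* y₀⁺ = B*`. -/
theorem stmt17 {K : Type*} [Field K] [IsAlgClosed K]
    {V : Type*} [AddCommGroup V] [Module K V] [FiniteDimensional K V] [Nontrivial V]
    (q : K) (hq0 : q ≠ 0) (hq : ∀ n : ℕ, 0 < n → q ^ n ≠ 1)
    (A A' : Module.End K V) (d : ℕ) (Vs Vs' : ℤ → Submodule K V) (θ θ' : ℤ → K)
    (hTD : IsTridiagonalPair A A' d Vs Vs' θ θ')
    (a a' : K) (ha : a ≠ 0) (ha' : a' ≠ 0)
    (hθ : ∀ i : ℤ, 0 ≤ i → i ≤ (d : ℤ) → θ i = a * q ^ (2 * i - (d : ℤ)))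
    (hθ' : ∀ i : ℤ, 0 ≤ i → i ≤ (d : ℤ) → θ' i = a' * q ^ ((d : ℤ) - 2 * i))
    (b b' : K) (hb : b ≠ 0) (hb' : b' ≠ 0)
    (B : Module.End K V)
    (hB : ∀ i : ℤ, 0 ≤ i → i ≤ (d : ℤ) → ∀ v ∈ dec0s0 d Vs Vs' i,
      B v = (b * q ^ (2 * i - (d : ℤ))) • v)
    (B' : Module.End K V)
    (hB' : ∀ i : ℤ, 0 ≤ i → i ≤ (d : ℤ) → ∀ v ∈ decDsD d Vs Vs' i,
      B' v = (b' * q ^ ((d : ℤ) - 2 * i)) • v)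
    (Kop : Module.End K V)
    (hKop : ∀ i : ℤ, 0 ≤ i → i ≤ (d : ℤ) → ∀ v ∈ dec0sD d Vs Vs' i,
      Kop v = (q ^ (2 * i - (d : ℤ))) • v)
    (Kinv : Module.End K V)
    (hKinv1 : Kop * Kinv = 1) (hKinv2 : Kinv * Kop = 1)
    (yp ym kk kkinv : Fin 2 → Module.End K V)
    (h : AlternateRelations q yp ym kk kkinv)
    (hA : a • ym 1 = A) (hA' : a' • ym 0 = A') :
    kk 0 = Kop ∧ kk 1 = Kinv ∧ kkinv 0 = Kinv ∧ kkinv 1 = Kop ∧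
    b • yp 1 = B ∧ b' • yp 0 = B' := by
  classical
  obtain ⟨decV, decV', eigA, eigA', θinj, θ'inj, trid, trid', irred⟩ := hTD
  -- scalar preliminaries
  have hq2 : q - q⁻¹ ≠ 0 := by
    refine sub_ne_zero.2 fun hqe => hq 2 (by norm_num) ?_
    rw [pow_two]
    nth_rewrite 2 [hqe]
    exact mul_inv_cancel₀ hq0
  have hz : ∀ n : ℤ, q ^ n ≠ 0 := fun n => zpow_ne_zero n hq0
  have hzone : ∀ k : ℤ, q ^ k = 1 → k = 0 := by
    intro k hk
    by_contra hk0
    have habs : ∀ m : ℤ, 0 < m → q ^ m = 1 → False := by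
      intro m hm hm1
      refine hq m.toNat (by omega) ?_
      rw [← zpow_natCast, Int.toNat_of_nonneg hm.le]
      exact hm1
    rcases lt_trichotomy k 0 with hlt | heq | hgt
    · exact habs (-k) (by omega) (by rw [zpow_neg, hk, inv_one])
    · exact hk0 heq
    · exact habs k hgt hk
  have qinj : ∀ m n : ℤ, q ^ m = q ^ n → m = n := by
    intro m n hmn
    have h1 : q ^ (m - n) = 1 := by rw [zpow_sub₀ hq0, hmn, div_self (hz n)]
    have := hzone _ h1
    omega
  have qq1 : ∀ m n : ℤ, m + n = 0 → q ^ m * q ^ n = 1 := by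
    intro m n hmn
    rw [← zpow_add₀ hq0, hmn, zpow_zero]
  have hpq : ∀ m : ℤ, q * q ^ m = q ^ (m + 1) := by
    intro m
    rw [← zpow_one_add₀ hq0]
    congr 1
    omega
  have hpqi : ∀ m : ℤ, q⁻¹ * q ^ m = q ^ (m - 1) := by
    intro m
    rw [← zpow_neg_one, ← zpow_add₀ hq0]
    congr 1
    omega
  have hmatchA : ∀ e e' : ℤ, a * q ^ e = a * q ^ e' → e = e' := fun e e' hee =>
    qinj _ _ (mul_left_cancel₀ ha hee)
  have hmatchA' : ∀ e e' : ℤ, a' * q ^ e = a' * q ^ e' → e = e' := fun e e' hee =>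
    qinj _ _ (mul_left_cancel₀ ha' hee)
  -- component filtration lemmas
  have cGA : ∀ (n : ℤ) (c : K),
      Submodule.map (A - c • (1 : Module.End K V)) (sumIcc Vs' 0 n) ≤ sumIcc Vs' 0 (n + 1) := by
    intro n c
    refine map_sub_smul_one_le ?_ (sumIcc_mono le_rfl (by omega))
    exact map_trid_le decV' trid' fun i j h1 h2 h3 h4 h5 h6 => ⟨by omega, by omega⟩
  have cGA' : ∀ n : ℤ,
      Submodule.map (A' - θ' n • (1 : Module.End K V)) (sumIcc Vs' 0 n)
        ≤ sumIcc Vs' 0 (n - 1) :=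
    fun n => map_kill_le decV' eigA' n fun i h1 h2 h3 h4 h5 => ⟨by omega, by omega⟩
  have cFA : ∀ n : ℤ,
      Submodule.map (A - θ n • (1 : Module.End K V)) (sumIcc Vs n (d : ℤ))
        ≤ sumIcc Vs (n + 1) (d : ℤ) :=
    fun n => map_kill_le decV eigA n fun i h1 h2 h3 h4 h5 => ⟨by omega, by omega⟩
  have cFA' : ∀ (n : ℤ) (c : K),
      Submodule.map (A' - c • (1 : Module.End K V)) (sumIcc Vs n (d : ℤ))
        ≤ sumIcc Vs (n - 1) (d : ℤ) := by
    intro n c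
    refine map_sub_smul_one_le ?_ (sumIcc_mono (by omega) le_rfl)
    exact map_trid_le decV trid fun i j h1 h2 h3 h4 h5 h6 => ⟨by omega, by omega⟩
  have cFbA : ∀ n : ℤ,
      Submodule.map (A - θ n • (1 : Module.End K V)) (sumIcc Vs 0 n) ≤ sumIcc Vs 0 (n - 1) :=
    fun n => map_kill_le decV eigA n fun i h1 h2 h3 h4 h5 => ⟨by omega, by omega⟩
  have cFbA' : ∀ (n : ℤ) (c : K),
      Submodule.map (A' - c • (1 : Module.End K V)) (sumIcc Vs 0 n) ≤ sumIcc Vs 0 (n + 1) := by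
    intro n c
    refine map_sub_smul_one_le ?_ (sumIcc_mono le_rfl (by omega))
    exact map_trid_le decV trid fun i j h1 h2 h3 h4 h5 h6 => ⟨by omega, by omega⟩
  have cHA : ∀ (n : ℤ) (c : K),
      Submodule.map (A - c • (1 : Module.End K V)) (sumIcc Vs' n (d : ℤ))
        ≤ sumIcc Vs' (n - 1) (d : ℤ) := by
    intro n c
    refine map_sub_smul_one_le ?_ (sumIcc_mono (by omega) le_rfl)
    exact map_trid_le decV' trid' fun i j h1 h2 h3 h4 h5 h6 => ⟨by omega, by omega⟩
  have cHA' : ∀ n : ℤ,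
      Submodule.map (A' - θ' n • (1 : Module.End K V)) (sumIcc Vs' n (d : ℤ))
        ≤ sumIcc Vs' (n + 1) (d : ℤ) :=
    fun n => map_kill_le decV' eigA' n fun i h1 h2 h3 h4 h5 => ⟨by omega, by omega⟩
  -- family shape lemmas
  have sUA : ∀ i : ℤ, Submodule.map (A - θ i • (1 : Module.End K V)) (dec0sD d Vs Vs' i)
      ≤ dec0sD d Vs Vs' (i + 1) := by
    intro i
    simp only [dec0sD]
    exact map_inf_le.trans (inf_le_inf ((cGA i _).trans (sumIcc_mono (by omega) (by omega)))
      ((cFA i).trans (sumIcc_mono (by omega) (by omega))))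
  have sUA' : ∀ i : ℤ, Submodule.map (A' - θ' i • (1 : Module.End K V)) (dec0sD d Vs Vs' i)
      ≤ dec0sD d Vs Vs' (i - 1) := by
    intro i
    simp only [dec0sD]
    exact map_inf_le.trans (inf_le_inf ((cGA' i).trans (sumIcc_mono (by omega) (by omega)))
      ((cFA' i _).trans (sumIcc_mono (by omega) (by omega))))
  have sZA : ∀ i : ℤ,
      Submodule.map (A - θ ((d : ℤ) - i) • (1 : Module.End K V)) (dec0s0 d Vs Vs' i)
      ≤ dec0s0 d Vs Vs' (i + 1) := by
    intro i
    simp only [dec0s0]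
    exact map_inf_le.trans (inf_le_inf ((cGA i _).trans (sumIcc_mono (by omega) (by omega)))
      ((cFbA ((d : ℤ) - i)).trans (sumIcc_mono (by omega) (by omega))))
  have sZA' : ∀ i : ℤ, Submodule.map (A' - θ' i • (1 : Module.End K V)) (dec0s0 d Vs Vs' i)
      ≤ dec0s0 d Vs Vs' (i - 1) := by
    intro i
    simp only [dec0s0]
    exact map_inf_le.trans (inf_le_inf ((cGA' i).trans (sumIcc_mono (by omega) (by omega)))
      ((cFbA' ((d : ℤ) - i) _).trans (sumIcc_mono (by omega) (by omega))))
  have sYA : ∀ i : ℤ, Submodule.map (A - θ i • (1 : Module.End K V)) (decDsD d Vs Vs' i)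
      ≤ decDsD d Vs Vs' (i + 1) := by
    intro i
    simp only [decDsD]
    exact map_inf_le.trans
      (inf_le_inf ((cHA ((d : ℤ) - i) _).trans (sumIcc_mono (by omega) (by omega)))
      ((cFA i).trans (sumIcc_mono (by omega) (by omega))))
  have sYA' : ∀ i : ℤ,
      Submodule.map (A' - θ' ((d : ℤ) - i) • (1 : Module.End K V)) (decDsD d Vs Vs' i)
      ≤ decDsD d Vs Vs' (i - 1) := by
    intro i
    simp only [decDsD]
    exact map_inf_le.trans
      (inf_le_inf ((cHA' ((d : ℤ) - i)).trans (sumIcc_mono (by omega) (by omega)))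
      ((cFA' i _).trans (sumIcc_mono (by omega) (by omega))))
  -- bottom pieces
  have hbotU : ∀ i : ℤ, i < 0 ∨ (d : ℤ) < i → dec0sD d Vs Vs' i = ⊥ := by
    intro i hi
    simp only [dec0sD]
    rcases hi with hi | hi
    · rw [sumIcc_eq_bot (show i < 0 from hi), bot_inf_eq]
    · rw [sumIcc_eq_bot (show (d : ℤ) < i from hi), inf_bot_eq]
  have hbotZ : ∀ i : ℤ, i < 0 ∨ (d : ℤ) < i → dec0s0 d Vs Vs' i = ⊥ := by
    intro i hi
    simp only [dec0s0]
    rcases hi with hi | hi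
    · rw [sumIcc_eq_bot (show i < 0 from hi), bot_inf_eq]
    · rw [sumIcc_eq_bot (show (d : ℤ) - i < 0 from by omega), inf_bot_eq]
  have hbotY : ∀ i : ℤ, i < 0 ∨ (d : ℤ) < i → decDsD d Vs Vs' i = ⊥ := by
    intro i hi
    simp only [decDsD]
    rcases hi with hi | hi
    · rw [sumIcc_eq_bot (show (d : ℤ) < (d : ℤ) - i from by omega), bot_inf_eq]
    · rw [sumIcc_eq_bot (show (d : ℤ) < i from hi), inf_bot_eq]
  have hd0 : (0 : ℤ) ≤ (d : ℤ) := Int.natCast_nonneg d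
  -- spanning
  have hUtop : (⨆ i : ℤ, dec0sD d Vs Vs' i) = ⊤ := by
    rcases irred _ (map_iSup_le_iSup fun i => ⟨θ i, i + 1, sUA i⟩)
      (map_iSup_le_iSup fun i => ⟨θ' i, i - 1, sUA' i⟩) with hbot | htop
    · exfalso
      have h0 : Vs' 0 ≤ dec0sD d Vs Vs' 0 := by
        simp only [dec0sD]
        refine le_inf (le_sumIcc _ le_rfl le_rfl) ?_
        rw [decV.sumIcc_full]
        exact le_top
      exact decV'.ne_bot 0 le_rfl hd0
        (le_bot_iff.1 (h0.trans ((le_iSup _ 0).trans hbot.le)))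
    · exact htop
  have hZtop : (⨆ i : ℤ, dec0s0 d Vs Vs' i) = ⊤ := by
    rcases irred _ (map_iSup_le_iSup fun i => ⟨θ ((d : ℤ) - i), i + 1, sZA i⟩)
      (map_iSup_le_iSup fun i => ⟨θ' i, i - 1, sZA' i⟩) with hbot | htop
    · exfalso
      have h0 : Vs' 0 ≤ dec0s0 d Vs Vs' 0 := by
        simp only [dec0s0]
        refine le_inf (le_sumIcc _ le_rfl le_rfl) ?_
        rw [show (d : ℤ) - 0 = (d : ℤ) from by ring, decV.sumIcc_full]
        exact le_top
      exact decV'.ne_bot 0 le_rfl hd0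
        (le_bot_iff.1 (h0.trans ((le_iSup _ 0).trans hbot.le)))
    · exact htop
  have hYtop : (⨆ i : ℤ, decDsD d Vs Vs' i) = ⊤ := by
    rcases irred _ (map_iSup_le_iSup fun i => ⟨θ i, i + 1, sYA i⟩)
      (map_iSup_le_iSup fun i => ⟨θ' ((d : ℤ) - i), i - 1, sYA' i⟩) with hbot | htop
    · exfalso
      have h0 : Vs' (d : ℤ) ≤ decDsD d Vs Vs' 0 := by
        simp only [decDsD]
        refine le_inf (le_sumIcc _ (by omega) le_rfl) ?_
        rw [decV.sumIcc_full]
        exact le_top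
      exact decV'.ne_bot (d : ℤ) hd0 le_rfl
        (le_bot_iff.1 (h0.trans ((le_iSup _ 0).trans hbot.le)))
    · exact htop
  -- eigenvector contradiction helpers
  have hVs'd : ∀ x : V, x ∈ Vs' (d : ℤ) → x ∈ sumIcc Vs' 0 ((d : ℤ) - 1) → x = 0 := by
    intro x hx hmem
    refine eig_vanish eigA' (eigA' (d : ℤ) x hx) hmem fun i h1 h2 heq => ?_
    have := θ'inj i (d : ℤ) h1 (by omega) hd0 le_rfl heq
    omega
  have hVs'0 : ∀ x : V, x ∈ Vs' 0 → x ∈ sumIcc Vs' 1 (d : ℤ) → x = 0 := by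
    intro x hx hmem
    refine eig_vanish eigA' (eigA' 0 x hx) hmem fun i h1 h2 heq => ?_
    have := θ'inj i 0 (by omega) (by omega) le_rfl hd0 heq
    omega
  -- the three vanishing families
  have hWbot : ∀ i : ℤ, sumIcc Vs' 0 (i - 1) ⊓ sumIcc Vs i (d : ℤ) = ⊥ := by
    rcases irred (⨆ i : ℤ, sumIcc Vs' 0 (i - 1) ⊓ sumIcc Vs i (d : ℤ))
      (map_iSup_le_iSup fun i => ⟨θ i, i + 1,
        map_inf_le.trans
          (inf_le_inf ((cGA (i - 1) _).trans (sumIcc_mono (by omega) (by omega)))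
          ((cFA i).trans (sumIcc_mono (by omega) (by omega))))⟩)
      (map_iSup_le_iSup fun i => ⟨θ' (i - 1), i - 1,
        map_inf_le.trans
          (inf_le_inf ((cGA' (i - 1)).trans (sumIcc_mono (by omega) (by omega)))
          ((cFA' i _).trans (sumIcc_mono (by omega) (by omega))))⟩) with hbot | htop
    · intro i
      exact le_bot_iff.1 ((le_iSup _ i).trans hbot.le)
    · exfalso
      have hle : (⨆ i : ℤ, sumIcc Vs' 0 (i - 1) ⊓ sumIcc Vs i (d : ℤ))
          ≤ sumIcc Vs' 0 ((d : ℤ) - 1) := by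
        refine iSup_le fun i => ?_
        by_cases hi : i ≤ (d : ℤ)
        · exact inf_le_left.trans (sumIcc_mono le_rfl (by omega))
        · exact le_trans (le_trans inf_le_right (le_of_eq (sumIcc_eq_bot (by omega)))) bot_le
      refine decV'.ne_bot (d : ℤ) hd0 le_rfl (Submodule.eq_bot_iff _ |>.2 fun x hx => ?_)
      exact hVs'd x hx (hle (htop ▸ Submodule.mem_top))
  have hW'bot : ∀ i : ℤ, sumIcc Vs' 0 (i - 1) ⊓ sumIcc Vs 0 ((d : ℤ) - i) = ⊥ := by
    rcases irred (⨆ i : ℤ, sumIcc Vs' 0 (i - 1) ⊓ sumIcc Vs 0 ((d : ℤ) - i))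
      (map_iSup_le_iSup fun i => ⟨θ ((d : ℤ) - i), i + 1,
        map_inf_le.trans
          (inf_le_inf ((cGA (i - 1) _).trans (sumIcc_mono (by omega) (by omega)))
          ((cFbA ((d : ℤ) - i)).trans (sumIcc_mono (by omega) (by omega))))⟩)
      (map_iSup_le_iSup fun i => ⟨θ' (i - 1), i - 1,
        map_inf_le.trans
          (inf_le_inf ((cGA' (i - 1)).trans (sumIcc_mono (by omega) (by omega)))
          ((cFbA' ((d : ℤ) - i) _).trans (sumIcc_mono (by omega) (by omega))))⟩) with hbot | htop
    · intro i
      exact le_bot_iff.1 ((le_iSup _ i).trans hbot.le)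
    · exfalso
      have hle : (⨆ i : ℤ, sumIcc Vs' 0 (i - 1) ⊓ sumIcc Vs 0 ((d : ℤ) - i))
          ≤ sumIcc Vs' 0 ((d : ℤ) - 1) := by
        refine iSup_le fun i => ?_
        by_cases hi : i ≤ (d : ℤ)
        · exact inf_le_left.trans (sumIcc_mono le_rfl (by omega))
        · exact le_trans (le_trans inf_le_right (le_of_eq (sumIcc_eq_bot (by omega)))) bot_le
      refine decV'.ne_bot (d : ℤ) hd0 le_rfl (Submodule.eq_bot_iff _ |>.2 fun x hx => ?_)
      exact hVs'd x hx (hle (htop ▸ Submodule.mem_top))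
  have hTbot : ∀ i : ℤ, sumIcc Vs' ((d : ℤ) - i + 1) (d : ℤ) ⊓ sumIcc Vs i (d : ℤ) = ⊥ := by
    rcases irred (⨆ i : ℤ, sumIcc Vs' ((d : ℤ) - i + 1) (d : ℤ) ⊓ sumIcc Vs i (d : ℤ))
      (map_iSup_le_iSup fun i => ⟨θ i, i + 1,
        map_inf_le.trans
          (inf_le_inf ((cHA ((d : ℤ) - i + 1) _).trans (sumIcc_mono (by omega) (by omega)))
          ((cFA i).trans (sumIcc_mono (by omega) (by omega))))⟩)
      (map_iSup_le_iSup fun i => ⟨θ' ((d : ℤ) - i + 1), i - 1,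
        map_inf_le.trans
          (inf_le_inf ((cHA' ((d : ℤ) - i + 1)).trans (sumIcc_mono (by omega) (by omega)))
          ((cFA' i _).trans (sumIcc_mono (by omega) (by omega))))⟩) with hbot | htop
    · intro i
      exact le_bot_iff.1 ((le_iSup _ i).trans hbot.le)
    · exfalso
      have hle : (⨆ i : ℤ, sumIcc Vs' ((d : ℤ) - i + 1) (d : ℤ) ⊓ sumIcc Vs i (d : ℤ))
          ≤ sumIcc Vs' 1 (d : ℤ) := by
        refine iSup_le fun i => ?_
        by_cases hi : i ≤ (d : ℤ)
        · exact inf_le_left.trans (sumIcc_mono (by omega) le_rfl)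
        · exact le_trans (le_trans inf_le_right (le_of_eq (sumIcc_eq_bot (by omega)))) bot_le
      refine decV'.ne_bot 0 le_rfl hd0 (Submodule.eq_bot_iff _ |>.2 fun x hx => ?_)
      exact hVs'0 x hx (hle (htop ▸ Submodule.mem_top))
  -- uniform action lemmas
  have hUact : ∀ i : ℤ, ∀ v ∈ dec0sD d Vs Vs' i, Kop v = (q ^ (2 * i - (d : ℤ))) • v := by
    intro i v hv
    by_cases hr : 0 ≤ i ∧ i ≤ (d : ℤ)
    · exact hKop i hr.1 hr.2 v hv
    · have hv0 : v = 0 := by rw [hbotU i (by omega)] at hv; simpa using hv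
      rw [hv0, map_zero, smul_zero]
  have hUactInv : ∀ i : ℤ, ∀ v ∈ dec0sD d Vs Vs' i, Kinv v = (q ^ ((d : ℤ) - 2 * i)) • v := by
    intro i v hv
    have h1 : Kinv (Kop v) = v := by
      rw [← Module.End.mul_apply, hKinv2, Module.End.one_apply]
    rw [hUact i v hv, map_smul] at h1
    have h2 : (q ^ ((d : ℤ) - 2 * i)) • (q ^ (2 * i - (d : ℤ))) • Kinv v
        = (q ^ ((d : ℤ) - 2 * i)) • v := by rw [h1]
    rwa [smul_smul, qq1 _ _ (by ring), one_smul] at h2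
  have hZact : ∀ i : ℤ, ∀ v ∈ dec0s0 d Vs Vs' i, B v = (b * q ^ (2 * i - (d : ℤ))) • v := by
    intro i v hv
    by_cases hr : 0 ≤ i ∧ i ≤ (d : ℤ)
    · exact hB i hr.1 hr.2 v hv
    · have hv0 : v = 0 := by rw [hbotZ i (by omega)] at hv; simpa using hv
      rw [hv0, map_zero, smul_zero]
  have hYact : ∀ i : ℤ, ∀ v ∈ decDsD d Vs Vs' i, B' v = (b' * q ^ ((d : ℤ) - 2 * i)) • v := by
    intro i v hv
    by_cases hr : 0 ≤ i ∧ i ≤ (d : ℤ)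
    · exact hB' i hr.1 hr.2 v hv
    · have hv0 : v = 0 := by rw [hbotY i (by omega)] at hv; simpa using hv
      rw [hv0, map_zero, smul_zero]
  -- elementwise shift shapes with explicit scalars
  have hfUA : ∀ i : ℤ, ∀ v ∈ dec0sD d Vs Vs' i,
      A v - (a * q ^ (2 * i - (d : ℤ))) • v ∈ dec0sD d Vs Vs' (i + 1) := by
    intro i v hv
    by_cases hr : 0 ≤ i ∧ i ≤ (d : ℤ)
    · have heq : A v - (a * q ^ (2 * i - (d : ℤ))) • v
          = (A - θ i • (1 : Module.End K V)) v := by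
        rw [hθ i hr.1 hr.2]
        simp [LinearMap.sub_apply]
      rw [heq]
      exact sUA i ⟨v, hv, rfl⟩
    · have hv0 : v = 0 := by rw [hbotU i (by omega)] at hv; simpa using hv
      rw [hv0]
      simp
  have hfUA' : ∀ i : ℤ, ∀ v ∈ dec0sD d Vs Vs' i,
      A' v - (a' * q ^ ((d : ℤ) - 2 * i)) • v ∈ dec0sD d Vs Vs' (i + (-1)) := by
    intro i v hv
    rw [show i + (-1 : ℤ) = i - 1 from by ring]
    by_cases hr : 0 ≤ i ∧ i ≤ (d : ℤ)
    · have heq : A' v - (a' * q ^ ((d : ℤ) - 2 * i)) • v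
          = (A' - θ' i • (1 : Module.End K V)) v := by
        rw [hθ' i hr.1 hr.2]
        simp [LinearMap.sub_apply]
      rw [heq]
      exact sUA' i ⟨v, hv, rfl⟩
    · have hv0 : v = 0 := by rw [hbotU i (by omega)] at hv; simpa using hv
      rw [hv0]
      simp
  have hfZA : ∀ i : ℤ, ∀ v ∈ dec0s0 d Vs Vs' i,
      A v - (a * q ^ ((d : ℤ) - 2 * i)) • v ∈ dec0s0 d Vs Vs' (i + 1) := by
    intro i v hv
    by_cases hr : 0 ≤ i ∧ i ≤ (d : ℤ)
    · have hθz : θ ((d : ℤ) - i) = a * q ^ ((d : ℤ) - 2 * i) := by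
        rw [hθ ((d : ℤ) - i) (by omega) (by omega),
          show 2 * ((d : ℤ) - i) - (d : ℤ) = (d : ℤ) - 2 * i from by ring]
      have heq : A v - (a * q ^ ((d : ℤ) - 2 * i)) • v
          = (A - θ ((d : ℤ) - i) • (1 : Module.End K V)) v := by
        rw [hθz]
        simp [LinearMap.sub_apply]
      rw [heq]
      exact sZA i ⟨v, hv, rfl⟩
    · have hv0 : v = 0 := by rw [hbotZ i (by omega)] at hv; simpa using hv
      rw [hv0]
      simp
  have hfZA' : ∀ i : ℤ, ∀ v ∈ dec0s0 d Vs Vs' i,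
      A' v - (a' * q ^ ((d : ℤ) - 2 * i)) • v ∈ dec0s0 d Vs Vs' (i + (-1)) := by
    intro i v hv
    rw [show i + (-1 : ℤ) = i - 1 from by ring]
    by_cases hr : 0 ≤ i ∧ i ≤ (d : ℤ)
    · have heq : A' v - (a' * q ^ ((d : ℤ) - 2 * i)) • v
          = (A' - θ' i • (1 : Module.End K V)) v := by
        rw [hθ' i hr.1 hr.2]
        simp [LinearMap.sub_apply]
      rw [heq]
      exact sZA' i ⟨v, hv, rfl⟩
    · have hv0 : v = 0 := by rw [hbotZ i (by omega)] at hv; simpa using hv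
      rw [hv0]
      simp
  have hfYA : ∀ i : ℤ, ∀ v ∈ decDsD d Vs Vs' i,
      A v - (a * q ^ (2 * i - (d : ℤ))) • v ∈ decDsD d Vs Vs' (i + 1) := by
    intro i v hv
    by_cases hr : 0 ≤ i ∧ i ≤ (d : ℤ)
    · have heq : A v - (a * q ^ (2 * i - (d : ℤ))) • v
          = (A - θ i • (1 : Module.End K V)) v := by
        rw [hθ i hr.1 hr.2]
        simp [LinearMap.sub_apply]
      rw [heq]
      exact sYA i ⟨v, hv, rfl⟩
    · have hv0 : v = 0 := by rw [hbotY i (by omega)] at hv; simpa using hv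
      rw [hv0]
      simp
  have hfYA' : ∀ i : ℤ, ∀ v ∈ decDsD d Vs Vs' i,
      A' v - (a' * q ^ (2 * i - (d : ℤ))) • v ∈ decDsD d Vs Vs' (i + (-1)) := by
    intro i v hv
    rw [show i + (-1 : ℤ) = i - 1 from by ring]
    by_cases hr : 0 ≤ i ∧ i ≤ (d : ℤ)
    · have hθz : θ' ((d : ℤ) - i) = a' * q ^ (2 * i - (d : ℤ)) := by
        rw [hθ' ((d : ℤ) - i) (by omega) (by omega),
          show (d : ℤ) - 2 * ((d : ℤ) - i) = 2 * i - (d : ℤ) from by ring]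
      have heq : A' v - (a' * q ^ (2 * i - (d : ℤ))) • v
          = (A' - θ' ((d : ℤ) - i) • (1 : Module.End K V)) v := by
        rw [hθz]
        simp [LinearMap.sub_apply]
      rw [heq]
      exact sYA' i ⟨v, hv, rfl⟩
    · have hv0 : v = 0 := by rw [hbotY i (by omega)] at hv; simpa using hv
      rw [hv0]
      simp
  -- normalization of the alternate relations
  have hnorm : ∀ X Y : Module.End K V,
      (q - q⁻¹)⁻¹ • (q • (X * Y) - q⁻¹ • (Y * X)) = 1 →
      q • (X * Y) - q⁻¹ • (Y * X) = (q - q⁻¹) • (1 : Module.End K V) := by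
    intro X Y hXY
    have h2 := congrArg (fun Z : Module.End K V => (q - q⁻¹) • Z) hXY
    simpa [smul_smul, mul_inv_cancel₀ hq2] using h2
  have hscale : ∀ (X Y : Module.End K V) (u w : K),
      q • ((u • X) * (w • Y)) - q⁻¹ • ((w • Y) * (u • X))
        = (u * w) • (q • (X * Y) - q⁻¹ • (Y * X)) := by
    intro X Y u w
    simp only [smul_mul_assoc, mul_smul_comm, smul_smul, smul_sub]
    module
  have hdiff : ∀ (X Y f : Module.End K V) (s : K),
      q • (X * f) - q⁻¹ • (f * X) = s • 1 →
      q • (Y * f) - q⁻¹ • (f * Y) = s • 1 →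
      q • ((X - Y) * f) - q⁻¹ • (f * (X - Y)) = 0 := by
    intro X Y f s h1 h2
    have h3 : q • ((X - Y) * f) - q⁻¹ • (f * (X - Y))
        = (q • (X * f) - q⁻¹ • (f * X)) - (q • (Y * f) - q⁻¹ • (f * Y)) := by
      simp only [sub_mul, mul_sub, smul_sub]
      abel
    rw [h3, h1, h2, sub_self]
  have hdiff' : ∀ (X Y f : Module.End K V) (s : K),
      q • (f * X) - q⁻¹ • (X * f) = s • 1 →
      q • (f * Y) - q⁻¹ • (Y * f) = s • 1 →
      q • (f * (X - Y)) - q⁻¹ • ((X - Y) * f) = 0 := by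
    intro X Y f s h1 h2
    have h3 : q • (f * (X - Y)) - q⁻¹ • ((X - Y) * f)
        = (q • (f * X) - q⁻¹ • (X * f)) - (q • (f * Y) - q⁻¹ • (Y * f)) := by
      simp only [sub_mul, mul_sub, smul_sub]
      abel
    rw [h3, h1, h2, sub_self]
  have rk1 : q • (kk 1 * A) - q⁻¹ • (A * kk 1) = (a * (q - q⁻¹)) • (1 : Module.End K V) := by
    rw [← hA]
    have h0 := hnorm _ _ (h.rel_k_ym 1)
    rw [mul_smul_comm, smul_mul_assoc, smul_comm q a, smul_comm q⁻¹ a, ← smul_sub, h0,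
      smul_smul]
  have rk0 : q • (kk 0 * A') - q⁻¹ • (A' * kk 0) = (a' * (q - q⁻¹)) • (1 : Module.End K V) := by
    rw [← hA']
    have h0 := hnorm _ _ (h.rel_k_ym 0)
    rw [mul_smul_comm, smul_mul_assoc, smul_comm q a', smul_comm q⁻¹ a', ← smul_sub, h0,
      smul_smul]
  -- relations for Kop, Kinv
  have RK : q • (Kop * A') - q⁻¹ • (A' * Kop) = (a' * (q - q⁻¹)) • (1 : Module.End K V) := by
    refine scalar_shift_rel₁ (ε := (-1 : ℤ)) (x := fun i => q ^ (2 * i - (d : ℤ)))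
      (μ := fun i => a' * q ^ ((d : ℤ) - 2 * i)) hUtop hUact hfUA' ?_ ?_
    · intro i
      rw [show q ^ (2 * i - (d : ℤ)) * (a' * q ^ ((d : ℤ) - 2 * i))
          = a' * (q ^ (2 * i - (d : ℤ)) * q ^ ((d : ℤ) - 2 * i)) from by ring,
        qq1 _ _ (by ring), mul_one]
      ring
    · intro i
      rw [hpq, hpqi, show 2 * (i + (-1 : ℤ)) - (d : ℤ) + 1 = 2 * i - (d : ℤ) - 1 from by ring]
  have RKi : q • (Kinv * A) - q⁻¹ • (A * Kinv) = (a * (q - q⁻¹)) • (1 : Module.End K V) := by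
    refine scalar_shift_rel₁ (ε := (1 : ℤ)) (x := fun i => q ^ ((d : ℤ) - 2 * i))
      (μ := fun i => a * q ^ (2 * i - (d : ℤ))) hUtop hUactInv hfUA ?_ ?_
    · intro i
      rw [show q ^ ((d : ℤ) - 2 * i) * (a * q ^ (2 * i - (d : ℤ)))
          = a * (q ^ ((d : ℤ) - 2 * i) * q ^ (2 * i - (d : ℤ))) from by ring,
        qq1 _ _ (by ring), mul_one]
      ring
    · intro i
      rw [hpq, hpqi, show (d : ℤ) - 2 * (i + 1) + 1 = (d : ℤ) - 2 * i - 1 from by ring]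
  -- Schur lemma
  have schur : ∀ T : Module.End K V, T * A = A * T → T * A' = A' * T → ∃ c : K, T = c • 1 := by
    intro T hTA hTA'
    obtain ⟨μ, hμ⟩ := Module.End.exists_eigenvalue T
    refine ⟨μ, ?_⟩
    have hW : ∀ f : Module.End K V, T * f = f * T →
        Submodule.map f (T.eigenspace μ) ≤ T.eigenspace μ := by
      intro f hcm
      rintro _ ⟨v, hv, rfl⟩
      rw [SetLike.mem_coe, Module.End.mem_eigenspace_iff] at hv
      rw [Module.End.mem_eigenspace_iff]
      have h1 : T (f v) = f (T v) := by
        rw [← Module.End.mul_apply, ← Module.End.mul_apply, hcm]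
      rw [h1, hv, map_smul]
    rcases irred _ (hW A hTA) (hW A' hTA') with hbot | htop
    · exact absurd hbot hμ
    · ext v
      have hv : v ∈ T.eigenspace μ := htop ▸ Submodule.mem_top
      rw [Module.End.mem_eigenspace_iff] at hv
      simpa using hv
  have hcA : (kk 0 * kk 1) * A = A * (kk 0 * kk 1) := by
    rw [← hA, mul_smul_comm, smul_mul_assoc, h.central_ym 1]
  have hcA' : (kk 0 * kk 1) * A' = A' * (kk 0 * kk 1) := by
    rw [← hA', mul_smul_comm, smul_mul_assoc, h.central_ym 0]
  obtain ⟨c, hc⟩ := schur _ hcA hcA'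
  have hk0c : kk 0 = c • kkinv 1 := by
    calc kk 0 = kk 0 * (kk 1 * kkinv 1) := by rw [h.k_kinv 1, mul_one]
    _ = (kk 0 * kk 1) * kkinv 1 := by rw [mul_assoc]
    _ = (c • 1) * kkinv 1 := by rw [hc]
    _ = c • kkinv 1 := by rw [smul_mul_assoc, one_mul]
  have hk1c : kk 1 = c • kkinv 0 := by
    calc kk 1 = (kkinv 0 * kk 0) * kk 1 := by rw [h.kinv_k 0, one_mul]
    _ = kkinv 0 * (kk 0 * kk 1) := by rw [mul_assoc]
    _ = kkinv 0 * (c • 1) := by rw [hc]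
    _ = c • kkinv 0 := by rw [mul_smul_comm, mul_one]
  -- eigenvalue matching for shifts
  have hmatchup : ∀ m m0 : ℤ, 0 ≤ m → m ≤ (d : ℤ) → 0 ≤ m0 → m0 ≤ (d : ℤ) →
      θ m0 = q * (q * θ m) → m0 = m + 1 := by
    intro m m0 h1 h2 h3 h4 hth
    rw [hθ m h1 h2, hθ m0 h3 h4,
      show q * (q * (a * q ^ (2 * m - (d : ℤ)))) = a * (q * (q * q ^ (2 * m - (d : ℤ))))
        from by ring, hpq, hpq] at hth
    have := hmatchA _ _ hth
    omega
  have hmatchdown : ∀ m m0 : ℤ, 0 ≤ m → m ≤ (d : ℤ) → 0 ≤ m0 → m0 ≤ (d : ℤ) →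
      θ m0 = q⁻¹ * (q⁻¹ * θ m) → m0 = m + (-1) := by
    intro m m0 h1 h2 h3 h4 hth
    rw [hθ m h1 h2, hθ m0 h3 h4,
      show q⁻¹ * (q⁻¹ * (a * q ^ (2 * m - (d : ℤ)))) = a * (q⁻¹ * (q⁻¹ * q ^ (2 * m - (d : ℤ))))
        from by ring, hpqi, hpqi] at hth
    have := hmatchA _ _ hth
    omega
  have hmatchdown' : ∀ m m0 : ℤ, 0 ≤ m → m ≤ (d : ℤ) → 0 ≤ m0 → m0 ≤ (d : ℤ) →
      θ' m0 = q * (q * θ' m) → m0 = m + (-1) := by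
    intro m m0 h1 h2 h3 h4 hth
    rw [hθ' m h1 h2, hθ' m0 h3 h4,
      show q * (q * (a' * q ^ ((d : ℤ) - 2 * m))) = a' * (q * (q * q ^ ((d : ℤ) - 2 * m)))
        from by ring, hpq, hpq] at hth
    have := hmatchA' _ _ hth
    omega
  have hmatchup' : ∀ m m0 : ℤ, 0 ≤ m → m ≤ (d : ℤ) → 0 ≤ m0 → m0 ≤ (d : ℤ) →
      θ' m0 = q⁻¹ * (q⁻¹ * θ' m) → m0 = m + 1 := by
    intro m m0 h1 h2 h3 h4 hth
    rw [hθ' m h1 h2, hθ' m0 h3 h4,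
      show q⁻¹ * (q⁻¹ * (a' * q ^ ((d : ℤ) - 2 * m))) = a' * (q⁻¹ * (q⁻¹ * q ^ ((d : ℤ) - 2 * m)))
        from by ring, hpqi, hpqi] at hth
    have := hmatchA' _ _ hth
    omega
  -- triangularity
  have hKopTri := tri_of_rel hq0 decV' eigA' RK hmatchdown'
  have hk0Tri := tri_of_rel hq0 decV' eigA' rk0 hmatchdown'
  have hKinvTri := tri_of_rel hq0 decV eigA RKi hmatchup
  have hk1Tri := tri_of_rel hq0 decV eigA rk1 hmatchup
  have mapGle : ∀ X : Module.End K V,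
      (∀ m : ℤ, ∀ v ∈ Vs' m, X v ∈ Vs' (m + (-1)) ⊔ Vs' m) →
      ∀ j : ℤ, Submodule.map X (sumIcc Vs' 0 j) ≤ sumIcc Vs' 0 j := by
    intro X hX j
    refine map_sumIcc_le _ fun m h0 hm => ?_
    rintro _ ⟨v, hv, rfl⟩
    exact sup_le (decV'.piece_le (m + (-1)) fun u1 u2 => ⟨by omega, by omega⟩)
      (decV'.piece_le m fun u1 u2 => ⟨by omega, by omega⟩) (hX m v hv)
  have mapFle : ∀ X : Module.End K V,
      (∀ m : ℤ, ∀ v ∈ Vs m, X v ∈ Vs (m + 1) ⊔ Vs m) →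
      ∀ j : ℤ, Submodule.map X (sumIcc Vs j (d : ℤ)) ≤ sumIcc Vs j (d : ℤ) := by
    intro X hX j
    refine map_sumIcc_le _ fun m h0 hm => ?_
    rintro _ ⟨v, hv, rfl⟩
    exact sup_le (decV.piece_le (m + 1) fun u1 u2 => ⟨by omega, by omega⟩)
      (decV.piece_le m fun u1 u2 => ⟨by omega, by omega⟩) (hX m v hv)
  have hKopG := mapGle Kop hKopTri
  have hk0G := mapGle (kk 0) hk0Tri
  have hKinvF := mapFle Kinv hKinvTri
  have hk1F := mapFle (kk 1) hk1Tri
  have hKinvG : ∀ j : ℤ, Submodule.map Kinv (sumIcc Vs' 0 j) ≤ sumIcc Vs' 0 j :=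
    fun j => map_pres_of_inv hKinv2 (hKopG j)
  have hKopF : ∀ j : ℤ, Submodule.map Kop (sumIcc Vs j (d : ℤ)) ≤ sumIcc Vs j (d : ℤ) :=
    fun j => map_pres_of_inv hKinv1 (hKinvF j)
  have hkinv0G : ∀ j : ℤ, Submodule.map (kkinv 0) (sumIcc Vs' 0 j) ≤ sumIcc Vs' 0 j :=
    fun j => map_pres_of_inv (h.kinv_k 0) (hk0G j)
  have hkinv1F : ∀ j : ℤ, Submodule.map (kkinv 1) (sumIcc Vs j (d : ℤ)) ≤ sumIcc Vs j (d : ℤ) :=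
    fun j => map_pres_of_inv (h.kinv_k 1) (hk1F j)
  have hk0F : ∀ j : ℤ, Submodule.map (kk 0) (sumIcc Vs j (d : ℤ)) ≤ sumIcc Vs j (d : ℤ) := by
    intro j
    rintro _ ⟨v, hv, rfl⟩
    rw [hk0c, LinearMap.smul_apply]
    exact Submodule.smul_mem _ _ (hkinv1F j ⟨v, hv, rfl⟩)
  have hk1G : ∀ j : ℤ, Submodule.map (kk 1) (sumIcc Vs' 0 j) ≤ sumIcc Vs' 0 j := by
    intro j
    rintro _ ⟨v, hv, rfl⟩
    rw [hk1c, LinearMap.smul_apply]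
    exact Submodule.smul_mem _ _ (hkinv0G j ⟨v, hv, rfl⟩)
  -- kk 0 = Kop
  have hDstrict := strict_shift_of_rel hq0 decV' eigA' (hdiff (kk 0) Kop A' _ rk0 RK) hmatchdown'
  have hDF : ∀ j : ℤ, Submodule.map (kk 0 - Kop) (sumIcc Vs j (d : ℤ)) ≤ sumIcc Vs j (d : ℤ) := by
    intro j
    rintro _ ⟨v, hv, rfl⟩
    rw [LinearMap.sub_apply]
    exact Submodule.sub_mem _ (hk0F j ⟨v, hv, rfl⟩) (hKopF j ⟨v, hv, rfl⟩)
  have hDG : ∀ j : ℤ, Submodule.map (kk 0 - Kop) (sumIcc Vs' 0 j) ≤ sumIcc Vs' 0 (j - 1) := by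
    intro j
    refine map_sumIcc_le _ fun m h0 hm => ?_
    rintro _ ⟨v, hv, rfl⟩
    exact decV'.piece_le (m + (-1)) (fun u1 u2 => ⟨by omega, by omega⟩) (hDstrict m v hv)
  have hgoal1 : kk 0 = Kop := by
    refine ext_of_iSup_eq_top hUtop fun i v hv => ?_
    have hv' : v ∈ sumIcc Vs' 0 i ⊓ sumIcc Vs i (d : ℤ) := hv
    have hm : (kk 0 - Kop) v ∈ sumIcc Vs' 0 (i - 1) ⊓ sumIcc Vs i (d : ℤ) :=
      Submodule.mem_inf.2 ⟨hDG i ⟨v, (Submodule.mem_inf.1 hv').1, rfl⟩,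
        hDF i ⟨v, (Submodule.mem_inf.1 hv').2, rfl⟩⟩
    rw [hWbot i] at hm
    have h0 := (Submodule.mem_bot K).1 hm
    rw [LinearMap.sub_apply] at h0
    exact sub_eq_zero.1 h0
  -- kk 1 = Kinv
  have hEstrict := strict_shift_of_rel hq0 decV eigA (hdiff (kk 1) Kinv A _ rk1 RKi) hmatchup
  have hEG : ∀ j : ℤ, Submodule.map (kk 1 - Kinv) (sumIcc Vs' 0 j) ≤ sumIcc Vs' 0 j := by
    intro j
    rintro _ ⟨v, hv, rfl⟩
    rw [LinearMap.sub_apply]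
    exact Submodule.sub_mem _ (hk1G j ⟨v, hv, rfl⟩) (hKinvG j ⟨v, hv, rfl⟩)
  have hEF : ∀ j : ℤ, Submodule.map (kk 1 - Kinv) (sumIcc Vs j (d : ℤ))
      ≤ sumIcc Vs (j + 1) (d : ℤ) := by
    intro j
    refine map_sumIcc_le _ fun m h0 hm => ?_
    rintro _ ⟨v, hv, rfl⟩
    exact decV.piece_le (m + 1) (fun u1 u2 => ⟨by omega, by omega⟩) (hEstrict m v hv)
  have hgoal2 : kk 1 = Kinv := by
    refine ext_of_iSup_eq_top hUtop fun i v hv => ?_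
    have hv' : v ∈ sumIcc Vs' 0 i ⊓ sumIcc Vs i (d : ℤ) := hv
    have hm : (kk 1 - Kinv) v ∈ sumIcc Vs' 0 i ⊓ sumIcc Vs (i + 1) (d : ℤ) :=
      Submodule.mem_inf.2 ⟨hEG i ⟨v, (Submodule.mem_inf.1 hv').1, rfl⟩,
        hEF i ⟨v, (Submodule.mem_inf.1 hv').2, rfl⟩⟩
    have hWb := hWbot (i + 1)
    rw [show (i + 1 - 1 : ℤ) = i from by ring] at hWb
    rw [hWb] at hm
    have h0 := (Submodule.mem_bot K).1 hm
    rw [LinearMap.sub_apply] at h0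
    exact sub_eq_zero.1 h0
  have hgoal3 : kkinv 0 = Kinv := by
    calc kkinv 0 = kkinv 0 * 1 := (mul_one _).symm
    _ = kkinv 0 * (Kop * Kinv) := by rw [hKinv1]
    _ = kkinv 0 * (kk 0 * Kinv) := by rw [hgoal1]
    _ = (kkinv 0 * kk 0) * Kinv := by rw [mul_assoc]
    _ = 1 * Kinv := by rw [h.kinv_k 0]
    _ = Kinv := one_mul _
  have hgoal4 : kkinv 1 = Kop := by
    calc kkinv 1 = 1 * kkinv 1 := (one_mul _).symm
    _ = (Kop * Kinv) * kkinv 1 := by rw [hKinv1]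
    _ = Kop * (Kinv * kkinv 1) := by rw [mul_assoc]
    _ = Kop * (kk 1 * kkinv 1) := by rw [hgoal2]
    _ = Kop * 1 := by rw [h.k_kinv 1]
    _ = Kop := mul_one _
  -- the raising part
  have hkks : kkinv 0 * kkinv 1 = 1 := by rw [hgoal3, hgoal4, hKinv2]
  have hnorm' : ∀ X Y : Module.End K V,
      (q - q⁻¹)⁻¹ • (q • (X * Y) - q⁻¹ • (Y * X)) = kkinv 0 * kkinv 1 →
      q • (X * Y) - q⁻¹ • (Y * X) = (q - q⁻¹) • (1 : Module.End K V) := by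
    intro X Y hXY
    rw [hkks] at hXY
    exact hnorm X Y hXY
  have ry1 : q • (A * (b • yp 1)) - q⁻¹ • ((b • yp 1) * A)
      = (a * b * (q - q⁻¹)) • (1 : Module.End K V) := by
    rw [← hA, hscale (ym 1) (yp 1) a b, hnorm _ _ (h.rel_ym_yp 1), smul_smul]
  have ry1' : q • ((b • yp 1) * A') - q⁻¹ • (A' * (b • yp 1))
      = (a' * b * (q - q⁻¹)) • (1 : Module.End K V) := by
    rw [← hA', hscale (yp 1) (ym 0) b a', hnorm' _ _ (h.rel_yp_ym 1 0 (by decide)), smul_smul,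
      show b * a' * (q - q⁻¹) = a' * b * (q - q⁻¹) from by ring]
  have ry0 : q • (A' * (b' • yp 0)) - q⁻¹ • ((b' • yp 0) * A')
      = (a' * b' * (q - q⁻¹)) • (1 : Module.End K V) := by
    rw [← hA', hscale (ym 0) (yp 0) a' b', hnorm _ _ (h.rel_ym_yp 0), smul_smul]
  have ry0' : q • ((b' • yp 0) * A) - q⁻¹ • (A * (b' • yp 0))
      = (a * b' * (q - q⁻¹)) • (1 : Module.End K V) := by
    rw [← hA, hscale (yp 0) (ym 1) b' a, hnorm' _ _ (h.rel_yp_ym 0 1 (by decide)), smul_smul,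
      show b' * a * (q - q⁻¹) = a * b' * (q - q⁻¹) from by ring]
  -- relations for B, B'
  have RB1 : q • (A * B) - q⁻¹ • (B * A) = (a * b * (q - q⁻¹)) • (1 : Module.End K V) := by
    refine scalar_shift_rel₂ (ε := (1 : ℤ)) (x := fun i => b * q ^ (2 * i - (d : ℤ)))
      (μ := fun i => a * q ^ ((d : ℤ) - 2 * i)) hZtop hZact hfZA ?_ ?_
    · intro i
      rw [show b * q ^ (2 * i - (d : ℤ)) * (a * q ^ ((d : ℤ) - 2 * i))
          = a * b * (q ^ (2 * i - (d : ℤ)) * q ^ ((d : ℤ) - 2 * i)) from by ring,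
        qq1 _ _ (by ring), mul_one]
      ring
    · intro i
      rw [show q * (b * q ^ (2 * i - (d : ℤ))) = b * (q * q ^ (2 * i - (d : ℤ))) from by ring,
        show q⁻¹ * (b * q ^ (2 * (i + 1) - (d : ℤ)))
          = b * (q⁻¹ * q ^ (2 * (i + 1) - (d : ℤ))) from by ring,
        hpq, hpqi, show 2 * i - (d : ℤ) + 1 = 2 * (i + 1) - (d : ℤ) - 1 from by ring]
  have RB2 : q • (B * A') - q⁻¹ • (A' * B) = (a' * b * (q - q⁻¹)) • (1 : Module.End K V) := by
    refine scalar_shift_rel₁ (ε := (-1 : ℤ)) (x := fun i => b * q ^ (2 * i - (d : ℤ)))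
      (μ := fun i => a' * q ^ ((d : ℤ) - 2 * i)) hZtop hZact hfZA' ?_ ?_
    · intro i
      rw [show b * q ^ (2 * i - (d : ℤ)) * (a' * q ^ ((d : ℤ) - 2 * i))
          = a' * b * (q ^ (2 * i - (d : ℤ)) * q ^ ((d : ℤ) - 2 * i)) from by ring,
        qq1 _ _ (by ring), mul_one]
      ring
    · intro i
      rw [show q * (b * q ^ (2 * (i + (-1 : ℤ)) - (d : ℤ)))
          = b * (q * q ^ (2 * (i + (-1 : ℤ)) - (d : ℤ))) from by ring,
        show q⁻¹ * (b * q ^ (2 * i - (d : ℤ))) = b * (q⁻¹ * q ^ (2 * i - (d : ℤ))) from by ring,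
        hpq, hpqi, show 2 * (i + (-1 : ℤ)) - (d : ℤ) + 1 = 2 * i - (d : ℤ) - 1 from by ring]
  have RB'1 : q • (A' * B') - q⁻¹ • (B' * A') = (a' * b' * (q - q⁻¹)) • (1 : Module.End K V) := by
    refine scalar_shift_rel₂ (ε := (-1 : ℤ)) (x := fun i => b' * q ^ ((d : ℤ) - 2 * i))
      (μ := fun i => a' * q ^ (2 * i - (d : ℤ))) hYtop hYact hfYA' ?_ ?_
    · intro i
      rw [show b' * q ^ ((d : ℤ) - 2 * i) * (a' * q ^ (2 * i - (d : ℤ)))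
          = a' * b' * (q ^ ((d : ℤ) - 2 * i) * q ^ (2 * i - (d : ℤ))) from by ring,
        qq1 _ _ (by ring), mul_one]
      ring
    · intro i
      rw [show q * (b' * q ^ ((d : ℤ) - 2 * i)) = b' * (q * q ^ ((d : ℤ) - 2 * i)) from by ring,
        show q⁻¹ * (b' * q ^ ((d : ℤ) - 2 * (i + (-1 : ℤ))))
          = b' * (q⁻¹ * q ^ ((d : ℤ) - 2 * (i + (-1 : ℤ)))) from by ring,
        hpq, hpqi, show (d : ℤ) - 2 * i + 1 = (d : ℤ) - 2 * (i + (-1 : ℤ)) - 1 from by ring]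
  have RB'2 : q • (B' * A) - q⁻¹ • (A * B') = (a * b' * (q - q⁻¹)) • (1 : Module.End K V) := by
    refine scalar_shift_rel₁ (ε := (1 : ℤ)) (x := fun i => b' * q ^ ((d : ℤ) - 2 * i))
      (μ := fun i => a * q ^ (2 * i - (d : ℤ))) hYtop hYact hfYA ?_ ?_
    · intro i
      rw [show b' * q ^ ((d : ℤ) - 2 * i) * (a * q ^ (2 * i - (d : ℤ)))
          = a * b' * (q ^ ((d : ℤ) - 2 * i) * q ^ (2 * i - (d : ℤ))) from by ring,
        qq1 _ _ (by ring), mul_one]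
      ring
    · intro i
      rw [show q * (b' * q ^ ((d : ℤ) - 2 * (i + 1)))
          = b' * (q * q ^ ((d : ℤ) - 2 * (i + 1))) from by ring,
        show q⁻¹ * (b' * q ^ ((d : ℤ) - 2 * i)) = b' * (q⁻¹ * q ^ ((d : ℤ) - 2 * i)) from by ring,
        hpq, hpqi, show (d : ℤ) - 2 * (i + 1) + 1 = (d : ℤ) - 2 * i - 1 from by ring]
  -- b • yp 1 = B
  have hΔVs := strict_shift_of_rel' hq0 decV eigA (hdiff' (b • yp 1) B A _ ry1 RB1) hmatchdown
  have hΔVs' := strict_shift_of_rel hq0 decV' eigA' (hdiff (b • yp 1) B A' _ ry1' RB2) hmatchdown'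
  have hΔG : ∀ j : ℤ, Submodule.map (b • yp 1 - B) (sumIcc Vs' 0 j) ≤ sumIcc Vs' 0 (j - 1) := by
    intro j
    refine map_sumIcc_le _ fun m h0 hm => ?_
    rintro _ ⟨v, hv, rfl⟩
    exact decV'.piece_le (m + (-1)) (fun u1 u2 => ⟨by omega, by omega⟩) (hΔVs' m v hv)
  have hΔFb : ∀ j : ℤ, Submodule.map (b • yp 1 - B) (sumIcc Vs 0 j) ≤ sumIcc Vs 0 j := by
    intro j
    refine map_sumIcc_le _ fun m h0 hm => ?_
    rintro _ ⟨v, hv, rfl⟩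
    exact decV.piece_le (m + (-1)) (fun u1 u2 => ⟨by omega, by omega⟩) (hΔVs m v hv)
  have hgoal5 : b • yp 1 = B := by
    refine ext_of_iSup_eq_top hZtop fun i v hv => ?_
    have hv' : v ∈ sumIcc Vs' 0 i ⊓ sumIcc Vs 0 ((d : ℤ) - i) := hv
    have hm : (b • yp 1 - B) v ∈ sumIcc Vs' 0 (i - 1) ⊓ sumIcc Vs 0 ((d : ℤ) - i) :=
      Submodule.mem_inf.2 ⟨hΔG i ⟨v, (Submodule.mem_inf.1 hv').1, rfl⟩,
        hΔFb ((d : ℤ) - i) ⟨v, (Submodule.mem_inf.1 hv').2, rfl⟩⟩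
    rw [hW'bot i] at hm
    have h0 := (Submodule.mem_bot K).1 hm
    rw [LinearMap.sub_apply] at h0
    exact sub_eq_zero.1 h0
  -- b' • yp 0 = B'
  have hΔ'Vs' := strict_shift_of_rel' hq0 decV' eigA'
    (hdiff' (b' • yp 0) B' A' _ ry0 RB'1) hmatchup'
  have hΔ'Vs := strict_shift_of_rel hq0 decV eigA (hdiff (b' • yp 0) B' A _ ry0' RB'2) hmatchup
  have hΔ'H : ∀ j : ℤ, Submodule.map (b' • yp 0 - B') (sumIcc Vs' j (d : ℤ))
      ≤ sumIcc Vs' (j + 1) (d : ℤ) := by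
    intro j
    refine map_sumIcc_le _ fun m h0 hm => ?_
    rintro _ ⟨v, hv, rfl⟩
    exact decV'.piece_le (m + 1) (fun u1 u2 => ⟨by omega, by omega⟩) (hΔ'Vs' m v hv)
  have hΔ'F : ∀ j : ℤ, Submodule.map (b' • yp 0 - B') (sumIcc Vs j (d : ℤ))
      ≤ sumIcc Vs (j + 1) (d : ℤ) := by
    intro j
    refine map_sumIcc_le _ fun m h0 hm => ?_
    rintro _ ⟨v, hv, rfl⟩
    exact decV.piece_le (m + 1) (fun u1 u2 => ⟨by omega, by omega⟩) (hΔ'Vs m v hv)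
  have hgoal6 : b' • yp 0 = B' := by
    refine ext_of_iSup_eq_top hYtop fun i v hv => ?_
    have hv' : v ∈ sumIcc Vs' ((d : ℤ) - i) (d : ℤ) ⊓ sumIcc Vs i (d : ℤ) := hv
    have hm : (b' • yp 0 - B') v
        ∈ sumIcc Vs' ((d : ℤ) - i + 1) (d : ℤ) ⊓ sumIcc Vs (i + 1) (d : ℤ) :=
      Submodule.mem_inf.2 ⟨hΔ'H ((d : ℤ) - i) ⟨v, (Submodule.mem_inf.1 hv').1, rfl⟩,
        hΔ'F i ⟨v, (Submodule.mem_inf.1 hv').2, rfl⟩⟩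
    have hTb := hTbot (i + 1)
    rw [show (d : ℤ) - (i + 1) + 1 = (d : ℤ) - i from by ring] at hTb
    have hm2 : (b' • yp 0 - B') v ∈ sumIcc Vs' ((d : ℤ) - i) (d : ℤ) ⊓ sumIcc Vs (i + 1) (d : ℤ) :=
      Submodule.mem_inf.2 ⟨sumIcc_mono (by omega) le_rfl (Submodule.mem_inf.1 hm).1,
        (Submodule.mem_inf.1 hm).2⟩
    rw [hTb] at hm2
    have h0 := (Submodule.mem_bot K).1 hm2
    rw [LinearMap.sub_apply] at h0
    exact sub_eq_zero.1 h0
  exact ⟨hgoal1, hgoal2, hgoal3, hgoal4, hgoal5, hgoal6⟩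
end
end

section
/- Suppose y_0^+, y_1^+, y_0^−, y_1^−, k_0, k_0^{−1}, k_1, k_1^{−1} are 𝕂-linear maps V → V satisfying the alternate relations in End(V), and suppose a·y_0^+ = A and a*·y_1^+ = A*. Then necessarily k_0 = K*, k_1 = K*^{−1}, k_0^{−1} = K*^{−1}, k_1^{−1} = K*, b*·y_0^− = B*, and b·y_1^− = B. (Hence there is a unique U_q(ŝl_2)-module structure on V in which a y_0^+ acts as A and a* y_1^+ acts as A*.) -/
noncomputable section

open Submodule

variable {K : Type*} [Field K]

variable {V : Type*} [AddCommGroup V] [Module K V]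

section TDAux

variable {K : Type*} [Field K]
variable {V : Type*} [AddCommGroup V] [Module K V]

namespace TDAux

lemma le_sumIcc (U : ℤ → Submodule K V) {m n j : ℤ} (h1 : m ≤ j) (h2 : j ≤ n) :
    U j ≤ sumIcc U m n :=
  le_iSup₂_of_le j ⟨h1, h2⟩ le_rfl

lemma sumIcc_le {U : ℤ → Submodule K V} {m n : ℤ} {W : Submodule K V}
    (h : ∀ j, m ≤ j → j ≤ n → U j ≤ W) : sumIcc U m n ≤ W :=
  iSup₂_le fun j hj => h j hj.1 hj.2

lemma sumIcc_bot (U : ℤ → Submodule K V) {m n : ℤ} (h : n < m) : sumIcc U m n = ⊥ :=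
  le_bot_iff.mp (sumIcc_le fun j h1 h2 => absurd (h1.trans h2) (not_le.mpr h))

lemma sumIcc_mono (U : ℤ → Submodule K V) {m n n' : ℤ} (h : n ≤ n') :
    sumIcc U m n ≤ sumIcc U m n' :=
  sumIcc_le fun j h1 h2 => le_sumIcc U h1 (h2.trans h)

variable {d : ℕ} {P : ℤ → Submodule K V}

lemma sumIcc_eq_top (hP : IsDecomposition d P) : sumIcc P 0 (d : ℤ) = ⊤ := by
  rw [← top_le_iff, ← hP.sup_eq_top]
  refine iSup_le fun j => ?_
  rcases lt_or_ge j 0 with hj | hj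
  · rw [hP.bot_of_lt j hj]; exact bot_le
  rcases le_or_gt j (d : ℤ) with hj' | hj'
  · exact le_sumIcc P hj hj'
  · rw [hP.bot_of_gt j hj']; exact bot_le

lemma internal (hP : IsDecomposition d P) : DirectSum.IsInternal fun i => P i :=
  DirectSum.isInternal_submodule_of_iSupIndep_of_iSup_eq_top hP.indep hP.sup_eq_top

/-- Projection onto the `m`-th component of a decomposition. -/
noncomputable def proj (hP : IsDecomposition d P) (m : ℤ) : V →ₗ[K] V :=
  (P m).subtype ∘ₗ (DirectSum.component K ℤ (fun i => ↥(P i)) m) ∘ₗ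
    (LinearEquiv.ofBijective (DirectSum.coeLinearMap fun i => P i)
      (internal hP)).symm.toLinearMap

lemma proj_mem (hP : IsDecomposition d P) (m : ℤ) (v : V) : proj hP m v ∈ P m :=
  SetLike.coe_mem _

lemma proj_apply_same (hP : IsDecomposition d P) {m : ℤ} {v : V} (hv : v ∈ P m) :
    proj hP m v = v := by
  simp only [proj, LinearMap.comp_apply, LinearEquiv.coe_toLinearMap]
  rw [show (DirectSum.component K ℤ (fun i => ↥(P i)) m)
      (((LinearEquiv.ofBijective (DirectSum.coeLinearMap fun i => P i)
        (internal hP)).symm) v) = ⟨v, hv⟩ from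
    (internal hP).ofBijective_coeLinearMap_of_mem hv]
  rfl

lemma proj_apply_ne (hP : IsDecomposition d P) {m n : ℤ} (hmn : n ≠ m) {v : V}
    (hv : v ∈ P n) : proj hP m v = 0 := by
  simp only [proj, LinearMap.comp_apply, LinearEquiv.coe_toLinearMap]
  rw [show (DirectSum.component K ℤ (fun i => ↥(P i)) m)
      (((LinearEquiv.ofBijective (DirectSum.coeLinearMap fun i => P i)
        (internal hP)).symm) v) = 0 from
    (internal hP).ofBijective_coeLinearMap_of_mem_ne hmn hv]
  rfl

lemma sum_proj (hP : IsDecomposition d P) (v : V) :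
    ∃ s : Finset ℤ, (∀ m, m ∉ s → proj hP m v = 0) ∧ v = ∑ m ∈ s, proj hP m v := by
  classical
  set e := LinearEquiv.ofBijective (DirectSum.coeLinearMap fun i => P i) (internal hP)
    with he
  have hproj : ∀ m, proj hP m v = ↑(e.symm v m) := fun m => rfl
  refine ⟨(e.symm v).support, fun m hm => ?_, ?_⟩
  · rw [hproj m, DFinsupp.notMem_support_iff.mp hm, Submodule.coe_zero]
  · set x := e.symm v with hx
    have h1 : (∑ m ∈ x.support,
        DirectSum.of (fun i => ↥(P i)) m (x m)) = x :=
      DirectSum.sum_support_of _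
    have hv : (DirectSum.coeLinearMap fun i => P i)
        (∑ m ∈ x.support, DirectSum.of (fun i => ↥(P i)) m (x m)) = v := by
      rw [h1, hx]
      exact e.apply_symm_apply v
    rw [map_sum] at hv
    calc v = ∑ m ∈ x.support,
        (DirectSum.coeLinearMap fun i => P i) (DirectSum.of (fun i => ↥(P i)) m (x m)) :=
          hv.symm
      _ = ∑ m ∈ x.support, proj hP m v := Finset.sum_congr rfl fun m _ => by
          rw [hproj m, DirectSum.coeLinearMap_of]

lemma proj_eq_zero_of_mem_sumIcc (hP : IsDecomposition d P) {a b m : ℤ}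
    (hm : m < a ∨ b < m) {v : V} (hv : v ∈ sumIcc P a b) : proj hP m v = 0 := by
  have hle : sumIcc P a b ≤ LinearMap.ker (proj hP m) :=
    sumIcc_le fun j h1 h2 w hw => LinearMap.mem_ker.mpr
      (proj_apply_ne hP (by omega) hw)
  exact LinearMap.mem_ker.mp (hle hv)

lemma mem_sumIcc_of_proj (hP : IsDecomposition d P) {a b : ℤ} {v : V}
    (hv : ∀ m, m < a ∨ b < m → proj hP m v = 0) : v ∈ sumIcc P a b := by
  obtain ⟨s, hs0, hs⟩ := sum_proj hP v
  rw [hs]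
  refine Submodule.sum_mem _ fun m _ => ?_
  rcases lt_or_ge m a with hma | hma
  · rw [hv m (Or.inl hma)]; exact Submodule.zero_mem _
  rcases le_or_gt m b with hmb | hmb
  · exact le_sumIcc P hma hmb (proj_mem hP m v)
  · rw [hv m (Or.inr hmb)]; exact Submodule.zero_mem _

lemma sub_proj_mem (hP : IsDecomposition d P) {j : ℤ} {v : V}
    (hv : v ∈ sumIcc P 0 j) : v - proj hP j v ∈ sumIcc P 0 (j - 1) := by
  refine mem_sumIcc_of_proj hP fun m hm => ?_
  rw [map_sub]
  rcases eq_or_ne m j with rfl | hmj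
  · rw [proj_apply_same hP (proj_mem hP m v), sub_self]
  · rw [proj_eq_zero_of_mem_sumIcc hP (by omega) hv,
      proj_apply_ne hP hmj.symm (proj_mem hP j v), sub_zero]

section Core

variable {T : Module.End K V} {α : ℤ → K}

/-- The flag `P 0 + ⋯ + P j` is `T`-invariant. -/
lemma flag_inv (hP : IsDecomposition d P)
    (hT : ∀ j, 0 ≤ j → j ≤ (d : ℤ) → ∀ v ∈ P j, T v - α j • v ∈ sumIcc P 0 (j - 1))
    {j : ℤ} {v : V} (hv : v ∈ sumIcc P 0 j) : T v ∈ sumIcc P 0 j := by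
  have hle : sumIcc P 0 j ≤ Submodule.comap T (sumIcc P 0 j) := by
    refine sumIcc_le fun m h1 h2 w hw => ?_
    rcases le_or_gt m (d : ℤ) with hmd | hmd
    · have h3 := hT m h1 hmd w hw
      have : T w = (T w - α m • w) + α m • w := by abel
      rw [Submodule.mem_comap, this]
      exact Submodule.add_mem _
        (sumIcc_mono P (by omega) h3)
        (le_sumIcc P h1 h2 (Submodule.smul_mem _ _ hw))
    · rw [hP.bot_of_gt m hmd] at hw
      simp only [Submodule.mem_bot] at hw
      subst hw
      rw [Submodule.mem_comap, map_zero]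
      exact Submodule.zero_mem _
  exact hle hv

lemma proj_top_apply (hP : IsDecomposition d P)
    (hT : ∀ j, 0 ≤ j → j ≤ (d : ℤ) → ∀ v ∈ P j, T v - α j • v ∈ sumIcc P 0 (j - 1))
    {j : ℤ} (h0 : 0 ≤ j) (hd : j ≤ (d : ℤ)) {v : V} (hv : v ∈ sumIcc P 0 j) :
    proj hP j (T v) = α j • proj hP j v := by
  have hvj : proj hP j v ∈ P j := proj_mem hP j v
  have h1 : v - proj hP j v ∈ sumIcc P 0 (j - 1) := sub_proj_mem hP hv
  have h2 : T (v - proj hP j v) ∈ sumIcc P 0 (j - 1) := flag_inv hP hT h1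
  have h3 : proj hP j (T (v - proj hP j v)) = 0 :=
    proj_eq_zero_of_mem_sumIcc hP (Or.inr (by omega)) h2
  have h4 : T (proj hP j v) - α j • proj hP j v ∈ sumIcc P 0 (j - 1) := hT j h0 hd _ hvj
  have h5 : proj hP j (T (proj hP j v) - α j • proj hP j v) = 0 :=
    proj_eq_zero_of_mem_sumIcc hP (Or.inr (by omega)) h4
  have e1 : T v = T (v - proj hP j v) + T (proj hP j v) := by
    rw [← map_add]; congr 1; abel
  rw [e1, map_add, h3, zero_add]
  have e2 : T (proj hP j v) = (T (proj hP j v) - α j • proj hP j v) + α j • proj hP j v := by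
    abel
  rw [e2, map_add, h5, zero_add, map_smul, proj_apply_same hP hvj]

lemma flag_step (hP : IsDecomposition d P)
    (hT : ∀ j, 0 ≤ j → j ≤ (d : ℤ) → ∀ v ∈ P j, T v - α j • v ∈ sumIcc P 0 (j - 1))
    {j : ℤ} (h0 : 0 ≤ j) (hd : j ≤ (d : ℤ)) {v : V} (hv : v ∈ sumIcc P 0 j) :
    T v - α j • v ∈ sumIcc P 0 (j - 1) := by
  refine mem_sumIcc_of_proj hP fun m hm => ?_
  rw [map_sub, map_smul]
  rcases eq_or_ne m j with rfl | hmj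
  · rw [proj_top_apply hP hT h0 hd hv, sub_self]
  · rw [proj_eq_zero_of_mem_sumIcc hP (by omega) (flag_inv hP hT hv),
      proj_eq_zero_of_mem_sumIcc hP (by omega) hv, smul_zero, sub_zero]

lemma eig_zero_aux (hP : IsDecomposition d P)
    (hT : ∀ j, 0 ≤ j → j ≤ (d : ℤ) → ∀ v ∈ P j, T v - α j • v ∈ sumIcc P 0 (j - 1)) :
    ∀ k : ℕ, ∀ j : ℤ, j ≤ (d : ℤ) → j < (k : ℤ) → ∀ μ : K,
      (∀ m, 0 ≤ m → m ≤ j → α m ≠ μ) → ∀ v ∈ sumIcc P 0 j, T v = μ • v → v = 0 := by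
  intro k
  induction k with
  | zero =>
    intro j _ hk μ _ v hv _
    rw [sumIcc_bot P (by omega)] at hv
    simpa using hv
  | succ k ih =>
    intro j hjd hk μ hμ v hv hTv
    rcases lt_or_ge j (k : ℤ) with hjk | hjk
    · exact ih j hjd hjk μ hμ v hv hTv
    have hj : j = (k : ℤ) := by omega
    have h0 : 0 ≤ j := by omega
    have hproj : proj hP j (T v) = α j • proj hP j v := proj_top_apply hP hT h0 hjd hv
    rw [hTv, map_smul] at hproj
    have hz : proj hP j v = 0 := by
      by_contra hne
      have h' : (α j - μ) • proj hP j v = 0 := by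
        rw [sub_smul, hproj, sub_self]
      rcases smul_eq_zero.mp h' with h'' | h''
      · exact hμ j h0 le_rfl (sub_eq_zero.mp h'')
      · exact hne h''
    have hv' : v ∈ sumIcc P 0 (j - 1) := by
      have := sub_proj_mem hP hv
      rwa [hz, sub_zero] at this
    exact ih (j - 1) (by omega) (by omega) μ (fun m h1 h2 => hμ m h1 (by omega)) v hv' hTv

lemma eig_zero (hP : IsDecomposition d P)
    (hT : ∀ j, 0 ≤ j → j ≤ (d : ℤ) → ∀ v ∈ P j, T v - α j • v ∈ sumIcc P 0 (j - 1))
    {j : ℤ} (hjd : j ≤ (d : ℤ)) {μ : K} (hμ : ∀ m, 0 ≤ m → m ≤ j → α m ≠ μ)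
    {v : V} (hv : v ∈ sumIcc P 0 j) (hTv : T v = μ • v) : v = 0 := by
  rcases lt_or_ge j 0 with hj | hj
  · rw [sumIcc_bot P (by omega)] at hv; simpa using hv
  · exact eig_zero_aux hP hT (j + 1).toNat j hjd (by omega) μ hμ v hv hTv

lemma gen_zero (hP : IsDecomposition d P)
    (hT : ∀ j, 0 ≤ j → j ≤ (d : ℤ) → ∀ v ∈ P j, T v - α j • v ∈ sumIcc P 0 (j - 1))
    {j : ℤ} (hjd : j ≤ (d : ℤ)) {μ : K} (hμ : ∀ m, 0 ≤ m → m ≤ j → α m ≠ μ)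
    {v : V} (hv : v ∈ sumIcc P 0 j) {n : ℕ}
    (hn : ((T - μ • 1) ^ n) v = 0) : v = 0 := by
  induction n generalizing v with
  | zero => simpa using hn
  | succ n ih =>
    have hu : (T - μ • 1) v ∈ sumIcc P 0 j := by
      have : (T - μ • 1) v = T v - μ • v := by
        simp [LinearMap.sub_apply, LinearMap.smul_apply]
      rw [this]
      exact Submodule.sub_mem _ (flag_inv hP hT hv) (Submodule.smul_mem _ _ hv)
    have hn' : ((T - μ • 1) ^ n) ((T - μ • 1) v) = 0 := by
      rw [← Module.End.mul_apply, ← pow_succ]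
      exact hn
    have h0 : (T - μ • 1) v = 0 := ih hu hn'
    have hTv : T v = μ • v := by
      refine sub_eq_zero.mp ?_
      rw [← h0]; simp [LinearMap.sub_apply, LinearMap.smul_apply]
    exact eig_zero hP hT hjd hμ hv hTv

end Core

section Core2

variable {T : Module.End K V} {α : ℤ → K}

lemma proj_pow_apply (hP : IsDecomposition d P)
    (hT : ∀ j, 0 ≤ j → j ≤ (d : ℤ) → ∀ v ∈ P j, T v - α j • v ∈ sumIcc P 0 (j - 1))
    {m : ℤ} (h0 : 0 ≤ m) (hd : m ≤ (d : ℤ)) (c : K) (n : ℕ) :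
    ∀ v ∈ sumIcc P 0 m, proj hP m (((T - c • 1) ^ n) v) = (α m - c) ^ n • proj hP m v := by
  induction n with
  | zero => intro v _; simp
  | succ n ih =>
    intro v hv
    have hu : (T - c • 1) v ∈ sumIcc P 0 m := by
      have he : (T - c • 1) v = T v - c • v := by
        simp [LinearMap.sub_apply, LinearMap.smul_apply]
      rw [he]
      exact Submodule.sub_mem _ (flag_inv hP hT hv) (Submodule.smul_mem _ _ hv)
    have h1 : ((T - c • 1) ^ (n + 1)) v = ((T - c • 1) ^ n) ((T - c • 1) v) := by
      rw [← Module.End.mul_apply, ← pow_succ]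
    rw [h1, ih _ hu]
    have h2 : proj hP m ((T - c • 1) v) = (α m - c) • proj hP m v := by
      have he : (T - c • 1) v = T v - c • v := by
        simp [LinearMap.sub_apply, LinearMap.smul_apply]
      rw [he, map_sub, map_smul, proj_top_apply hP hT h0 hd hv, sub_smul]
    rw [h2, smul_smul, ← pow_succ]

lemma maxGen_le_aux (hP : IsDecomposition d P)
    (hT : ∀ j, 0 ≤ j → j ≤ (d : ℤ) → ∀ v ∈ P j, T v - α j • v ∈ sumIcc P 0 (j - 1))
    (hinj : ∀ i j : ℤ, 0 ≤ i → i ≤ (d : ℤ) → 0 ≤ j → j ≤ (d : ℤ) → α i = α j → i = j)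
    {j : ℤ} (h0 : 0 ≤ j) (hd : j ≤ (d : ℤ)) :
    ∀ k : ℕ, ∀ m : ℤ, j ≤ m → m ≤ (d : ℤ) → m - j ≤ (k : ℤ) →
      Module.End.maxGenEigenspace T (α j) ⊓ sumIcc P 0 m ≤ sumIcc P 0 j := by
  intro k
  induction k with
  | zero =>
    intro m h1 h2 h3
    have : m = j := by omega
    subst this
    exact inf_le_right
  | succ k ih =>
    intro m h1 h2 h3
    rcases eq_or_lt_of_le h1 with rfl | hlt
    · exact inf_le_right
    intro v hv
    obtain ⟨hvE, hvF⟩ := hv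
    obtain ⟨n, hn⟩ := (Module.End.mem_maxGenEigenspace T (α j) v).mp hvE
    have hpow := proj_pow_apply hP hT (by omega) h2 (α j) n v hvF
    rw [hn, map_zero] at hpow
    have hαne : α m - α j ≠ 0 := by
      intro hc
      have : m = j := hinj m j (by omega) h2 h0 hd (sub_eq_zero.mp hc)
      omega
    have hz : proj hP m v = 0 := by
      rcases smul_eq_zero.mp hpow.symm with h' | h'
      · exact absurd h' (pow_ne_zero _ hαne)
      · exact h'
    have hv' : v ∈ sumIcc P 0 (m - 1) := by
      have := sub_proj_mem hP hvF
      rwa [hz, sub_zero] at this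
    exact ih (m - 1) (by omega) (by omega) (by omega) ⟨hvE, hv'⟩

lemma maxGen_le (hP : IsDecomposition d P)
    (hT : ∀ j, 0 ≤ j → j ≤ (d : ℤ) → ∀ v ∈ P j, T v - α j • v ∈ sumIcc P 0 (j - 1))
    (hinj : ∀ i j : ℤ, 0 ≤ i → i ≤ (d : ℤ) → 0 ≤ j → j ≤ (d : ℤ) → α i = α j → i = j)
    {j : ℤ} (h0 : 0 ≤ j) (hd : j ≤ (d : ℤ)) :
    Module.End.maxGenEigenspace T (α j) ≤ sumIcc P 0 j := by
  have h1 : Module.End.maxGenEigenspace T (α j) ≤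
      Module.End.maxGenEigenspace T (α j) ⊓ sumIcc P 0 (d : ℤ) := by
    rw [sumIcc_eq_top hP]
    exact le_inf le_rfl le_top
  exact h1.trans (maxGen_le_aux hP hT hinj h0 hd ((d : ℤ) - j).toNat (d : ℤ) hd le_rfl
    (Int.self_le_toNat _))

lemma maxGen_bot (hP : IsDecomposition d P)
    (hT : ∀ j, 0 ≤ j → j ≤ (d : ℤ) → ∀ v ∈ P j, T v - α j • v ∈ sumIcc P 0 (j - 1))
    {μ : K} (hμ : ∀ m, 0 ≤ m → m ≤ (d : ℤ) → α m ≠ μ) :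
    Module.End.maxGenEigenspace T μ = ⊥ := by
  rw [eq_bot_iff]
  intro v hv
  obtain ⟨n, hn⟩ := (Module.End.mem_maxGenEigenspace T μ v).mp hv
  have hvtop : v ∈ sumIcc P 0 (d : ℤ) := by rw [sumIcc_eq_top hP]; trivial
  rw [Submodule.mem_bot]
  exact gen_zero hP hT le_rfl hμ hvtop hn

lemma scalar_on_maxGen (hP : IsDecomposition d P)
    (hT : ∀ j, 0 ≤ j → j ≤ (d : ℤ) → ∀ v ∈ P j, T v - α j • v ∈ sumIcc P 0 (j - 1))
    (hinj : ∀ i j : ℤ, 0 ≤ i → i ≤ (d : ℤ) → 0 ≤ j → j ≤ (d : ℤ) → α i = α j → i = j)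
    {j : ℤ} (h0 : 0 ≤ j) (hd : j ≤ (d : ℤ)) {v : V}
    (hv : v ∈ Module.End.maxGenEigenspace T (α j)) : T v = α j • v := by
  have hvGP : v ∈ sumIcc P 0 j := maxGen_le hP hT hinj h0 hd hv
  set u := (T - α j • 1) v with hu
  have hue : u = T v - α j • v := by
    rw [hu]; simp [LinearMap.sub_apply, LinearMap.smul_apply]
  have huGP : u ∈ sumIcc P 0 (j - 1) := by
    rw [hue]; exact flag_step hP hT h0 hd hvGP
  obtain ⟨n, hn⟩ := (Module.End.mem_maxGenEigenspace T (α j) v).mp hv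
  have hun : ((T - α j • 1) ^ n) u = 0 := by
    rw [hu, ← Module.End.mul_apply, ← pow_succ, pow_succ', Module.End.mul_apply, hn, map_zero]
  have hu0 : u = 0 :=
    gen_zero hP hT (by omega) (fun m h1 h2 hc => by
      have : m = j := hinj m j h1 (by omega) h0 hd hc
      omega) huGP hun
  rw [hue] at hu0
  exact sub_eq_zero.mp hu0

lemma exists_eig [FiniteDimensional K V] (hP : IsDecomposition d P)
    (hT : ∀ j, 0 ≤ j → j ≤ (d : ℤ) → ∀ v ∈ P j, T v - α j • v ∈ sumIcc P 0 (j - 1))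
    {j : ℤ} (h0 : 0 ≤ j) (hd : j ≤ (d : ℤ)) :
    ∃ v : V, v ≠ 0 ∧ T v = α j • v := by
  classical
  set N := sumIcc P 0 (j - 1) with hN
  set M := sumIcc P 0 j with hM
  have hNM : N ≤ M := sumIcc_mono P (by omega)
  have hlt : N < M := by
    refine lt_of_le_of_ne hNM ?_
    intro hc
    obtain ⟨x, hx, hx0⟩ := (Submodule.ne_bot_iff _).mp (hP.ne_bot j h0 hd)
    have hxM : x ∈ M := le_sumIcc P h0 le_rfl hx
    have hxN : x ∈ N := by rw [hc]; exact hxM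
    have hdisj := hP.indep j
    have hNle : N ≤ ⨆ (m : ℤ) (_ : m ≠ j), P m :=
      sumIcc_le fun m h1 h2 => le_iSup₂_of_le m (by omega) le_rfl
    exact hx0 (Submodule.mem_bot K |>.mp
      ((hdisj.mono_right hNle).le_bot ⟨hx, hxN⟩))
  have hmap : ∀ x ∈ M, (T - α j • 1) x ∈ N := by
    intro x hx
    have : (T - α j • 1) x = T x - α j • x := by
      simp [LinearMap.sub_apply, LinearMap.smul_apply]
    rw [this, hN]
    exact flag_step hP hT h0 hd hx
  set f : M →ₗ[K] N := (T - α j • 1).restrict hmap with hf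
  by_contra hc
  push_neg at hc
  have hinj : Function.Injective f := by
    rw [← LinearMap.ker_eq_bot, eq_bot_iff]
    intro x hx
    rw [LinearMap.mem_ker] at hx
    have hx0 : (T - α j • 1) (x : V) = 0 := by
      have := congrArg (Subtype.val) hx
      simpa [hf, LinearMap.restrict_apply] using this
    have hTx : T (x : V) = α j • (x : V) := by
      refine sub_eq_zero.mp ?_
      rw [← hx0]; simp [LinearMap.sub_apply, LinearMap.smul_apply]
    have hxv : (x : V) = 0 := by
      by_contra hne
      exact hc (x : V) hne hTx
    rw [Submodule.mem_bot]
    exact Subtype.ext hxv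
  have hle := LinearMap.finrank_le_finrank_of_injective hinj
  have hltr := Submodule.finrank_lt_finrank_of_lt hlt
  omega

lemma eig_mem (hP : IsDecomposition d P)
    (hT : ∀ j, 0 ≤ j → j ≤ (d : ℤ) → ∀ v ∈ P j, T v - α j • v ∈ sumIcc P 0 (j - 1))
    {μ : K} {v : V} (hv0 : v ≠ 0) (hTv : T v = μ • v) :
    ∃ j : ℤ, 0 ≤ j ∧ j ≤ (d : ℤ) ∧ μ = α j := by
  by_contra hc
  push_neg at hc
  have hvtop : v ∈ sumIcc P 0 (d : ℤ) := by rw [sumIcc_eq_top hP]; trivial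
  exact hv0 (eig_zero hP hT le_rfl (fun m h1 h2 => fun he => hc m h1 h2 he.symm) hvtop hTv)

variable {P' : ℤ → Submodule K V}

/-- The main uniqueness engine: an operator admitting lower-triangular structures with
matching diagonals with respect to two decompositions is determined: it equals any
operator acting as `α j` on `(P 0 + ⋯ + P j) ⊓ (P' 0 + ⋯ + P' (d - j))`. -/
theorem core_eq [IsAlgClosed K] [FiniteDimensional K V]
    (hP : IsDecomposition d P) (hP' : IsDecomposition d P')
    (hinj : ∀ i j : ℤ, 0 ≤ i → i ≤ (d : ℤ) → 0 ≤ j → j ≤ (d : ℤ) → α i = α j → i = j)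
    (hT : ∀ j, 0 ≤ j → j ≤ (d : ℤ) → ∀ v ∈ P j, T v - α j • v ∈ sumIcc P 0 (j - 1))
    (hT' : ∀ j, 0 ≤ j → j ≤ (d : ℤ) → ∀ v ∈ P' j,
      T v - α ((d : ℤ) - j) • v ∈ sumIcc P' 0 (j - 1))
    (S : Module.End K V)
    (hS : ∀ j, 0 ≤ j → j ≤ (d : ℤ) →
      ∀ v ∈ sumIcc P 0 j ⊓ sumIcc P' 0 ((d : ℤ) - j), S v = α j • v) :
    T = S := by
  set α' : ℤ → K := fun m => α ((d : ℤ) - m) with hα'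
  have hinj' : ∀ i j : ℤ, 0 ≤ i → i ≤ (d : ℤ) → 0 ≤ j → j ≤ (d : ℤ) → α' i = α' j → i = j := by
    intro i j h1 h2 h3 h4 he
    have := hinj ((d : ℤ) - i) ((d : ℤ) - j) (by omega) (by omega) (by omega) (by omega) he
    omega
  have htop := Module.End.iSup_maxGenEigenspace_eq_top T
  have hle : ∀ μ : K, Module.End.maxGenEigenspace T μ ≤ LinearMap.eqLocus T S := by
    intro μ
    by_cases hμ : ∃ j : ℤ, 0 ≤ j ∧ j ≤ (d : ℤ) ∧ μ = α j
    · obtain ⟨j, h0, hd, rfl⟩ := hμ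
      intro v hv
      have h1 : v ∈ sumIcc P 0 j := maxGen_le hP hT hinj h0 hd hv
      have h2 : v ∈ sumIcc P' 0 ((d : ℤ) - j) := by
        have he : α j = α ((d : ℤ) - ((d : ℤ) - j)) := by congr 1; omega
        refine maxGen_le hP' hT' hinj' (j := (d : ℤ) - j) (by omega) (by omega) ?_
        show v ∈ Module.End.maxGenEigenspace T (α ((d : ℤ) - ((d : ℤ) - j)))
        rwa [← he]
      have h3 : T v = α j • v := scalar_on_maxGen hP hT hinj h0 hd hv
      have h4 : S v = α j • v := hS j h0 hd v ⟨h1, h2⟩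
      refine LinearMap.mem_eqLocus.mpr ?_
      rw [h3, h4]
    · push_neg at hμ
      rw [maxGen_bot hP hT (fun m h1 h2 he => (hμ m h1 h2) he.symm)]
      exact bot_le
  have : (⊤ : Submodule K V) ≤ LinearMap.eqLocus T S := by
    rw [← htop]
    exact iSup_le hle
  exact LinearMap.ext fun v => LinearMap.mem_eqLocus.mp (this Submodule.mem_top)

end Core2

section Solve

lemma proj_out (hP : IsDecomposition d P) {m : ℤ} (hm : m < 0 ∨ (d : ℤ) < m) (w : V) :
    proj hP m w = 0 := by
  have h := proj_mem hP m w
  rcases hm with hm | hm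
  · rw [hP.bot_of_lt m hm] at h; simpa using h
  · rw [hP.bot_of_gt m hm] at h; simpa using h

lemma mem_of_proj (hP : IsDecomposition d P) {n : ℤ} {v : V}
    (hv : ∀ m, m ≠ n → proj hP m v = 0) : v ∈ P n := by
  obtain ⟨s, hs0, hs⟩ := sum_proj hP v
  rw [hs]
  refine Submodule.sum_mem _ fun m hm => ?_
  rcases eq_or_ne m n with rfl | hne
  · exact proj_mem hP m v
  · rw [hv m hne]; exact Submodule.zero_mem _

lemma proj_diag (hP : IsDecomposition d P) {X : Module.End K V} {β : ℤ → K}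
    (hX : ∀ m : ℤ, ∀ v ∈ P m, X v = β m • v) (m : ℤ) (w : V) :
    proj hP m (X w) = β m • proj hP m w := by
  have hle : (⊤ : Submodule K V) ≤
      LinearMap.eqLocus ((proj hP m) ∘ₗ X) (β m • proj hP m) := by
    rw [← hP.sup_eq_top]
    refine iSup_le fun n u hu => LinearMap.mem_eqLocus.mpr ?_
    simp only [LinearMap.comp_apply, LinearMap.smul_apply]
    rw [hX n u hu, map_smul]
    rcases eq_or_ne n m with rfl | hnm
    · rfl
    · rw [proj_apply_ne hP hnm hu, smul_zero, smul_zero]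
  have := LinearMap.mem_eqLocus.mp (hle (Submodule.mem_top (x := w)))
  simpa using this

/-- Extracting components from a `q`-commutation relation: if
`e • X (T v) + f • (T v) = c • v` with `v ∈ P j` and `X` diagonal, then `T v` has
components only in positions `j` (with known value) and `j₀`. -/
lemma solve (hP : IsDecomposition d P) {X T : Module.End K V} {β : ℤ → K}
    (hX : ∀ m : ℤ, ∀ v ∈ P m, X v = β m • v)
    {j j₀ : ℤ} {v : V} (hv : v ∈ P j)
    {e f c : K}
    (heq : e • X (T v) + f • T v = c • v)
    (hg : ∀ m, 0 ≤ m → m ≤ (d : ℤ) → m ≠ j → m ≠ j₀ → e * β m + f ≠ 0)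
    (hgj : e * β j + f ≠ 0) :
    T v - ((e * β j + f)⁻¹ * c) • v ∈ P j₀ := by
  have hcomp : ∀ m : ℤ, (e * β m + f) • proj hP m (T v) =
      if m = j then c • v else 0 := by
    intro m
    have h1 := congrArg (proj hP m) heq
    rw [map_add, map_smul, map_smul, map_smul, proj_diag hP hX m (T v)] at h1
    rw [smul_smul] at h1
    rw [add_smul, h1]
    rcases eq_or_ne m j with rfl | hne
    · rw [proj_apply_same hP hv, if_pos rfl]
    · rw [proj_apply_ne hP (Ne.symm hne) hv, smul_zero, if_neg hne]
  refine mem_of_proj hP fun m hm => ?_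
  rw [map_sub, map_smul]
  rcases eq_or_ne m j with rfl | hmj
  · have h2 := hcomp m
    rw [if_pos rfl] at h2
    have h3 : proj hP m (T v) = ((e * β m + f)⁻¹ * c) • v := by
      have := congrArg (fun x => (e * β m + f)⁻¹ • x) h2
      simpa [smul_smul, inv_mul_cancel₀ hgj] using this
    rw [h3, proj_apply_same hP hv, sub_self]
  · rcases le_or_gt 0 m with h0 | h0
    · rcases le_or_gt m (d : ℤ) with hd | hd
      · have h2 := hcomp m
        rw [if_neg hmj] at h2
        have h4 : proj hP m (T v) = 0 := by
          rcases smul_eq_zero.mp h2 with h' | h'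
          · exact absurd h' (hg m h0 hd hmj hm)
          · exact h'
        rw [h4, proj_apply_ne hP hmj.symm hv, smul_zero, sub_zero]
      · rw [proj_out hP (Or.inr hd), proj_out hP (Or.inr hd), smul_zero, sub_zero]
    · rw [proj_out hP (Or.inl h0), proj_out hP (Or.inl h0), smul_zero, sub_zero]

end Solve

section Rev

lemma rev_decomp (hP : IsDecomposition d P) :
    IsDecomposition d (fun j => P ((d : ℤ) - j)) where
  bot_of_lt i hi := hP.bot_of_gt _ (by omega)
  bot_of_gt i hi := hP.bot_of_lt _ (by omega)
  ne_bot i h1 h2 := hP.ne_bot _ (by omega) (by omega)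
  indep := hP.indep.comp (f := fun j : ℤ => (d : ℤ) - j) fun a b hab => by
    have h : (d : ℤ) - a = (d : ℤ) - b := hab
    omega
  sup_eq_top := by
    rw [← hP.sup_eq_top]
    apply le_antisymm (iSup_le fun j => le_iSup _ ((d : ℤ) - j))
    refine iSup_le fun i => ?_
    have h : P i = P ((d : ℤ) - ((d : ℤ) - i)) := by congr 1; omega
    rw [h]
    exact le_iSup (fun j => P ((d : ℤ) - j)) ((d : ℤ) - i)

lemma sumIcc_rev (P : ℤ → Submodule K V) (d : ℕ) (a b : ℤ) :
    sumIcc (fun j => P ((d : ℤ) - j)) a b = sumIcc P ((d : ℤ) - b) ((d : ℤ) - a) := by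
  apply le_antisymm
  · exact sumIcc_le fun j h1 h2 => le_sumIcc P (by omega) (by omega)
  · refine sumIcc_le fun m h1 h2 => ?_
    have h : P m = P ((d : ℤ) - ((d : ℤ) - m)) := by congr 1; omega
    rw [h]
    exact le_sumIcc (fun j => P ((d : ℤ) - j)) (m := a) (by omega) (by omega)

end Rev

section Misc

lemma schur [IsAlgClosed K] [FiniteDimensional K V] [Nontrivial V]
    {A A' c : Module.End K V}
    (hirr : ∀ W : Submodule K V, W.map A ≤ W → W.map A' ≤ W → W = ⊥ ∨ W = ⊤)
    (h1 : c * A = A * c) (h2 : c * A' = A' * c) : ∃ ζ : K, c = ζ • 1 := by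
  obtain ⟨ζ, hζ⟩ := Module.End.exists_eigenvalue c
  refine ⟨ζ, ?_⟩
  set W := Module.End.eigenspace c ζ with hW
  have hWne : W ≠ ⊥ := hζ
  have hmap : ∀ B : Module.End K V, c * B = B * c → W.map B ≤ W := by
    intro B hB
    intro x hx
    obtain ⟨w, hw, rfl⟩ := Submodule.mem_map.mp hx
    rw [hW, Module.End.mem_eigenspace_iff] at hw ⊢
    have hcb : c (B w) = B (c w) := by
      have := congrArg (fun g : Module.End K V => g w) hB
      simpa [Module.End.mul_apply] using this
    rw [hcb, hw, map_smul]
  rcases hirr W (hmap A h1) (hmap A' h2) with hbot | htop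
  · exact absurd hbot hWne
  · refine LinearMap.ext fun v => ?_
    have hv : v ∈ W := htop ▸ Submodule.mem_top
    rw [hW, Module.End.mem_eigenspace_iff] at hv
    simpa using hv

lemma inv_structure [FiniteDimensional K V] (hP : IsDecomposition d P)
    {T T' : Module.End K V} {α : ℤ → K} {ζ : K} (hζ : ζ ≠ 0)
    (hα : ∀ j, 0 ≤ j → j ≤ (d : ℤ) → α j ≠ 0)
    (hT : ∀ j, 0 ≤ j → j ≤ (d : ℤ) → ∀ v ∈ P j, T v - α j • v ∈ sumIcc P 0 (j - 1))
    (hTT' : T * T' = ζ • 1) (hT'T : T' * T = ζ • 1) :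
    ∀ j, 0 ≤ j → j ≤ (d : ℤ) → ∀ v ∈ P j,
      T' v - (ζ * (α j)⁻¹) • v ∈ sumIcc P 0 (j - 1) := by
  have hinjT : Function.Injective T := by
    intro x y hxy
    have e1 : ζ • x = ζ • y := by
      have l1 : (T' * T) x = ζ • x := by rw [hT'T]; simp
      have l2 : (T' * T) y = ζ • y := by rw [hT'T]; simp
      rw [← l1, ← l2]
      simp [Module.End.mul_apply, hxy]
    exact smul_right_injective V hζ e1
  intro j h0 hd v hv
  set M := sumIcc P 0 j with hM
  have hTM : M.map T ≤ M := by
    rintro _ ⟨w, hw, rfl⟩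
    exact flag_inv hP hT hw
  have hsurjT : Function.Surjective T := (LinearMap.injective_iff_surjective).mp hinjT
  set eT := LinearEquiv.ofBijective T ⟨hinjT, hsurjT⟩ with heT
  have hmapM : M.map T = M := by
    refine Submodule.eq_of_le_of_finrank_le hTM ?_
    have : M.map T = M.map (eT : V →ₗ[K] V) := by
      congr 1
    rw [this, LinearEquiv.finrank_map_eq]
  have hT'v : T' v ∈ M := by
    have hvM : v ∈ M := le_sumIcc P h0 le_rfl hv
    rw [← hmapM] at hvM
    obtain ⟨z, hz, rfl⟩ := hvM
    have : T' (T z) = ζ • z := by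
      have := congrArg (fun g : Module.End K V => g z) hT'T
      simpa [Module.End.mul_apply] using this
    rw [this]
    exact Submodule.smul_mem _ _ hz
  have h1 : proj hP j (T (T' v)) = α j • proj hP j (T' v) :=
    proj_top_apply hP hT h0 hd hT'v
  have h2 : T (T' v) = ζ • v := by
    have := congrArg (fun g : Module.End K V => g v) hTT'
    simpa [Module.End.mul_apply] using this
  rw [h2, map_smul, proj_apply_same hP hv] at h1
  have h3 : proj hP j (T' v) = (ζ * (α j)⁻¹) • v := by
    have h4 := congrArg (fun x => (α j)⁻¹ • x) h1
    simp only [smul_smul] at h4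
    rw [inv_mul_cancel₀ (hα j h0 hd), one_smul] at h4
    rw [← h4]
    congr 1
    ring
  have h5 := sub_proj_mem hP hT'v
  rwa [h3] at h5

end Misc

section Shapes

variable {q : K}

lemma q_zpow_eq_zero {q : K} (hq0 : q ≠ 0) (hq : ∀ n : ℕ, 0 < n → q ^ n ≠ 1) :
    ∀ n : ℤ, q ^ n = 1 → n = 0 := by
  intro n hn
  rcases lt_trichotomy n 0 with h | h | h
  · exfalso
    have h1 : q ^ (-n) = 1 := by
      rw [zpow_neg, hn, inv_one]
    have h2 : ((-n).toNat : ℤ) = -n := Int.toNat_of_nonneg (by omega)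
    have h3 : q ^ ((-n).toNat) = 1 := by
      rw [← zpow_natCast, h2, h1]
    exact hq (-n).toNat (by omega) h3
  · exact h
  · exfalso
    have h2 : (n.toNat : ℤ) = n := Int.toNat_of_nonneg (by omega)
    have h3 : q ^ (n.toNat) = 1 := by
      rw [← zpow_natCast, h2, hn]
    exact hq n.toNat (by omega) h3

lemma q_zpow_inj {q : K} (hq0 : q ≠ 0) (hq : ∀ n : ℕ, 0 < n → q ^ n ≠ 1) :
    ∀ s t : ℤ, q ^ s = q ^ t → s = t := by
  intro s t hst
  have h1 : q ^ (s - t) = 1 := by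
    rw [zpow_sub₀ hq0, hst, div_self (zpow_ne_zero _ hq0)]
  have := q_zpow_eq_zero hq0 hq _ h1
  omega

lemma q_sub_inv_ne {q : K} (hq0 : q ≠ 0) (hq : ∀ n : ℕ, 0 < n → q ^ n ≠ 1) :
    q - q⁻¹ ≠ 0 := by
  rw [sub_ne_zero]
  intro hqq
  have h2 : q ^ (2 : ℕ) = 1 := by
    rw [sq]
    nth_rewrite 2 [hqq]
    exact mul_inv_cancel₀ hq0
  exact hq 2 (by norm_num) h2

lemma shapeA (hP : IsDecomposition d P) (hq0 : q ≠ 0) (hqs : q - q⁻¹ ≠ 0)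
    (hzinj : ∀ s t : ℤ, q ^ s = q ^ t → s = t)
    {X T : Module.End K V} {nf : ℤ → ℤ}
    (hX : ∀ m : ℤ, ∀ v ∈ P m, X v = (q ^ (nf m)) • v)
    {j j₀ : ℤ} {v : V} (hv : v ∈ P j)
    (hrel : q • X (T v) - q⁻¹ • ((q ^ (nf j)) • T v) = (q - q⁻¹) • v)
    (hnf : ∀ m, 0 ≤ m → m ≤ (d : ℤ) → m ≠ j → nf m + 1 = nf j - 1 → m = j₀) :
    T v - (q ^ (-(nf j))) • v ∈ P j₀ := by
  have key := solve hP (T := T) hX hv (e := q) (f := -(q⁻¹ * q ^ (nf j))) (c := q - q⁻¹)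
    (j₀ := j₀) ?heq ?hg ?hgj
  case heq =>
    rw [neg_smul, ← sub_eq_add_neg, mul_smul]
    exact hrel
  case hg =>
    intro m h0 hd' hmj hmj0 hzero
    refine hmj0 (hnf m h0 hd' hmj (hzinj _ _ ?_))
    rw [zpow_add_one₀ hq0, zpow_sub_one₀ hq0]
    linear_combination hzero
  case hgj =>
    have h1 : q * q ^ (nf j) + -(q⁻¹ * q ^ (nf j)) = q ^ (nf j) * (q - q⁻¹) := by ring
    rw [h1]
    exact mul_ne_zero (zpow_ne_zero _ hq0) hqs
  have hσ : (q * q ^ (nf j) + -(q⁻¹ * q ^ (nf j)))⁻¹ * (q - q⁻¹) = q ^ (-(nf j)) := by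
    have h1 : q * q ^ (nf j) + -(q⁻¹ * q ^ (nf j)) = q ^ (nf j) * (q - q⁻¹) := by ring
    rw [h1, mul_inv, mul_assoc, inv_mul_cancel₀ hqs, mul_one, zpow_neg]
  rwa [hσ] at key

lemma shapeB (hP : IsDecomposition d P) (hq0 : q ≠ 0) (hqs : q - q⁻¹ ≠ 0)
    (hzinj : ∀ s t : ℤ, q ^ s = q ^ t → s = t)
    {X T : Module.End K V} {nf : ℤ → ℤ}
    (hX : ∀ m : ℤ, ∀ v ∈ P m, X v = (q ^ (nf m)) • v)
    {j j₀ : ℤ} {v : V} (hv : v ∈ P j)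
    (hrel : q • ((q ^ (nf j)) • T v) - q⁻¹ • X (T v) = (q - q⁻¹) • v)
    (hnf : ∀ m, 0 ≤ m → m ≤ (d : ℤ) → m ≠ j → nf j + 1 = nf m - 1 → m = j₀) :
    T v - (q ^ (-(nf j))) • v ∈ P j₀ := by
  have key := solve hP (T := T) hX hv (e := -q⁻¹) (f := q * q ^ (nf j)) (c := q - q⁻¹)
    (j₀ := j₀) ?heq ?hg ?hgj
  case heq =>
    rw [neg_smul, add_comm, ← sub_eq_add_neg, mul_smul]
    exact hrel
  case hg =>
    intro m h0 hd' hmj hmj0 hzero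
    refine hmj0 (hnf m h0 hd' hmj (hzinj _ _ ?_))
    rw [zpow_add_one₀ hq0, zpow_sub_one₀ hq0]
    linear_combination hzero
  case hgj =>
    have h1 : -q⁻¹ * q ^ (nf j) + q * q ^ (nf j) = q ^ (nf j) * (q - q⁻¹) := by ring
    rw [h1]
    exact mul_ne_zero (zpow_ne_zero _ hq0) hqs
  have hσ : (-q⁻¹ * q ^ (nf j) + q * q ^ (nf j))⁻¹ * (q - q⁻¹) = q ^ (-(nf j)) := by
    have h1 : -q⁻¹ * q ^ (nf j) + q * q ^ (nf j) = q ^ (nf j) * (q - q⁻¹) := by ring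
    rw [h1, mul_inv, mul_assoc, inv_mul_cancel₀ hqs, mul_one, zpow_neg]
  rwa [hσ] at key

lemma mem_flag_of_mem_single (hP : IsDecomposition d P) {j : ℤ} {x : V}
    (hx : x ∈ P (j - 1)) : x ∈ sumIcc P 0 (j - 1) := by
  rcases le_or_gt 1 j with hj | hj
  · exact le_sumIcc P (by omega) le_rfl hx
  · rw [hP.bot_of_lt (j - 1) (by omega)] at hx
    simp only [Submodule.mem_bot] at hx
    rw [hx]
    exact Submodule.zero_mem _

end Shapes

end TDAux

end TDAux

/-- uniqueness of the module structure in which `a y₀⁺` acts as `A`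
and `a* y₁⁺` acts as `A*`: necessarily `k₀ = K*, k₁ = K*⁻¹, k₀⁻¹ = K*⁻¹, k₁⁻¹ = K*`,
`b* y₀⁻ = B*` and `b y₁⁻ = B`. -/
theorem stmt18 {K : Type*} [Field K] [IsAlgClosed K]
    {V : Type*} [AddCommGroup V] [Module K V] [FiniteDimensional K V] [Nontrivial V]
    (q : K) (hq0 : q ≠ 0) (hq : ∀ n : ℕ, 0 < n → q ^ n ≠ 1)
    (A A' : Module.End K V) (d : ℕ) (Vs Vs' : ℤ → Submodule K V) (θ θ' : ℤ → K)
    (hTD : IsTridiagonalPair A A' d Vs Vs' θ θ')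
    (a a' : K) (ha : a ≠ 0) (ha' : a' ≠ 0)
    (hθ : ∀ i : ℤ, 0 ≤ i → i ≤ (d : ℤ) → θ i = a * q ^ (2 * i - (d : ℤ)))
    (hθ' : ∀ i : ℤ, 0 ≤ i → i ≤ (d : ℤ) → θ' i = a' * q ^ ((d : ℤ) - 2 * i))
    (b b' : K) (hb : b ≠ 0) (hb' : b' ≠ 0)
    (B : Module.End K V)
    (hB : ∀ i : ℤ, 0 ≤ i → i ≤ (d : ℤ) → ∀ v ∈ dec0s0 d Vs Vs' i,
      B v = (b * q ^ (2 * i - (d : ℤ))) • v)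
    (B' : Module.End K V)
    (hB' : ∀ i : ℤ, 0 ≤ i → i ≤ (d : ℤ) → ∀ v ∈ decDsD d Vs Vs' i,
      B' v = (b' * q ^ ((d : ℤ) - 2 * i)) • v)
    (Ks : Module.End K V)
    (hKs : ∀ i : ℤ, 0 ≤ i → i ≤ (d : ℤ) → ∀ v ∈ decDs0 d Vs Vs' i,
      Ks v = (q ^ (2 * i - (d : ℤ))) • v)
    (Ksinv : Module.End K V)
    (hKsinv1 : Ks * Ksinv = 1) (hKsinv2 : Ksinv * Ks = 1)
    (yp ym kk kkinv : Fin 2 → Module.End K V)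
    (h : AlternateRelations q yp ym kk kkinv)
    (hA : a • yp 0 = A) (hA' : a' • yp 1 = A') :
    kk 0 = Ks ∧ kk 1 = Ksinv ∧ kkinv 0 = Ksinv ∧ kkinv 1 = Ks ∧
    b' • ym 0 = B' ∧ b • ym 1 = B := by
  classical
  have hqs : q - q⁻¹ ≠ 0 := TDAux.q_sub_inv_ne hq0 hq
  have hzinj : ∀ s t : ℤ, q ^ s = q ^ t → s = t := TDAux.q_zpow_inj hq0 hq
  have hVs := hTD.decompV
  have hVs' := hTD.decompV'
  -- diagonal action of `yp 0` on the eigenspaces of `A`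
  have hyp0 : ∀ m : ℤ, ∀ v ∈ Vs m, yp 0 v = (q ^ (2 * m - (d : ℤ))) • v := by
    intro m v hv
    rcases lt_or_ge m 0 with hm | hm
    · rw [hVs.bot_of_lt m hm] at hv
      simp only [Submodule.mem_bot] at hv
      rw [hv]; simp
    rcases le_or_gt m (d : ℤ) with hmd | hmd
    · have h1 : A v = θ m • v := hTD.eig m v hv
      rw [hθ m hm hmd] at h1
      have h2 : A v = a • yp 0 v := by rw [← hA]; rfl
      rw [h1, mul_smul] at h2
      exact (smul_right_injective V ha h2).symm
    · rw [hVs.bot_of_gt m hmd] at hv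
      simp only [Submodule.mem_bot] at hv
      rw [hv]; simp
  -- diagonal action of `yp 1` on the eigenspaces of `A'`
  have hyp1 : ∀ m : ℤ, ∀ v ∈ Vs' m, yp 1 v = (q ^ ((d : ℤ) - 2 * m)) • v := by
    intro m v hv
    rcases lt_or_ge m 0 with hm | hm
    · rw [hVs'.bot_of_lt m hm] at hv
      simp only [Submodule.mem_bot] at hv
      rw [hv]; simp
    rcases le_or_gt m (d : ℤ) with hmd | hmd
    · have h1 : A' v = θ' m • v := hTD.eig' m v hv
      rw [hθ' m hm hmd] at h1
      have h2 : A' v = a' • yp 1 v := by rw [← hA']; rfl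
      rw [h1, mul_smul] at h2
      exact (smul_right_injective V ha' h2).symm
    · rw [hVs'.bot_of_gt m hmd] at hv
      simp only [Submodule.mem_bot] at hv
      rw [hv]; simp
  -- helper: applying a relation to a vector
  have happly : ∀ R S E : Module.End K V,
      (q - q⁻¹)⁻¹ • (q • (R * S) - q⁻¹ • (S * R)) = E →
      ∀ v : V, q • R (S v) - q⁻¹ • S (R v) = (q - q⁻¹) • E v := by
    intro R S E hRS v
    have h1 := congrArg (fun g : Module.End K V => g v) hRS
    simp only [LinearMap.smul_apply, LinearMap.sub_apply, Module.End.mul_apply] at h1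
    calc q • R (S v) - q⁻¹ • S (R v)
        = (q - q⁻¹) • ((q - q⁻¹)⁻¹ • (q • R (S v) - q⁻¹ • S (R v))) := by
          rw [smul_smul, mul_inv_cancel₀ hqs, one_smul]
      _ = (q - q⁻¹) • E v := by rw [h1]
  -- triangular structure of `kk 0` with respect to `Vs`
  have hk0single : ∀ j : ℤ, 0 ≤ j → j ≤ (d : ℤ) → ∀ v ∈ Vs j,
      kk 0 v - (q ^ ((d : ℤ) - 2 * j)) • v ∈ Vs (j - 1) := by
    intro j h0 hd' v hv
    have hr := happly (yp 0) (kk 0) 1 (h.rel_yp_k 0) v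
    rw [Module.End.one_apply, hyp0 j v hv, map_smul] at hr
    have key := TDAux.shapeA hVs hq0 hqs hzinj (nf := fun m => 2 * m - (d : ℤ))
      (T := kk 0) hyp0 hv hr (j₀ := j - 1)
      (fun m hm0 hmd hmj he => by beta_reduce at he; omega)
    rwa [show (-(2 * j - (d : ℤ))) = (d : ℤ) - 2 * j by ring] at key
  -- triangular structure of `kk 1` with respect to `Vs'`
  have hk1single : ∀ j : ℤ, 0 ≤ j → j ≤ (d : ℤ) → ∀ v ∈ Vs' j,
      kk 1 v - (q ^ (2 * j - (d : ℤ))) • v ∈ Vs' (j + 1) := by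
    intro j h0 hd' v hv
    have hr := happly (yp 1) (kk 1) 1 (h.rel_yp_k 1) v
    rw [Module.End.one_apply, hyp1 j v hv, map_smul] at hr
    have key := TDAux.shapeA hVs' hq0 hqs hzinj (nf := fun m => (d : ℤ) - 2 * m)
      (T := kk 1) hyp1 hv hr (j₀ := j + 1)
      (fun m hm0 hmd hmj he => by beta_reduce at he; omega)
    rwa [show (-((d : ℤ) - 2 * j)) = 2 * j - (d : ℤ) by ring] at key
  -- `kk 0 * kk 1` is a scalar
  have hcA : (kk 0 * kk 1) * A = A * (kk 0 * kk 1) := by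
    rw [← hA, mul_smul_comm, h.central_yp 0, smul_mul_assoc]
  have hcA' : (kk 0 * kk 1) * A' = A' * (kk 0 * kk 1) := by
    rw [← hA', mul_smul_comm, h.central_yp 1, smul_mul_assoc]
  obtain ⟨ζ, hζ⟩ := TDAux.schur hTD.irred hcA hcA'
  have hζ0 : ζ ≠ 0 := by
    intro h0
    rw [h0, zero_smul] at hζ
    have h1 : kk 1 = 0 := by
      calc kk 1 = 1 * kk 1 := (one_mul _).symm
        _ = (kkinv 0 * kk 0) * kk 1 := by rw [h.kinv_k 0]
        _ = kkinv 0 * (kk 0 * kk 1) := mul_assoc _ _ _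
        _ = 0 := by rw [hζ, mul_zero]
    have h2 : (1 : Module.End K V) = 0 := by rw [← h.k_kinv 1, h1, zero_mul]
    obtain ⟨v, hv⟩ := exists_ne (0 : V)
    have h3 := congrArg (fun g : Module.End K V => g v) h2
    simpa using hv (by simpa using h3)
  have hk1k0 : kk 1 * kk 0 = ζ • 1 := by
    calc kk 1 * kk 0 = (kkinv 0 * kk 0) * (kk 1 * kk 0) := by rw [h.kinv_k 0, one_mul]
      _ = kkinv 0 * ((kk 0 * kk 1) * kk 0) := by
          rw [mul_assoc, ← mul_assoc (kk 0)]
      _ = kkinv 0 * ((ζ • 1) * kk 0) := by rw [hζ]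
      _ = ζ • (kkinv 0 * kk 0) := by rw [smul_mul_assoc, one_mul, mul_smul_comm]
      _ = ζ • 1 := by rw [h.kinv_k 0]
  -- flag versions of the structures
  have hk0St : ∀ j, 0 ≤ j → j ≤ (d : ℤ) → ∀ v ∈ Vs j,
      kk 0 v - (q ^ ((d : ℤ) - 2 * j)) • v ∈ sumIcc Vs 0 (j - 1) :=
    fun j h0 hd' v hv => TDAux.mem_flag_of_mem_single hVs (hk0single j h0 hd' v hv)
  have hk1VsSt : ∀ j, 0 ≤ j → j ≤ (d : ℤ) → ∀ v ∈ Vs j,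
      kk 1 v - (ζ * (q ^ ((d : ℤ) - 2 * j))⁻¹) • v ∈ sumIcc Vs 0 (j - 1) :=
    TDAux.inv_structure hVs hζ0 (fun j _ _ => zpow_ne_zero _ hq0) hk0St hζ hk1k0
  set RVs' : ℤ → Submodule K V := fun j => Vs' ((d : ℤ) - j) with hRVs'def
  have hRVs' : IsDecomposition d RVs' := TDAux.rev_decomp hVs'
  have hk1RSt : ∀ j, 0 ≤ j → j ≤ (d : ℤ) → ∀ v ∈ RVs' j,
      kk 1 v - (q ^ (2 * ((d : ℤ) - j) - (d : ℤ))) • v ∈ sumIcc RVs' 0 (j - 1) := by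
    intro j h0 hd' v hv
    have key := hk1single ((d : ℤ) - j) (by omega) (by omega) v hv
    have heq : Vs' ((d : ℤ) - j + 1) = RVs' (j - 1) := by
      rw [hRVs'def]; congr 1; omega
    rw [heq] at key
    exact TDAux.mem_flag_of_mem_single hRVs' key
  -- ζ = 1
  have hζ1 : ζ = 1 := by
    obtain ⟨v1, hv1ne, hv1⟩ := TDAux.exists_eig hRVs'
      (α := fun j => q ^ (2 * ((d : ℤ) - j) - (d : ℤ))) hk1RSt
      (j := (d : ℤ)) (by omega) le_rfl
    obtain ⟨j1, hj10, hj1d, hj1⟩ := TDAux.eig_mem hVs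
      (α := fun j => ζ * (q ^ ((d : ℤ) - 2 * j))⁻¹) hk1VsSt hv1ne hv1
    obtain ⟨v2, hv2ne, hv2⟩ := TDAux.exists_eig hVs
      (α := fun j => ζ * (q ^ ((d : ℤ) - 2 * j))⁻¹) hk1VsSt
      (j := 0) le_rfl (by omega)
    obtain ⟨j2, hj20, hj2d, hj2⟩ := TDAux.eig_mem hRVs'
      (α := fun j => q ^ (2 * ((d : ℤ) - j) - (d : ℤ))) hk1RSt hv2ne hv2
    -- hj1 : q ^ (2*(d-d)-d) = ζ * (q ^ (d-2*j1))⁻¹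
    -- hj2 : ζ * (q ^ (d-2*0))⁻¹ = q ^ (2*(d-j2)-d)
    have e1 : ζ = q ^ (-(2 * j1)) := by
      calc ζ = ζ * ((q ^ ((d : ℤ) - 2 * j1))⁻¹ * q ^ ((d : ℤ) - 2 * j1)) := by
            rw [inv_mul_cancel₀ (zpow_ne_zero _ hq0), mul_one]
        _ = (ζ * (q ^ ((d : ℤ) - 2 * j1))⁻¹) * q ^ ((d : ℤ) - 2 * j1) := by ring
        _ = q ^ (2 * ((d : ℤ) - (d : ℤ)) - (d : ℤ)) * q ^ ((d : ℤ) - 2 * j1) := by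
            rw [← hj1]
        _ = q ^ (-(2 * j1)) := by rw [← zpow_add₀ hq0]; congr 1; ring
    have e2 : ζ = q ^ (2 * ((d : ℤ) - j2)) := by
      calc ζ = ζ * ((q ^ ((d : ℤ) - 2 * (0 : ℤ)))⁻¹ * q ^ ((d : ℤ) - 2 * (0 : ℤ))) := by
            rw [inv_mul_cancel₀ (zpow_ne_zero _ hq0), mul_one]
        _ = (ζ * (q ^ ((d : ℤ) - 2 * (0 : ℤ)))⁻¹) * q ^ ((d : ℤ) - 2 * (0 : ℤ)) := by ring
        _ = q ^ (2 * ((d : ℤ) - j2) - (d : ℤ)) * q ^ ((d : ℤ) - 2 * (0 : ℤ)) := by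
            rw [hj2]
        _ = q ^ (2 * ((d : ℤ) - j2)) := by rw [← zpow_add₀ hq0]; congr 1; ring
    have e3 : -(2 * j1) = 2 * ((d : ℤ) - j2) := hzinj _ _ (e1.symm.trans e2)
    have hj1z : j1 = 0 := by omega
    rw [e1, hj1z]
    norm_num
  have hk0k1 : kk 0 * kk 1 = 1 := by rw [hζ, hζ1, one_smul]
  have hk1k0' : kk 1 * kk 0 = 1 := by rw [hk1k0, hζ1, one_smul]
  have hkinv0 : kkinv 0 = kk 1 := by
    calc kkinv 0 = kkinv 0 * 1 := (mul_one _).symm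
      _ = kkinv 0 * (kk 0 * kk 1) := by rw [hk0k1]
      _ = (kkinv 0 * kk 0) * kk 1 := (mul_assoc _ _ _).symm
      _ = kk 1 := by rw [h.kinv_k 0, one_mul]
  have hkinv1 : kkinv 1 = kk 0 := by
    calc kkinv 1 = 1 * kkinv 1 := (one_mul _).symm
      _ = (kk 0 * kk 1) * kkinv 1 := by rw [hk0k1]
      _ = kk 0 * (kk 1 * kkinv 1) := mul_assoc _ _ _
      _ = kk 0 := by rw [h.k_kinv 1, mul_one]
  -- `kk 1 = Ksinv` via the core uniqueness engine
  have hKsinvS : ∀ j, 0 ≤ j → j ≤ (d : ℤ) →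
      ∀ v ∈ sumIcc Vs 0 j ⊓ sumIcc RVs' 0 ((d : ℤ) - j),
      Ksinv v = (q ^ (2 * j - (d : ℤ))) • v := by
    intro j h0 hd' v hv
    obtain ⟨hv1, hv2⟩ := hv
    have hv2' : v ∈ sumIcc Vs' ((d : ℤ) - ((d : ℤ) - j)) ((d : ℤ) - 0) := by
      rw [hRVs'def, TDAux.sumIcc_rev Vs' d 0 ((d : ℤ) - j)] at hv2
      exact hv2
    have hvdec : v ∈ decDs0 d Vs Vs' ((d : ℤ) - j) := by
      refine ⟨?_, ?_⟩
      · have heq : sumIcc Vs' ((d : ℤ) - ((d : ℤ) - j)) ((d : ℤ) - 0) =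
            sumIcc Vs' ((d : ℤ) - ((d : ℤ) - j)) (d : ℤ) := by norm_num
        rw [heq] at hv2'
        exact hv2'
      · have heq : ((d : ℤ) - ((d : ℤ) - j)) = j := by omega
        rw [heq]
        exact hv1
    have hKsv := hKs ((d : ℤ) - j) (by omega) (by omega) v hvdec
    have h1 : Ksinv (Ks v) = v := by
      have := congrArg (fun g : Module.End K V => g v) hKsinv2
      simpa using this
    rw [hKsv, map_smul] at h1
    calc Ksinv v
        = (q ^ (2 * j - (d : ℤ))) • ((q ^ (2 * ((d : ℤ) - j) - (d : ℤ))) • Ksinv v) := by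
          rw [smul_smul, ← zpow_add₀ hq0,
            show (2 * j - (d : ℤ)) + (2 * ((d : ℤ) - j) - (d : ℤ)) = 0 by ring,
            zpow_zero, one_smul]
      _ = (q ^ (2 * j - (d : ℤ))) • v := by rw [h1]
  have hk1Ksinv : kk 1 = Ksinv := by
    refine TDAux.core_eq hVs hRVs' (α := fun j => q ^ (2 * j - (d : ℤ)))
      (fun i j h1 h2 h3 h4 he => by have := hzinj _ _ he; omega)
      ?_ ?_ Ksinv hKsinvS
    · intro j h0 hd' v hv
      have key := hk1VsSt j h0 hd' v hv
      rw [hζ1, one_mul, ← zpow_neg,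
        show (-(((d : ℤ)) - 2 * j)) = 2 * j - (d : ℤ) by ring] at key
      exact key
    · intro j h0 hd' v hv
      have key := hk1RSt j h0 hd' v hv
      exact key
  have hk0Ks : kk 0 = Ks := by
    calc kk 0 = kk 0 * 1 := (mul_one _).symm
      _ = kk 0 * (Ksinv * Ks) := by rw [hKsinv2]
      _ = (kk 0 * Ksinv) * Ks := (mul_assoc _ _ _).symm
      _ = (kk 0 * kk 1) * Ks := by rw [hk1Ksinv]
      _ = 1 * Ks := by rw [hk0k1]
      _ = Ks := one_mul _
  have hkkinv : kkinv 0 * kkinv 1 = 1 := by rw [hkinv0, hkinv1, hk1k0']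
  -- structure of `ym 1`
  have hym1Vs' : ∀ j : ℤ, 0 ≤ j → j ≤ (d : ℤ) → ∀ v ∈ Vs' j,
      ym 1 v - (q ^ (2 * j - (d : ℤ))) • v ∈ Vs' (j - 1) := by
    intro j h0 hd' v hv
    have hr := happly (ym 1) (yp 1) 1 (h.rel_ym_yp 1) v
    rw [Module.End.one_apply, hyp1 j v hv, map_smul] at hr
    have key := TDAux.shapeB hVs' hq0 hqs hzinj (nf := fun m => (d : ℤ) - 2 * m)
      (T := ym 1) hyp1 hv hr (j₀ := j - 1)
      (fun m hm0 hmd hmj he => by beta_reduce at he; omega)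
    rwa [show (-((d : ℤ) - 2 * j)) = 2 * j - (d : ℤ) by ring] at key
  have hym1Vs : ∀ j : ℤ, 0 ≤ j → j ≤ (d : ℤ) → ∀ v ∈ Vs j,
      ym 1 v - (q ^ ((d : ℤ) - 2 * j)) • v ∈ Vs (j - 1) := by
    intro j h0 hd' v hv
    have hr := happly (yp 0) (ym 1) (kkinv 0 * kkinv 1)
      (h.rel_yp_ym 0 1 (by decide)) v
    rw [hkkinv, Module.End.one_apply, hyp0 j v hv, map_smul] at hr
    have key := TDAux.shapeA hVs hq0 hqs hzinj (nf := fun m => 2 * m - (d : ℤ))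
      (T := ym 1) hyp0 hv hr (j₀ := j - 1)
      (fun m hm0 hmd hmj he => by beta_reduce at he; omega)
    rwa [show (-(2 * j - (d : ℤ))) = (d : ℤ) - 2 * j by ring] at key
  have hym1 : ym 1 = b⁻¹ • B := by
    refine TDAux.core_eq hVs' hVs (α := fun j => q ^ (2 * j - (d : ℤ)))
      (fun i j h1 h2 h3 h4 he => by have := hzinj _ _ he; omega)
      ?_ ?_ (b⁻¹ • B) ?_
    · intro j h0 hd' v hv
      exact TDAux.mem_flag_of_mem_single hVs' (hym1Vs' j h0 hd' v hv)
    · intro j h0 hd' v hv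
      have key := TDAux.mem_flag_of_mem_single hVs (hym1Vs j h0 hd' v hv)
      rwa [show ((d : ℤ) - 2 * j) = 2 * ((d : ℤ) - j) - (d : ℤ) by ring] at key
    · intro j h0 hd' v hv
      have hB1 := hB j h0 hd' v hv
      have : (b⁻¹ • B) v = b⁻¹ • B v := rfl
      rw [this, hB1, smul_smul, ← mul_assoc, inv_mul_cancel₀ hb, one_mul]
  have hym1f : b • ym 1 = B := by
    rw [hym1, smul_smul, mul_inv_cancel₀ hb, one_smul]
  -- structure of `ym 0`
  have hym0Vs : ∀ j : ℤ, 0 ≤ j → j ≤ (d : ℤ) → ∀ v ∈ Vs j,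
      ym 0 v - (q ^ ((d : ℤ) - 2 * j)) • v ∈ Vs (j + 1) := by
    intro j h0 hd' v hv
    have hr := happly (ym 0) (yp 0) 1 (h.rel_ym_yp 0) v
    rw [Module.End.one_apply, hyp0 j v hv, map_smul] at hr
    have key := TDAux.shapeB hVs hq0 hqs hzinj (nf := fun m => 2 * m - (d : ℤ))
      (T := ym 0) hyp0 hv hr (j₀ := j + 1)
      (fun m hm0 hmd hmj he => by beta_reduce at he; omega)
    rwa [show (-(2 * j - (d : ℤ))) = (d : ℤ) - 2 * j by ring] at key
  have hym0Vs' : ∀ j : ℤ, 0 ≤ j → j ≤ (d : ℤ) → ∀ v ∈ Vs' j,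
      ym 0 v - (q ^ (2 * j - (d : ℤ))) • v ∈ Vs' (j + 1) := by
    intro j h0 hd' v hv
    have hr := happly (yp 1) (ym 0) (kkinv 0 * kkinv 1)
      (h.rel_yp_ym 1 0 (by decide)) v
    rw [hkkinv, Module.End.one_apply, hyp1 j v hv, map_smul] at hr
    have key := TDAux.shapeA hVs' hq0 hqs hzinj (nf := fun m => (d : ℤ) - 2 * m)
      (T := ym 0) hyp1 hv hr (j₀ := j + 1)
      (fun m hm0 hmd hmj he => by beta_reduce at he; omega)
    rwa [show (-((d : ℤ) - 2 * j)) = 2 * j - (d : ℤ) by ring] at key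
  set RVs : ℤ → Submodule K V := fun j => Vs ((d : ℤ) - j) with hRVsdef
  have hRVs : IsDecomposition d RVs := TDAux.rev_decomp hVs
  have hym0 : ym 0 = b'⁻¹ • B' := by
    refine TDAux.core_eq hRVs hRVs' (α := fun j => q ^ (2 * j - (d : ℤ)))
      (fun i j h1 h2 h3 h4 he => by have := hzinj _ _ he; omega)
      ?_ ?_ (b'⁻¹ • B') ?_
    · intro j h0 hd' v hv
      have key := hym0Vs ((d : ℤ) - j) (by omega) (by omega) v hv
      have heq : Vs ((d : ℤ) - j + 1) = RVs (j - 1) := by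
        rw [hRVsdef]; congr 1; omega
      rw [heq,
        show ((d : ℤ) - 2 * ((d : ℤ) - j)) = 2 * j - (d : ℤ) by ring] at key
      exact TDAux.mem_flag_of_mem_single hRVs key
    · intro j h0 hd' v hv
      have key := hym0Vs' ((d : ℤ) - j) (by omega) (by omega) v hv
      have heq : Vs' ((d : ℤ) - j + 1) = RVs' (j - 1) := by
        rw [hRVs'def]; congr 1; omega
      rw [heq] at key
      exact TDAux.mem_flag_of_mem_single hRVs' key
    · intro j h0 hd' v hv
      obtain ⟨hv1, hv2⟩ := hv
      have hv1' : v ∈ sumIcc Vs ((d : ℤ) - j) ((d : ℤ) - 0) := by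
        rw [hRVsdef, TDAux.sumIcc_rev Vs d 0 j] at hv1
        exact hv1
      have hv2' : v ∈ sumIcc Vs' ((d : ℤ) - ((d : ℤ) - j)) ((d : ℤ) - 0) := by
        rw [hRVs'def, TDAux.sumIcc_rev Vs' d 0 ((d : ℤ) - j)] at hv2
        exact hv2
      have hvdec : v ∈ decDsD d Vs Vs' ((d : ℤ) - j) := by
        refine ⟨?_, ?_⟩
        · have heq : sumIcc Vs' ((d : ℤ) - ((d : ℤ) - j)) ((d : ℤ) - 0) =
              sumIcc Vs' ((d : ℤ) - ((d : ℤ) - j)) (d : ℤ) := by norm_num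
          rw [heq] at hv2'
          exact hv2'
        · have heq : sumIcc Vs ((d : ℤ) - j) ((d : ℤ) - 0) =
              sumIcc Vs ((d : ℤ) - j) (d : ℤ) := by norm_num
          rw [heq] at hv1'
          exact hv1'
      have hB1 := hB' ((d : ℤ) - j) (by omega) (by omega) v hvdec
      rw [show ((d : ℤ) - 2 * ((d : ℤ) - j)) = 2 * j - (d : ℤ) by ring] at hB1
      have : (b'⁻¹ • B') v = b'⁻¹ • B' v := rfl
      rw [this, hB1, smul_smul, ← mul_assoc, inv_mul_cancel₀ hb', one_mul]
  have hym0f : b' • ym 0 = B' := by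
    rw [hym0, smul_smul, mul_inv_cancel₀ hb', one_smul]
  exact ⟨hk0Ks, hk1Ksinv, by rw [hkinv0, hk1Ksinv], by rw [hkinv1, hk0Ks], hym0f, hym1f⟩
end
end
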